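/- arXiv:2512.05319 — 7 statements merged into one kernel-verified Lean document; each statement's English description precedes it below -/
import Mathlib

section
/- Let V be a finite nonempty set and F : 𝒫(V) → ℝ with F(∅) = 0. Then F is submodular if and only if its Lovász extension F^L : ℝ^V → ℝ is a convex function. -/
open scoped BigOperators

/-- The Lovász extension of a set function `F : 𝒫(V) → ℝ`:
`F^L(x) = ∫_{min_i x_i}^{max_i x_i} F({i : x_i > t}) dt + F(V) · min_i x_i`. -/
noncomputable def lovasz {V : Type*} [Fintype V] [Nonempty V] (F : Finset V → ℝ)
    (x : V → ℝ) : ℝ :=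
  (∫ t in (Finset.univ.inf' Finset.univ_nonempty x)..(Finset.univ.sup' Finset.univ_nonempty x),
      F (Finset.univ.filter fun i => x i > t)) +
    F Finset.univ * Finset.univ.inf' Finset.univ_nonempty x

/-!
For a bijection `r : V ≃ Fin n`, the greedy vector `g_r` (increments of `F` along the initial
segments of `r`) sums to `F` on every initial segment. If `x` decreases along `r`, every
superlevel set of `x` is such a segment, so the integrand defining `F^L(x)` agrees with that of
the modular function `S ↦ ∑_{i ∈ S} g_r i`, whose Lovász extension is the linear form
`⟨g_r, ·⟩`. For submodular `F` one has `∑_{i ∈ A} g_r i ≤ F A` for all `A`, and comparing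
integrands gives `⟨g_r, x⟩ ≤ F^L(x)` everywhere; so `F^L` is a pointwise maximum of linear
forms, hence convex. Conversely `F^L(1_S + 1_T) = F S + F T` for `T ⊆ S`, and convexity at the
midpoint `1_{A ∪ B} + 1_{A ∩ B}` of `2 · 1_A` and `2 · 1_B` is submodularity.
-/

open Finset MeasureTheory

section Modular

variable {V : Type*} [Fintype V]

noncomputable def superlevelSet (x : V → ℝ) (t : ℝ) : Finset V := univ.filter fun i => x i > t

@[simp]
lemma mem_superlevelSet {x : V → ℝ} {t : ℝ} {i : V} :
    i ∈ superlevelSet x t ↔ t < x i := by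
  simp [superlevelSet]

lemma sum_superlevelSet (c x : V → ℝ) (t : ℝ) :
    ∑ i ∈ superlevelSet x t, c i = ∑ i, (Set.Iio (x i)).indicator (fun _ => c i) t := by
  simp [superlevelSet, sum_filter, Set.indicator_apply]

lemma intervalIntegrable_indicator_Iio (s c a b : ℝ) :
    IntervalIntegrable ((Set.Iio s).indicator fun _ => c) volume a b :=
  intervalIntegrable_iff.2 <|
    (integrableOn_const measure_Ioc_lt_top.ne).indicator measurableSet_Iio

lemma integral_indicator_Iio {s a b : ℝ} (c : ℝ) (h : s ∈ Set.Icc a b) :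
    ∫ t in a..b, (Set.Iio s).indicator (fun _ => c) t = c * (s - a) := by
  rw [intervalIntegral.integral_congr_ae
      ((indicator_ae_eq_of_ae_eq_set Iio_ae_eq_Iic).mono fun _ h _ => h),
    ← Set.Iic_def, intervalIntegral.integral_indicator h, intervalIntegral.integral_const,
    smul_eq_mul, mul_comm]

lemma intervalIntegrable_sum_superlevelSet (c x : V → ℝ) (a b : ℝ) :
    IntervalIntegrable (fun t => ∑ i ∈ superlevelSet x t, c i) volume a b := by
  simp_rw [sum_superlevelSet, ← Finset.sum_apply]
  exact IntervalIntegrable.sum _ fun i _ => intervalIntegrable_indicator_Iio _ _ _ _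

lemma integral_sum_superlevelSet (c x : V → ℝ) {a b : ℝ} (ha : ∀ i, a ≤ x i)
    (hb : ∀ i, x i ≤ b) :
    ∫ t in a..b, ∑ i ∈ superlevelSet x t, c i = ∑ i, c i * (x i - a) := by
  simp_rw [sum_superlevelSet]
  rw [intervalIntegral.integral_finsetSum fun i _ => intervalIntegrable_indicator_Iio _ _ _ _]
  exact Finset.sum_congr rfl fun i _ => integral_indicator_Iio _ ⟨ha i, hb i⟩

variable [Nonempty V]

lemma lovasz_apply (F : Finset V → ℝ) (x : V → ℝ) :
    lovasz F x = (∫ t in univ.inf' univ_nonempty x..univ.sup' univ_nonempty x,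
      F (superlevelSet x t)) + F univ * univ.inf' univ_nonempty x := rfl

lemma lovasz_sum (c x : V → ℝ) : lovasz (fun S => ∑ i ∈ S, c i) x = ∑ i, c i * x i := by
  rw [lovasz_apply, integral_sum_superlevelSet c x (fun i => inf'_le x (mem_univ i))
    (fun i => le_sup' x (mem_univ i)), sum_mul, ← sum_add_distrib]
  simp_rw [mul_sub, sub_add_cancel]

end Modular

def IsSubmodular {V : Type*} [DecidableEq V] (F : Finset V → ℝ) : Prop :=
  ∀ A B : Finset V, F (A ∪ B) + F (A ∩ B) ≤ F A + F B

section Greedy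

variable {V : Type*} [Fintype V] {n : ℕ} (r : V ≃ Fin n)

def initialSegment (k : ℕ) : Finset V := univ.filter fun i => (r i : ℕ) < k

@[simp]
lemma mem_initialSegment {k : ℕ} {i : V} : i ∈ initialSegment r k ↔ (r i : ℕ) < k := by
  simp [initialSegment]

lemma initialSegment_zero : initialSegment r 0 = ∅ := by
  simp [initialSegment]

lemma initialSegment_of_le {k : ℕ} (hk : n ≤ k) : initialSegment r k = univ :=
  filter_true_of_mem fun i _ => (r i).isLt.trans_le hk

lemma symm_notMem_initialSegment {k : ℕ} (hk : k < n) :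
    r.symm ⟨k, hk⟩ ∉ initialSegment r k := by
  simp [initialSegment]

def greedy (F : Finset V → ℝ) (i : V) : ℝ :=
  F (initialSegment r (r i + 1)) - F (initialSegment r (r i))

lemma greedy_symm_apply (F : Finset V → ℝ) {k : ℕ} (hk : k < n) :
    greedy r F (r.symm ⟨k, hk⟩) = F (initialSegment r (k + 1)) - F (initialSegment r k) := by
  simp [greedy]

variable [DecidableEq V]

lemma initialSegment_succ {k : ℕ} (hk : k < n) :
    initialSegment r (k + 1) = insert (r.symm ⟨k, hk⟩) (initialSegment r k) := by
  ext i
  simp only [initialSegment, mem_filter, mem_univ, true_and, mem_insert, Nat.lt_succ_iff_lt_or_eq,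
    Equiv.eq_symm_apply, Fin.ext_iff]
  tauto

lemma card_initialSegment {k : ℕ} (hk : k ≤ n) : #(initialSegment r k) = k := by
  induction k with
  | zero => simp [initialSegment_zero]
  | succ k ih =>
    rw [initialSegment_succ r hk, card_insert_of_notMem (symm_notMem_initialSegment r hk),
      ih (by omega)]

lemma superlevelSet_eq_initialSegment {x : V → ℝ} (hx : Antitone (x ∘ r.symm)) (t : ℝ) :
    ∃ k ≤ n, superlevelSet x t = initialSegment r k := by
  have hx' : ∀ {i j}, r i ≤ r j → x j ≤ x i := fun h => by simpa using hx h
  refine ⟨#(superlevelSet x t), ?_, ?_⟩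
  · calc #(superlevelSet x t) ≤ #(initialSegment r n) := by
          rw [initialSegment_of_le r le_rfl]; exact card_le_univ _
      _ = n := card_initialSegment r le_rfl
  ext i
  rw [mem_initialSegment]
  constructor
  · intro hi
    have hle : initialSegment r (r i + 1) ⊆ superlevelSet x t := fun j hj => by
      rw [mem_initialSegment, Nat.lt_succ_iff, ← Fin.le_def] at hj
      exact mem_superlevelSet.2 ((mem_superlevelSet.1 hi).trans_le (hx' hj))
    simpa [card_initialSegment r (r i).isLt] using card_le_card hle
  · intro hi
    by_contra hni
    have hle : superlevelSet x t ⊆ initialSegment r (r i) := fun j hj => by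
      rw [mem_initialSegment, ← not_le, ← Fin.le_def]
      exact fun h => hni (mem_superlevelSet.2 ((mem_superlevelSet.1 hj).trans_le (hx' h)))
    have := card_le_card hle
    rw [card_initialSegment r (r i).isLt.le] at this
    omega

variable {F : Finset V → ℝ}

lemma sum_greedy_initialSegment (hF : F ∅ = 0) {k : ℕ} (hk : k ≤ n) :
    ∑ i ∈ initialSegment r k, greedy r F i = F (initialSegment r k) := by
  induction k with
  | zero => simp [initialSegment_zero, hF]
  | succ k ih =>
    rw [initialSegment_succ r hk, sum_insert (symm_notMem_initialSegment r hk), ih (by omega),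
      greedy_symm_apply, initialSegment_succ r hk]
    ring

lemma sum_greedy_univ (hF : F ∅ = 0) : ∑ i, greedy r F i = F univ := by
  simpa [initialSegment_of_le r le_rfl] using sum_greedy_initialSegment r hF le_rfl

lemma sum_greedy_superlevelSet (hF : F ∅ = 0) {x : V → ℝ} (hx : Antitone (x ∘ r.symm))
    (t : ℝ) :
    ∑ i ∈ superlevelSet x t, greedy r F i = F (superlevelSet x t) := by
  obtain ⟨k, hk, hxk⟩ := superlevelSet_eq_initialSegment r hx t
  rw [hxk, sum_greedy_initialSegment r hF hk]

lemma sum_greedy_le (hF : F ∅ = 0) (hsub : IsSubmodular F) (A : Finset V) :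
    ∑ i ∈ A, greedy r F i ≤ F A := by
  suffices h : ∀ k ≤ n,
      ∑ i ∈ A ∩ initialSegment r k, greedy r F i ≤ F (A ∩ initialSegment r k) by
    simpa [initialSegment_of_le r le_rfl] using h n le_rfl
  intro k hk
  induction k with
  | zero => simp [initialSegment_zero, hF]
  | succ k ih =>
    set v := r.symm ⟨k, hk⟩
    set C := initialSegment r k
    have hvC : v ∉ C := symm_notMem_initialSegment r hk
    rw [initialSegment_succ r hk]
    by_cases hvA : v ∈ A
    · rw [inter_insert_of_mem hvA, sum_insert fun h => hvC (mem_inter.1 h).2, greedy_symm_apply,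
        initialSegment_succ r hk]
      have hunion : insert v (A ∩ C) ∪ C = insert v C := by
        rw [insert_union, union_eq_right.2 inter_subset_right]
      have hinter : insert v (A ∩ C) ∩ C = A ∩ C := by
        rw [insert_inter_of_notMem hvC, inter_assoc, inter_self]
      have := hsub (insert v (A ∩ C)) C
      rw [hunion, hinter] at this
      linarith [ih (by omega)]
    · rw [inter_insert_of_notMem hvA]
      exact ih (by omega)

end Greedy

section Lovasz

variable {V : Type*} [Fintype V]

lemma exists_equiv_antitone (x : V → ℝ) :
    ∃ r : V ≃ Fin (Fintype.card V), Antitone (x ∘ r.symm) := by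
  let e := Fintype.equivFin V
  let f : Fin (Fintype.card V) → ℝᵒᵈ := fun j => OrderDual.toDual (x (e.symm j))
  exact ⟨e.trans (Tuple.sort f).symm, fun _ _ h => Tuple.monotone_sort f h⟩

variable [Nonempty V] [DecidableEq V] {F : Finset V → ℝ}

lemma lovasz_eq_sum_greedy (hF : F ∅ = 0) {n : ℕ} (r : V ≃ Fin n) {x : V → ℝ}
    (hx : Antitone (x ∘ r.symm)) : lovasz F x = ∑ i, greedy r F i * x i := by
  rw [← lovasz_sum, lovasz_apply, lovasz_apply, sum_greedy_univ r hF]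
  simp_rw [sum_greedy_superlevelSet r hF hx]

lemma sum_mul_le_lovasz (hF : F ∅ = 0) {c : V → ℝ} (hc : ∀ A, ∑ i ∈ A, c i ≤ F A)
    (hcV : ∑ i, c i = F univ) (x : V → ℝ) : ∑ i, c i * x i ≤ lovasz F x := by
  obtain ⟨r, hr⟩ := exists_equiv_antitone x
  rw [lovasz_eq_sum_greedy hF r hr, ← lovasz_sum, ← lovasz_sum, lovasz_apply, lovasz_apply, hcV,
    sum_greedy_univ r hF]
  obtain ⟨i⟩ := ‹Nonempty V›
  gcongr
  refine intervalIntegral.integral_mono_on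
    ((inf'_le x (mem_univ i)).trans (le_sup' x (mem_univ i)))
    (intervalIntegrable_sum_superlevelSet ..) (intervalIntegrable_sum_superlevelSet ..)
    fun t _ => ?_
  rw [sum_greedy_superlevelSet r hF hr]
  exact hc _

lemma convexOn_lovasz (hF : F ∅ = 0) (hsub : IsSubmodular F) :
    ConvexOn ℝ Set.univ (lovasz F) := by
  refine ⟨convex_univ, fun x _ y _ a b _ _ _ => ?_⟩
  obtain ⟨r, hr⟩ := exists_equiv_antitone (a • x + b • y)
  have hle := sum_mul_le_lovasz hF (sum_greedy_le r hF hsub) (sum_greedy_univ r hF)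
  calc lovasz F (a • x + b • y)
      = a * ∑ i, greedy r F i * x i + b * ∑ i, greedy r F i * y i := by
        simp only [lovasz_eq_sum_greedy hF r hr, mul_sum, ← sum_add_distrib, Pi.add_apply,
          Pi.smul_apply, smul_eq_mul]
        exact sum_congr rfl fun i _ => by ring
    _ ≤ a • lovasz F x + b • lovasz F y := by
        simp only [smul_eq_mul]
        gcongr
        · exact hle x
        · exact hle y

lemma lovasz_indicator_add_indicator (hF : F ∅ = 0) {S T : Finset V} (hTS : T ⊆ S) :
    lovasz F ((S : Set V).indicator 1 + (T : Set V).indicator 1) = F S + F T := by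
  set x : V → ℝ := (S : Set V).indicator 1 + (T : Set V).indicator 1
  obtain ⟨r, hr⟩ := exists_equiv_antitone x
  have hS := sum_greedy_superlevelSet (F := F) r hF hr (1 / 2)
  have hT := sum_greedy_superlevelSet (F := F) r hF hr (3 / 2)
  have hlevel : superlevelSet x (1 / 2) = S ∧ superlevelSet x (3 / 2) = T := by
    constructor <;> ext i <;> by_cases hi : i ∈ T <;> by_cases hi' : i ∈ S <;>
      norm_num [x, hi, hi'] <;> exact hi' (hTS hi)
  rw [hlevel.1] at hS
  rw [hlevel.2] at hT
  rw [lovasz_eq_sum_greedy hF r hr, ← hS, ← hT]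
  simp [x, Set.indicator_apply, mul_add, sum_add_distrib]

lemma isSubmodular_of_convexOn (hF : F ∅ = 0) (hconv : ConvexOn ℝ Set.univ (lovasz F)) :
    IsSubmodular F := by
  intro A B
  let u (S : Finset V) : V → ℝ := (S : Set V).indicator 1 + (S : Set V).indicator 1
  have hmid : (1 / 2 : ℝ) • u A + (1 / 2 : ℝ) • u B
      = (↑(A ∪ B) : Set V).indicator 1 + (↑(A ∩ B) : Set V).indicator 1 := by
    ext i
    by_cases hA : i ∈ A <;> by_cases hB : i ∈ B <;> norm_num [u, hA, hB]
  have := hconv.2 (Set.mem_univ (u A)) (Set.mem_univ (u B)) (by norm_num : (0 : ℝ) ≤ 1 / 2)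
    (by norm_num : (0 : ℝ) ≤ 1 / 2) (by norm_num)
  rw [hmid, lovasz_indicator_add_indicator hF inter_subset_union,
    lovasz_indicator_add_indicator hF subset_rfl, lovasz_indicator_add_indicator hF subset_rfl,
    smul_eq_mul, smul_eq_mul] at this
  linarith

end Lovasz

/-- Lovász' theorem: `F` with `F ∅ = 0` is submodular iff its Lovász extension is convex. -/
theorem stmt0 {V : Type*} [Fintype V] [Nonempty V] [DecidableEq V]
    (F : Finset V → ℝ) (hF : F ∅ = 0) :
    (∀ A B : Finset V, F (A ∪ B) + F (A ∩ B) ≤ F A + F B) ↔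
      ConvexOn ℝ Set.univ (lovasz F) :=
  ⟨convexOn_lovasz hF, isSubmodular_of_convexOn hF⟩
end

section
/- Let V be a finite nonempty set and F : 𝒫(V) → ℝ submodular with F(∅) = 0. Then min_{A ⊆ V} F(A) = min_{x ∈ [0,1]^V} F^L(x), where F^L is the Lovász extension of F. -/
open scoped BigOperators

/-- The Lovász extension evaluated at the indicator vector of `A` equals `F A`. -/
lemma lovasz_indicator {V : Type*} [Fintype V] [Nonempty V] [DecidableEq V]
    (F : Finset V → ℝ) (hF : F ∅ = 0) (A : Finset V) :
    lovasz F (fun i => if i ∈ A then (1:ℝ) else 0) = F A := by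
  classical
  by_cases hA : A = ∅
  · subst hA
    simp [lovasz, hF]
  by_cases hAu : A = Finset.univ
  · subst hAu
    simp [lovasz]
  have hAne : A.Nonempty := Finset.nonempty_iff_ne_empty.2 hA
  obtain ⟨a, ha⟩ := hAne
  obtain ⟨b, hb⟩ : ∃ b, b ∉ A := by
    by_contra h
    push_neg at h
    exact hAu (Finset.eq_univ_iff_forall.2 h)
  set x : V → ℝ := fun i => if i ∈ A then (1:ℝ) else 0 with hxdef
  have hinf : Finset.univ.inf' Finset.univ_nonempty x = 0 := by
    apply le_antisymm
    · calc Finset.univ.inf' Finset.univ_nonempty x ≤ x b :=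
            Finset.inf'_le _ (Finset.mem_univ b)
        _ = 0 := by simp [hxdef, hb]
    · apply Finset.le_inf'
      intro i _
      simp only [hxdef]
      split <;> norm_num
  have hsup : Finset.univ.sup' Finset.univ_nonempty x = 1 := by
    apply le_antisymm
    · apply Finset.sup'_le
      intro i _
      simp only [hxdef]
      split <;> norm_num
    · calc (1:ℝ) = x a := by simp [hxdef, ha]
        _ ≤ Finset.univ.sup' Finset.univ_nonempty x := Finset.le_sup' _ (Finset.mem_univ a)
  unfold lovasz
  rw [hinf, hsup, mul_zero, add_zero]
  have hcongr : ∫ t in (0:ℝ)..1, F (Finset.univ.filter fun i => x i > t)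
      = ∫ t in (0:ℝ)..1, F A := by
    apply intervalIntegral.integral_congr_ae
    have h1 : ∀ᵐ t : ℝ, t ≠ (1:ℝ) := by
      rw [MeasureTheory.ae_iff]
      simp
    filter_upwards [h1] with t ht htI
    rw [Set.uIoc_of_le (by norm_num : (0:ℝ) ≤ 1)] at htI
    have ht0 : 0 < t := htI.1
    have ht1 : t < 1 := lt_of_le_of_ne htI.2 ht
    congr 1
    ext i
    simp only [Finset.mem_filter, Finset.mem_univ, true_and, hxdef]
    constructor
    · intro h
      by_contra hi
      simp [hi] at h
      linarith
    · intro hi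
      simp [hi]
      exact ht1
  rw [hcongr]
  simp

/-- Any lower bound `c ≤ 0` of `F` is a lower bound of the Lovász extension on the cube. -/
lemma lovasz_lower {V : Type*} [Fintype V] [Nonempty V] [DecidableEq V]
    (F : Finset V → ℝ) (c : ℝ) (hc0 : c ≤ 0) (hcle : ∀ A : Finset V, c ≤ F A)
    (x : V → ℝ) (hx : x ∈ Set.Icc (0 : V → ℝ) 1) : c ≤ lovasz F x := by
  obtain ⟨hx0, hx1⟩ := hx
  unfold lovasz
  set m := Finset.univ.inf' Finset.univ_nonempty x with hm
  set M := Finset.univ.sup' Finset.univ_nonempty x with hM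
  have hm0 : 0 ≤ m := Finset.le_inf' _ _ fun i _ => hx0 i
  have hM1 : M ≤ 1 := Finset.sup'_le _ _ fun i _ => hx1 i
  have hmM : m ≤ M := by
    obtain ⟨i⟩ := ‹Nonempty V›
    calc m ≤ x i := Finset.inf'_le _ (Finset.mem_univ i)
      _ ≤ M := Finset.le_sup' _ (Finset.mem_univ i)
  have hFu : c ≤ F Finset.univ := hcle _
  have hcm : c * m ≤ F Finset.univ * m := mul_le_mul_of_nonneg_right hFu hm0
  by_cases hint : IntervalIntegrable (fun t => F (Finset.univ.filter fun i => x i > t))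
      MeasureTheory.volume m M
  · have h1 : c * (M - m) ≤ ∫ t in m..M, F (Finset.univ.filter fun i => x i > t) := by
      have := intervalIntegral.integral_mono_on hmM intervalIntegrable_const hint
        (fun t _ => hcle _)
      simpa [intervalIntegral.integral_const, smul_eq_mul, mul_comm] using this
    nlinarith
  · rw [intervalIntegral.integral_undef hint]
    nlinarith

/-- Lovász' theorem: for a submodular `F` with `F ∅ = 0`, the minimum of `F` over all subsets
of `V` equals the minimum of its Lovász extension over the cube `[0,1]^V`. -/
theorem stmt1 {V : Type*} [Fintype V] [Nonempty V] [DecidableEq V]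
    (F : Finset V → ℝ) (hF : F ∅ = 0)
    (hsub : ∀ A B : Finset V, F (A ∪ B) + F (A ∩ B) ≤ F A + F B) :
    sInf (Set.range fun A : Finset V => F A) =
      sInf (lovasz F '' Set.Icc (0 : V → ℝ) 1) := by
  classical
  set S : Set ℝ := Set.range fun A : Finset V => F A with hS
  have hSfin : S.Finite := Set.finite_range _
  have hSne : S.Nonempty := Set.range_nonempty _
  have hbdd : BddBelow S := hSfin.bddBelow
  set c : ℝ := sInf S with hc
  have hcle : ∀ A : Finset V, c ≤ F A := fun A => csInf_le hbdd ⟨A, rfl⟩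
  have hc0 : c ≤ 0 := hF ▸ hcle ∅
  have hlb : ∀ y ∈ lovasz F '' Set.Icc (0 : V → ℝ) 1, c ≤ y := by
    rintro y ⟨x, hx, rfl⟩
    exact lovasz_lower F c hc0 hcle x hx
  have himne : (lovasz F '' Set.Icc (0 : V → ℝ) 1).Nonempty := by
    refine ⟨lovasz F 0, 0, ?_, rfl⟩
    exact ⟨le_refl _, fun i => zero_le_one⟩
  apply le_antisymm
  · exact le_csInf himne hlb
  · obtain ⟨A₀, hA₀⟩ : c ∈ S := hSne.csInf_mem hSfin
    have hmem : (fun i => if i ∈ A₀ then (1:ℝ) else 0) ∈ Set.Icc (0 : V → ℝ) 1 := by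
      constructor <;> intro i <;> simp only [Pi.zero_apply, Pi.one_apply] <;> split <;> norm_num
    refine csInf_le ⟨c, hlb⟩ ⟨_, hmem, ?_⟩
    rw [lovasz_indicator F hF A₀]; exact hA₀
end

section
/- Let Γ = (V,E) be a finite simple graph with maximal vertex degree D > 0 and let k ∈ {1,…,|V|}. Then the function p ↦ p · ((2/D) · λ_k(p))^{1/p} is monotonically increasing on [1, +∞), where λ_k(p) is the k-th minimax eigenvalue of the up 0-Laplacian L^{up}_{0,p} of Γ. -/
open scoped BigOperators

/-- The `p`-Rayleigh quotient of the up `0`-Laplacian of a graph: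
`(Σ_{e∈E} |(δ₀f)(e)|^p) / (Σ_{v∈V} |f(v)|^p)`. -/
noncomputable def rayleighP {V : Type*} [Fintype V] [DecidableEq V] (G : SimpleGraph V)
    [DecidableRel G.Adj] (p : ℝ) (f : V → ℝ) : ℝ :=
  (∑ e ∈ G.edgeFinset,
      Sym2.lift ⟨fun u v => |f u - f v| ^ p, fun u v => by simp only []; rw [abs_sub_comm]⟩ e) /
    ∑ v, |f v| ^ p

/-- The Krasnoselskii genus of a set `S ⊆ ℝ^V`: the least `k ≥ 1` such that there is an odd
continuous map `S → ℝ^k ∖ {0}`. -/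
noncomputable def genus {V : Type*} [Fintype V] (S : Set (V → ℝ)) : ℕ :=
  sInf {k : ℕ | 0 < k ∧ ∃ φ : (V → ℝ) → Fin k → ℝ,
    ContinuousOn φ S ∧ (∀ x ∈ S, φ (-x) = -φ x) ∧ ∀ x ∈ S, φ x ≠ 0}

/-- The `k`-th minimax eigenvalue `λ_k(p)` of the up `0`-Laplacian `L^{up}_{0,p}`:
the infimum over all symmetric compact subsets `S ⊆ ℝ^V ∖ {0}` of Krasnoselskii genus `≥ k`
of the supremum of the `p`-Rayleigh quotient over `S`. -/
noncomputable def minimaxEig {V : Type*} [Fintype V] [DecidableEq V] (G : SimpleGraph V)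
    [DecidableRel G.Adj] (k : ℕ) (p : ℝ) : ℝ :=
  sInf { r : ℝ | ∃ S : Set (V → ℝ), IsCompact S ∧ (∀ x ∈ S, x ≠ 0) ∧ (∀ x ∈ S, -x ∈ S) ∧
    k ≤ genus S ∧ r = sSup (rayleighP G p '' S) }

/-!
For `1 ≤ p < q` put `σ = q / p` and `ψ t = sign t · |t|^σ`. The map `f ↦ ψ ∘ f` is odd, continuous
and vanishes only at `0`, so it does not lower the genus, and it turns `∑ |f v|^q` into
`∑ |ψ (f v)|^p`. On each edge,
`|ψ a - ψ b| ≤ σ |a - b| ((|a|^σ + |b|^σ) / 2)^(1 - 1/σ)`; combined with the power-mean inequality,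
Hölder's inequality over the edges with exponents `q/p` and `q/(q-p)`, and
`∑_{uv ∈ E} (|f u|^q + |f v|^q) / 2 ≤ (D/2) ∑_v |f v|^q`, this gives
`R_p(ψ ∘ f) ≤ σ^p (D/2)^(1 - p/q) R_q(f)^(p/q)`. Taking minimax values,
`λ_k(p) ≤ (q/p)^p (D/2)^(1 - p/q) λ_k(q)^(p/q)`, and the `p`-th root of this inequality is
`p ((2/D) λ_k(p))^(1/p) ≤ q ((2/D) λ_k(q))^(1/q)`.
-/

open Real Finset Set

namespace Real

lemma two_mul_rpow_le_rpow_add_add_rpow_sub {β c x : ℝ} (hβ : β ≤ 0) (hx : 0 ≤ x) (hxc : x < c) :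
    2 * c ^ β ≤ (c + x) ^ β + (c - x) ^ β := by
  have hc : 0 < c := by linarith
  have hplus : 0 < c + x := by linarith
  have hminus : 0 < c - x := by linarith
  have hprod : (c + x) * (c - x) ≤ c ^ (2 : ℝ) := by rw [rpow_two]; nlinarith
  have hgeom : c ^ β ≤ ((c + x) ^ β) ^ (1 / 2 : ℝ) * ((c - x) ^ β) ^ (1 / 2 : ℝ) := by
    have hsq : c ^ β = (c ^ (2 : ℝ)) ^ (β * (1 / 2)) := by
      rw [← rpow_mul hc.le]; ring_nf
    rw [← rpow_mul hplus.le, ← rpow_mul hminus.le, ← mul_rpow hplus.le hminus.le, hsq]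
    exact rpow_le_rpow_of_nonpos (mul_pos hplus hminus) hprod (by linarith)
  have hamgm := geom_mean_le_arith_mean2_weighted (by norm_num : (0 : ℝ) ≤ 1 / 2)
    (by norm_num : (0 : ℝ) ≤ 1 / 2) (rpow_nonneg hplus.le β) (rpow_nonneg hminus.le β)
    (by norm_num)
  linarith

/- The chord of the concave `t ↦ t ^ τ` over `[v, u]` is steeper than its tangent at the midpoint
`c`: `g s = (c + s)^τ - (c - s)^τ - 2τ c^(τ-1) s` is monotone because `t ↦ t^(τ-1)` is
midpoint convex. -/
lemma mul_rpow_midpoint_mul_sub_le_rpow_sub_rpow {τ u v : ℝ} (hτ0 : 0 < τ) (hτ1 : τ ≤ 1)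
    (hv : 0 ≤ v) (hvu : v ≤ u) :
    τ * ((u + v) / 2) ^ (τ - 1) * (u - v) ≤ u ^ τ - v ^ τ := by
  obtain rfl | hvu := hvu.eq_or_lt
  · simp
  obtain ⟨c, hc⟩ : ∃ c, c = (u + v) / 2 := ⟨_, rfl⟩
  obtain ⟨s₀, hs₀⟩ : ∃ s₀, s₀ = (u - v) / 2 := ⟨_, rfl⟩
  have hs₀0 : 0 < s₀ := by linarith
  set g : ℝ → ℝ := fun s => (c + s) ^ τ - (c - s) ^ τ - 2 * τ * c ^ (τ - 1) * s
  have hg : ∀ s ∈ Ioo 0 s₀,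
      HasDerivAt g (τ * (c + s) ^ (τ - 1) + τ * (c - s) ^ (τ - 1) - 2 * τ * c ^ (τ - 1)) s := by
    rintro s ⟨hs0, hs1⟩
    have hplus : HasDerivAt (fun s => (c + s) ^ τ) (τ * (c + s) ^ (τ - 1)) s := by
      simpa using ((hasDerivAt_id' s).const_add c).rpow_const (p := τ) (Or.inl (by linarith))
    have hminus : HasDerivAt (fun s => (c - s) ^ τ) (-(τ * (c - s) ^ (τ - 1))) s := by
      simpa using ((hasDerivAt_id' s).const_sub c).rpow_const (p := τ) (Or.inl (by linarith))
    exact ((hplus.sub hminus).sub ((hasDerivAt_id' s).const_mul (2 * τ * c ^ (τ - 1)))).congr_deriv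
      (by ring)
  have hmono : MonotoneOn g (Icc 0 s₀) := by
    refine monotoneOn_of_deriv_nonneg (convex_Icc 0 s₀) ?_ ?_ ?_
    · have := continuous_rpow_const hτ0.le
      exact (((this.comp (continuous_const.add continuous_id)).sub
        (this.comp (continuous_const.sub continuous_id))).sub (continuous_const_mul _)).continuousOn
    · rw [interior_Icc]
      exact fun s hs => (hg s hs).differentiableAt.differentiableWithinAt
    · rw [interior_Icc]
      intro s hs
      rw [(hg s hs).deriv]
      have hconv := two_mul_rpow_le_rpow_add_add_rpow_sub (c := c) (by linarith : τ - 1 ≤ 0)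
        hs.1.le (by linarith [hs.2])
      have := mul_le_mul_of_nonneg_left hconv hτ0.le
      linarith
  have hg0 : g 0 = 0 := by simp [g]
  have hgs₀ : g s₀ = u ^ τ - v ^ τ - τ * c ^ (τ - 1) * (u - v) := by
    simp only [g]
    rw [show c + s₀ = u by linarith, show c - s₀ = v by linarith, hs₀]
    ring
  have := hmono (left_mem_Icc.2 hs₀0.le) (right_mem_Icc.2 hs₀0.le) hs₀0.le
  rw [hg0, hgs₀] at this
  rw [← hc]
  linarith

lemma rpow_sub_rpow_le_mul_mean {σ a b : ℝ} (hσ : 1 ≤ σ) (hb : 0 ≤ b) (hba : b ≤ a) :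
    a ^ σ - b ^ σ ≤ σ * (a - b) * ((a ^ σ + b ^ σ) / 2) ^ (1 - σ⁻¹) := by
  obtain rfl | hba := hba.eq_or_lt
  · simp
  have hσ0 : 0 < σ := by linarith
  set m := (a ^ σ + b ^ σ) / 2
  have hm : 0 < m := by
    have := rpow_pos_of_pos (hb.trans_lt hba) σ
    have := rpow_nonneg hb σ
    positivity
  have key := mul_rpow_midpoint_mul_sub_le_rpow_sub_rpow (inv_pos.2 hσ0)
    (inv_le_one_of_one_le₀ hσ) (rpow_nonneg hb σ) (rpow_le_rpow hb hba.le hσ0.le)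
  rw [rpow_rpow_inv (hb.trans hba.le) hσ0.ne', rpow_rpow_inv hb hσ0.ne'] at key
  have hcancel : σ * m ^ (1 - σ⁻¹) * (σ⁻¹ * m ^ (σ⁻¹ - 1)) = 1 := by
    rw [mul_mul_mul_comm, mul_inv_cancel₀ hσ0.ne', ← rpow_add hm]
    simp
  calc a ^ σ - b ^ σ = σ * m ^ (1 - σ⁻¹) * (σ⁻¹ * m ^ (σ⁻¹ - 1) * (a ^ σ - b ^ σ)) := by
        rw [← mul_assoc, hcancel, one_mul]
    _ ≤ σ * m ^ (1 - σ⁻¹) * (a - b) := mul_le_mul_of_nonneg_left key (by positivity)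
    _ = σ * (a - b) * m ^ (1 - σ⁻¹) := by ring

lemma sum_rpow_mul_rpow_le {ι : Type*} (s : Finset ι) {θ : ℝ} (hθ0 : 0 < θ) (hθ1 : θ < 1)
    {a b : ι → ℝ} (ha : ∀ i ∈ s, 0 ≤ a i) (hb : ∀ i ∈ s, 0 ≤ b i) :
    ∑ i ∈ s, a i ^ θ * b i ^ (1 - θ) ≤ (∑ i ∈ s, a i) ^ θ * (∑ i ∈ s, b i) ^ (1 - θ) := by
  have := inner_le_Lp_mul_Lq_of_nonneg s
    (holderConjugate_one_div hθ0 (sub_pos.2 hθ1) (add_sub_cancel θ 1))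
    (fun i hi => rpow_nonneg (ha i hi) θ) (fun i hi => rpow_nonneg (hb i hi) (1 - θ))
  have hroot : ∀ {x η : ℝ}, 0 ≤ x → 0 < η → (x ^ η) ^ (1 / η) = x := fun hx hη => by
    rw [one_div, rpow_rpow_inv hx hη.ne']
  rwa [sum_congr rfl fun i hi => hroot (ha i hi) hθ0,
    sum_congr rfl fun i hi => hroot (hb i hi) (sub_pos.2 hθ1), one_div_one_div,
    one_div_one_div] at this

end Real

/-- `signedRpow σ t = sign t * |t| ^ σ`. -/
noncomputable def signedRpow (σ t : ℝ) : ℝ := t * |t| ^ (σ - 1)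

lemma signedRpow_neg (σ t : ℝ) : signedRpow σ (-t) = -signedRpow σ t := by
  simp [signedRpow]

lemma abs_signedRpow {σ : ℝ} (hσ : σ ≠ 0) (t : ℝ) : |signedRpow σ t| = |t| ^ σ := by
  rw [signedRpow, abs_mul, abs_of_nonneg (rpow_nonneg (abs_nonneg t) _),
    ← rpow_one_add' (abs_nonneg t) (by simpa using hσ)]
  ring_nf

lemma signedRpow_of_nonneg {σ t : ℝ} (hσ : σ ≠ 0) (ht : 0 ≤ t) : signedRpow σ t = t ^ σ := by
  rw [signedRpow, abs_of_nonneg ht, ← rpow_one_add' ht (by simpa using hσ)]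
  ring_nf

lemma signedRpow_eq_zero_iff {σ t : ℝ} (hσ : σ ≠ 0) : signedRpow σ t = 0 ↔ t = 0 := by
  rw [← abs_eq_zero, abs_signedRpow hσ, rpow_eq_zero (abs_nonneg t) hσ, abs_eq_zero]

lemma continuous_signedRpow {σ : ℝ} (hσ : 1 ≤ σ) : Continuous (signedRpow σ) :=
  continuous_id.mul ((continuous_rpow_const (sub_nonneg.2 hσ)).comp continuous_abs)

lemma abs_signedRpow_sub_le_of_nonneg {σ a b : ℝ} (hσ : 1 ≤ σ) (ha : 0 ≤ a) (hb : 0 ≤ b) :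
    |signedRpow σ a - signedRpow σ b| ≤ σ * |a - b| * ((|a| ^ σ + |b| ^ σ) / 2) ^ (1 - σ⁻¹) := by
  have hσ0 : σ ≠ 0 := by positivity
  rw [signedRpow_of_nonneg hσ0 ha, signedRpow_of_nonneg hσ0 hb, abs_of_nonneg ha,
    abs_of_nonneg hb]
  rcases le_total b a with hba | hab
  · rw [abs_of_nonneg (sub_nonneg.2 hba),
      abs_of_nonneg (sub_nonneg.2 (rpow_le_rpow hb hba (by positivity)))]
    exact rpow_sub_rpow_le_mul_mean hσ hb hba
  · rw [abs_sub_comm a, abs_of_nonneg (sub_nonneg.2 hab), abs_sub_comm (a ^ σ),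
      abs_of_nonneg (sub_nonneg.2 (rpow_le_rpow ha hab (by positivity))), add_comm (a ^ σ)]
    exact rpow_sub_rpow_le_mul_mean hσ ha hab

lemma abs_signedRpow_sub_le_of_nonneg_of_nonpos {σ a b : ℝ} (hσ : 1 ≤ σ) (ha : 0 ≤ a)
    (hb : b ≤ 0) :
    |signedRpow σ a - signedRpow σ b| ≤ σ * |a - b| * ((|a| ^ σ + |b| ^ σ) / 2) ^ (1 - σ⁻¹) := by
  have hσ0 : 0 < σ := by linarith
  set U := |a| ^ σ + |b| ^ σ with hU
  have hU0 : 0 ≤ U := by positivity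
  have hψ : |signedRpow σ a - signedRpow σ b| = U := by
    have := signedRpow_neg σ (-b)
    rw [neg_neg, signedRpow_of_nonneg hσ0.ne' (neg_nonneg.2 hb)] at this
    rw [this, signedRpow_of_nonneg hσ0.ne' ha, sub_neg_eq_add,
      abs_of_nonneg (add_nonneg (rpow_nonneg ha _) (rpow_nonneg (neg_nonneg.2 hb) _)), hU,
      abs_of_nonneg ha, abs_of_nonpos hb]
  have hdist : |a - b| = |a| + |b| := by
    rw [abs_of_nonneg ha, abs_of_nonpos hb, abs_of_nonneg (by linarith)]; ring
  have hroot : U ^ σ⁻¹ ≤ |a - b| := by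
    have := rpow_add_le_add_rpow (rpow_nonneg (abs_nonneg a) σ) (rpow_nonneg (abs_nonneg b) σ)
      (inv_nonneg.2 hσ0.le) (inv_le_one_of_one_le₀ hσ)
    rwa [rpow_rpow_inv (abs_nonneg a) hσ0.ne', rpow_rpow_inv (abs_nonneg b) hσ0.ne',
      ← hdist] at this
  have hU := rpow_sub_rpow_le_mul_mean hσ le_rfl (rpow_nonneg hU0 σ⁻¹)
  rw [rpow_inv_rpow hU0 hσ0.ne', zero_rpow hσ0.ne', sub_zero, sub_zero, add_zero] at hU
  rw [hψ]
  calc U ≤ σ * U ^ σ⁻¹ * (U / 2) ^ (1 - σ⁻¹) := hU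
    _ ≤ σ * |a - b| * (U / 2) ^ (1 - σ⁻¹) := by gcongr

lemma abs_signedRpow_sub_le {σ : ℝ} (hσ : 1 ≤ σ) (a b : ℝ) :
    |signedRpow σ a - signedRpow σ b| ≤ σ * |a - b| * ((|a| ^ σ + |b| ^ σ) / 2) ^ (1 - σ⁻¹) := by
  rcases le_total 0 a with ha | ha <;> rcases le_total 0 b with hb | hb
  · exact abs_signedRpow_sub_le_of_nonneg hσ ha hb
  · exact abs_signedRpow_sub_le_of_nonneg_of_nonpos hσ ha hb
  · rw [abs_sub_comm, abs_sub_comm a, add_comm (|a| ^ σ)]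
    exact abs_signedRpow_sub_le_of_nonneg_of_nonpos hσ hb ha
  · have := abs_signedRpow_sub_le_of_nonneg hσ (neg_nonneg.2 ha) (neg_nonneg.2 hb)
    rwa [signedRpow_neg, signedRpow_neg, neg_sub_neg, abs_neg, abs_neg, neg_sub_neg,
      abs_sub_comm, abs_sub_comm b] at this

lemma abs_signedRpow_sub_rpow_le {p q : ℝ} (hp : 1 ≤ p) (hpq : p ≤ q) (a b : ℝ) :
    |signedRpow (q / p) a - signedRpow (q / p) b| ^ p ≤
      (q / p) ^ p * (|a - b| ^ q) ^ (p / q) * ((|a| ^ q + |b| ^ q) / 2) ^ (1 - p / q) := by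
  have hp0 : 0 < p := by linarith
  have hq0 : 0 < q := by linarith
  have hσ : 1 ≤ q / p := (one_le_div hp0).2 hpq
  have hpow : ∀ x : ℝ, (|x| ^ (q / p)) ^ p = |x| ^ q := fun x => by
    rw [← rpow_mul (abs_nonneg x), div_mul_cancel₀ q hp0.ne']
  have hM : ((|a| ^ (q / p) + |b| ^ (q / p)) / 2) ^ p ≤ (|a| ^ q + |b| ^ q) / 2 := by
    have := (convexOn_rpow hp).2 (mem_Ici.2 (rpow_nonneg (abs_nonneg a) (q / p)))
      (mem_Ici.2 (rpow_nonneg (abs_nonneg b) (q / p))) (by norm_num : (0 : ℝ) ≤ 1 / 2)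
      (by norm_num : (0 : ℝ) ≤ 1 / 2) (by norm_num)
    have hhalf : ∀ x y : ℝ, (x + y) / 2 = 1 / 2 * x + 1 / 2 * y := fun x y => by ring
    simpa only [smul_eq_mul, hpow, hhalf] using this
  set M := (|a| ^ (q / p) + |b| ^ (q / p)) / 2
  have hM0 : 0 ≤ M := by positivity
  have hexp : 0 ≤ 1 - p / q := sub_nonneg.2 ((div_le_one hq0).2 hpq)
  calc |signedRpow (q / p) a - signedRpow (q / p) b| ^ p
      ≤ (q / p * |a - b| * M ^ (1 - (q / p)⁻¹)) ^ p :=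
        rpow_le_rpow (abs_nonneg _) (abs_signedRpow_sub_le hσ a b) hp0.le
    _ = (q / p) ^ p * (|a - b| ^ q) ^ (p / q) * (M ^ p) ^ (1 - p / q) := by
        rw [mul_rpow (by positivity) (by positivity), mul_rpow (by positivity) (abs_nonneg _),
          ← rpow_mul (abs_nonneg _), ← rpow_mul hM0, ← rpow_mul hM0,
          mul_div_cancel₀ p hq0.ne']
        field_simp
    _ ≤ (q / p) ^ p * (|a - b| ^ q) ^ (p / q) * ((|a| ^ q + |b| ^ q) / 2) ^ (1 - p / q) := by
        gcongr

namespace SimpleGraph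

variable {V : Type*} [Fintype V] [DecidableEq V] (G : SimpleGraph V) [DecidableRel G.Adj]

lemma sum_edgeFinset_lift_add (h : V → ℝ) :
    ∑ e ∈ G.edgeFinset, Sym2.lift ⟨fun u v => h u + h v, fun _ _ => add_comm _ _⟩ e =
      ∑ v, (G.degree v : ℝ) * h v := by
  have hedge : ∀ e ∈ G.edgeFinset,
      Sym2.lift ⟨fun u v => h u + h v, fun _ _ => add_comm _ _⟩ e =
        ∑ v, if v ∈ e then h v else 0 := by
    intro e he
    induction e using Sym2.ind with
    | h u w =>
      have huw : ({v | v ∈ s(u, w)} : Finset V) = {u, w} := by ext; simp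
      rw [Sym2.lift_mk, ← sum_filter, huw, sum_pair (G.ne_of_adj (by simpa using he))]
  rw [sum_congr rfl hedge, sum_comm]
  refine sum_congr rfl fun v _ => ?_
  rw [← sum_filter, ← incidenceFinset_eq_filter, sum_const, card_incidenceFinset_eq_degree,
    nsmul_eq_mul]

end SimpleGraph

section Rayleigh

variable {V : Type*} [Fintype V] (G : SimpleGraph V) [DecidableRel G.Adj]

noncomputable def edgeEnergy (p : ℝ) (f : V → ℝ) : ℝ :=
  ∑ e ∈ G.edgeFinset,
    Sym2.lift ⟨fun u v => |f u - f v| ^ p, fun _ _ => congrArg (· ^ p) (abs_sub_comm _ _)⟩ e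

lemma edgeEnergy_nonneg (p : ℝ) (f : V → ℝ) : 0 ≤ edgeEnergy G p f := by
  refine sum_nonneg fun e _ => ?_
  induction e using Sym2.ind with
  | h u w => exact rpow_nonneg (abs_nonneg _) p

variable [DecidableEq V]

lemma rayleighP_eq_edgeEnergy_div (p : ℝ) (f : V → ℝ) :
    rayleighP G p f = edgeEnergy G p f / ∑ v, |f v| ^ p :=
  rfl

lemma rayleighP_nonneg (p : ℝ) (f : V → ℝ) : 0 ≤ rayleighP G p f :=
  div_nonneg (edgeEnergy_nonneg G p f) (sum_nonneg fun v _ => by positivity)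

lemma edgeEnergy_signedRpow_le {p q D : ℝ} (hp : 1 ≤ p) (hpq : p < q)
    (hD : ∀ v, (G.degree v : ℝ) ≤ D) (f : V → ℝ) :
    edgeEnergy G p (signedRpow (q / p) ∘ f) ≤
      (q / p) ^ p * edgeEnergy G q f ^ (p / q) * (D / 2 * ∑ v, |f v| ^ q) ^ (1 - p / q) := by
  have hq0 : 0 < q := by linarith
  set d : Sym2 V → ℝ :=
    Sym2.lift ⟨fun u v => |f u - f v| ^ q, fun _ _ => congrArg (· ^ q) (abs_sub_comm _ _)⟩
  set m : Sym2 V → ℝ :=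
    Sym2.lift ⟨fun u v => (|f u| ^ q + |f v| ^ q) / 2, fun _ _ => congrArg (· / 2) (add_comm _ _)⟩
  have hd0 : ∀ e ∈ G.edgeFinset, 0 ≤ d e := fun e _ => by
    induction e using Sym2.ind with
    | h u w => exact rpow_nonneg (abs_nonneg _) q
  have hm0 : ∀ e ∈ G.edgeFinset, 0 ≤ m e := fun e _ => by
    induction e using Sym2.ind with
    | h u w => simp only [m, Sym2.lift_mk]; positivity
  have hm : ∑ e ∈ G.edgeFinset, m e ≤ D / 2 * ∑ v, |f v| ^ q := by
    have hsplit : ∀ e ∈ G.edgeFinset, m e =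
        Sym2.lift ⟨fun u v => |f u| ^ q / 2 + |f v| ^ q / 2, fun _ _ => add_comm _ _⟩ e := by
      intro e _
      induction e using Sym2.ind with
      | h u w => exact add_div _ _ _
    rw [sum_congr rfl hsplit, G.sum_edgeFinset_lift_add, mul_sum]
    refine sum_le_sum fun v _ => ?_
    have := mul_le_mul_of_nonneg_right (hD v) (rpow_nonneg (abs_nonneg (f v)) q)
    linarith
  have hpointwise : edgeEnergy G p (signedRpow (q / p) ∘ f) ≤
      (q / p) ^ p * ∑ e ∈ G.edgeFinset, d e ^ (p / q) * m e ^ (1 - p / q) := by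
    rw [edgeEnergy, mul_sum]
    refine sum_le_sum fun e _ => ?_
    induction e using Sym2.ind with
    | h u w =>
      simp only [d, m, Sym2.lift_mk, Function.comp_apply]
      rw [← mul_assoc]
      exact abs_signedRpow_sub_rpow_le hp hpq.le (f u) (f w)
  have hholder := sum_rpow_mul_rpow_le G.edgeFinset (div_pos (by linarith) hq0)
    ((div_lt_one hq0).2 hpq) hd0 hm0
  calc edgeEnergy G p (signedRpow (q / p) ∘ f)
      ≤ (q / p) ^ p * ((∑ e ∈ G.edgeFinset, d e) ^ (p / q) *
          (∑ e ∈ G.edgeFinset, m e) ^ (1 - p / q)) := hpointwise.trans (by gcongr)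
    _ ≤ (q / p) ^ p * edgeEnergy G q f ^ (p / q) * (D / 2 * ∑ v, |f v| ^ q) ^ (1 - p / q) := by
        rw [← mul_assoc, show edgeEnergy G q f = ∑ e ∈ G.edgeFinset, d e from rfl]
        have : 0 ≤ ∑ e ∈ G.edgeFinset, d e := sum_nonneg hd0
        have : 0 ≤ ∑ e ∈ G.edgeFinset, m e := sum_nonneg hm0
        have : 0 ≤ 1 - p / q := sub_nonneg.2 ((div_le_one hq0).2 hpq.le)
        gcongr

theorem rayleighP_signedRpow_le {p q D : ℝ} (hp : 1 ≤ p) (hpq : p < q)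
    (hD : ∀ v, (G.degree v : ℝ) ≤ D) {f : V → ℝ} (hf : f ≠ 0) :
    rayleighP G p (signedRpow (q / p) ∘ f) ≤
      (q / p) ^ p * (D / 2) ^ (1 - p / q) * rayleighP G q f ^ (p / q) := by
  have hp0 : 0 < p := by linarith
  have hq0 : 0 < q := by linarith
  obtain ⟨v₀, hv₀⟩ := Function.ne_iff.1 hf
  have hD0 : 0 ≤ D := (Nat.cast_nonneg _).trans (hD v₀)
  set den := ∑ v, |f v| ^ q
  have hden : 0 < den :=
    sum_pos' (fun v _ => by positivity) ⟨v₀, mem_univ _, rpow_pos_of_pos (abs_pos.2 hv₀) q⟩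
  have hden_eq : ∑ v, |(signedRpow (q / p) ∘ f) v| ^ p = den := by
    refine sum_congr rfl fun v _ => ?_
    rw [Function.comp_apply, abs_signedRpow (by positivity), ← rpow_mul (abs_nonneg _),
      div_mul_cancel₀ q hp0.ne']
  rw [rayleighP_eq_edgeEnergy_div, rayleighP_eq_edgeEnergy_div, hden_eq]
  calc edgeEnergy G p (signedRpow (q / p) ∘ f) / den
      ≤ (q / p) ^ p * edgeEnergy G q f ^ (p / q) * (D / 2 * den) ^ (1 - p / q) / den := by
        gcongr
        exact edgeEnergy_signedRpow_le G hp hpq hD f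
    _ = (q / p) ^ p * (D / 2) ^ (1 - p / q) * (edgeEnergy G q f / den) ^ (p / q) := by
        rw [mul_rpow (by positivity) hden.le, rpow_sub hden, rpow_one,
          div_rpow (edgeEnergy_nonneg G q f) hden.le]
        field_simp

lemma continuousOn_rayleighP {p : ℝ} (hp : 0 < p) : ContinuousOn (rayleighP G p) {0}ᶜ := by
  have habs : Continuous fun t : ℝ => |t| ^ p := (continuous_rpow_const hp.le).comp continuous_abs
  refine ContinuousOn.div (Continuous.continuousOn (continuous_finsetSum _ fun e _ => ?_))
    (continuous_finsetSum _ fun v _ => habs.comp (continuous_apply v)).continuousOn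
    fun f hf => ?_
  · induction e using Sym2.ind with
    | h u w => exact habs.comp ((continuous_apply u).sub (continuous_apply w))
  · obtain ⟨v, hv⟩ := Function.ne_iff.1 hf
    exact (sum_pos' (fun v _ => by positivity)
      ⟨v, mem_univ _, rpow_pos_of_pos (abs_pos.2 hv) p⟩).ne'

end Rayleigh

section Genus

variable {V : Type*} [Fintype V] [Nonempty V]

/- The coordinate map `T → ℝ^|V| ∖ {0}` shows that the set defining `genus T` is nonempty, so its
infimum is attained. -/
lemma genus_spec {T : Set (V → ℝ)} (hT : ∀ y ∈ T, y ≠ 0) :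
    0 < genus T ∧ ∃ φ : (V → ℝ) → Fin (genus T) → ℝ,
      ContinuousOn φ T ∧ (∀ x ∈ T, φ (-x) = -φ x) ∧ ∀ x ∈ T, φ x ≠ 0 := by
  refine Nat.sInf_mem (s := {k | 0 < k ∧ ∃ φ : (V → ℝ) → Fin k → ℝ,
    ContinuousOn φ T ∧ (∀ x ∈ T, φ (-x) = -φ x) ∧ ∀ x ∈ T, φ x ≠ 0})
    ⟨Fintype.card V, Fintype.card_pos,
    fun y => y ∘ (Fintype.equivFin V).symm, ?_, fun _ _ => rfl, fun y hy h => hT y hy ?_⟩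
  · exact (continuous_pi fun i => continuous_apply _).continuousOn
  · funext v
    simpa using congrFun h (Fintype.equivFin V v)

lemma genus_le_of_odd_map {S T : Set (V → ℝ)} (hT : ∀ y ∈ T, y ≠ 0)
    {ψ : (V → ℝ) → (V → ℝ)} (hψ : ContinuousOn ψ S) (hodd : ∀ x ∈ S, ψ (-x) = -ψ x)
    (hST : MapsTo ψ S T) : genus S ≤ genus T := by
  obtain ⟨hpos, φ, hφ, hφodd, hφ0⟩ := genus_spec hT
  refine Nat.sInf_le ⟨hpos, φ ∘ ψ, hφ.comp hψ hST, fun x hx => ?_, fun x hx => hφ0 _ (hST hx)⟩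
  rw [Function.comp_apply, Function.comp_apply, hodd x hx, hφodd _ (hST hx)]

end Genus

section Minimax

variable {V : Type*} [Fintype V] [DecidableEq V] (G : SimpleGraph V) [DecidableRel G.Adj]

def minimaxFamily (V : Type*) [Fintype V] (k : ℕ) : Set (Set (V → ℝ)) :=
  {S | IsCompact S ∧ (∀ x ∈ S, x ≠ 0) ∧ (∀ x ∈ S, -x ∈ S) ∧ k ≤ genus S}

lemma minimaxEig_eq (k : ℕ) (p : ℝ) :
    minimaxEig G k p = sInf ((fun S => sSup (rayleighP G p '' S)) '' minimaxFamily V k) := by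
  simp only [minimaxEig, minimaxFamily, Set.image, Set.mem_ofPred_eq, and_assoc, eq_comm]

lemma sSup_rayleighP_nonneg (p : ℝ) (S : Set (V → ℝ)) : 0 ≤ sSup (rayleighP G p '' S) :=
  Real.sSup_nonneg (forall_mem_image.2 fun f _ => rayleighP_nonneg G p f)

lemma minimaxEig_nonneg (k : ℕ) (p : ℝ) : 0 ≤ minimaxEig G k p := by
  rw [minimaxEig_eq]
  exact Real.sInf_nonneg (forall_mem_image.2 fun S _ => sSup_rayleighP_nonneg G p S)

lemma minimaxEig_of_minimaxFamily_eq_empty {k : ℕ} (hk : minimaxFamily V k = ∅) (p : ℝ) :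
    minimaxEig G k p = 0 := by
  rw [minimaxEig_eq, hk, image_empty, Real.sInf_empty]

theorem minimaxEig_le_of_odd_map [Nonempty V] {k : ℕ} {p q : ℝ} (hq : 0 < q)
    {ψ : (V → ℝ) → (V → ℝ)} (hψ : Continuous ψ) (hodd : ∀ f, ψ (-f) = -ψ f)
    (hψ0 : ∀ f, f ≠ 0 → ψ f ≠ 0) {F : ℝ → ℝ} (hF : Continuous F) (hFmono : MonotoneOn F (Ici 0))
    (hF0 : 0 ≤ F 0) (hbound : ∀ f, f ≠ 0 → rayleighP G p (ψ f) ≤ F (rayleighP G q f))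
    (hk : (minimaxFamily V k).Nonempty) : minimaxEig G k p ≤ F (minimaxEig G k q) := by
  have hbdd : ∀ r, BddBelow ((fun S => sSup (rayleighP G r '' S)) '' minimaxFamily V k) :=
    fun r => ⟨0, forall_mem_image.2 fun S _ => sSup_rayleighP_nonneg G r S⟩
  have hS : ∀ S ∈ minimaxFamily V k, minimaxEig G k p ≤ F (sSup (rayleighP G q '' S)) := by
    rintro S ⟨hSc, hS0, hSsym, hSk⟩
    have hT0 : ∀ y ∈ ψ '' S, y ≠ 0 := forall_mem_image.2 fun f hf => hψ0 f (hS0 f hf)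
    have hT : ψ '' S ∈ minimaxFamily V k :=
      ⟨hSc.image hψ, hT0, forall_mem_image.2 fun f hf => ⟨-f, hSsym f hf, hodd f⟩,
        hSk.trans (genus_le_of_odd_map hT0 hψ.continuousOn (fun f _ => hodd f) (mapsTo_image ψ S))⟩
    have hbddq : BddAbove (rayleighP G q '' S) :=
      (hSc.image_of_continuousOn ((continuousOn_rayleighP G hq).mono hS0)).bddAbove
    have hsup := sSup_rayleighP_nonneg G q S
    rw [minimaxEig_eq]
    refine (csInf_le (hbdd p) (mem_image_of_mem _ hT)).trans (Real.sSup_le ?_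
      (hF0.trans (hFmono self_mem_Ici hsup hsup)))
    refine forall_mem_image.2 (forall_mem_image.2 fun f hf => (hbound f (hS0 f hf)).trans ?_)
    exact hFmono (rayleighP_nonneg G q f) hsup (le_csSup hbddq (mem_image_of_mem _ hf))
  rw [minimaxEig_eq G k q]
  exact ContinuousWithinAt.closure_le (csInf_mem_closure (hk.image _) (hbdd q))
    continuousWithinAt_const hF.continuousWithinAt (forall_mem_image.2 hS)

theorem minimaxEig_le_mul_rpow [Nonempty V] {k : ℕ} {p q D : ℝ} (hp : 1 ≤ p) (hpq : p < q)
    (hD : ∀ v, (G.degree v : ℝ) ≤ D) (hk : (minimaxFamily V k).Nonempty) :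
    minimaxEig G k p ≤ (q / p) ^ p * (D / 2) ^ (1 - p / q) * minimaxEig G k q ^ (p / q) := by
  have hp0 : 0 < p := by linarith
  have hq0 : 0 < q := by linarith
  have hD0 : 0 ≤ D := (Nat.cast_nonneg _).trans (hD (Classical.arbitrary V))
  have hσ : 1 ≤ q / p := (one_le_div hp0).2 hpq.le
  refine minimaxEig_le_of_odd_map G hq0 (ψ := fun f => signedRpow (q / p) ∘ f)
    (F := fun r => (q / p) ^ p * (D / 2) ^ (1 - p / q) * r ^ (p / q))
    (continuous_pi fun v => (continuous_signedRpow hσ).comp (continuous_apply v))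
    (fun f => funext fun v => signedRpow_neg _ _)
    (fun f hf h => hf (funext fun v => (signedRpow_eq_zero_iff (by positivity)).1 (congrFun h v)))
    ((continuous_rpow_const (by positivity)).const_mul _) (fun x hx y _ hxy => ?_) (by positivity)
    (fun f hf => rayleighP_signedRpow_le G hp hpq hD hf) hk
  have : 0 ≤ x := hx
  dsimp only
  gcongr

end Minimax

lemma mul_rpow_inv_le_of_le_mul_rpow {p q x a b : ℝ} (hp : 0 < p) (hq : 0 < q) (hx : 0 ≤ x)
    (ha : 0 ≤ a) (hb : 0 ≤ b) (h : a ≤ (q / p) ^ p * x⁻¹ ^ (1 - p / q) * b ^ (p / q)) :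
    p * (x * a) ^ (1 / p) ≤ q * (x * b) ^ (1 / q) := by
  have hθ : p / q ≠ 0 := by positivity
  have hx' : x * x⁻¹ ^ (1 - p / q) = x ^ (p / q) := by
    obtain rfl | hx := hx.eq_or_lt
    · simp [zero_rpow hθ]
    rw [inv_rpow hx.le, rpow_sub hx, rpow_one]
    field_simp
  have hxa : x * a ≤ (q / p) ^ p * (x * b) ^ (p / q) := by
    calc x * a ≤ x * ((q / p) ^ p * x⁻¹ ^ (1 - p / q) * b ^ (p / q)) := by gcongr
      _ = (q / p) ^ p * (x * b) ^ (p / q) := by rw [mul_rpow hx hb, ← hx']; ring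
  calc p * (x * a) ^ (1 / p) ≤ p * ((q / p) ^ p * (x * b) ^ (p / q)) ^ (1 / p) := by gcongr
    _ = q * (x * b) ^ (1 / q) := by
      rw [mul_rpow (by positivity) (by positivity), ← rpow_mul (by positivity),
        ← rpow_mul (by positivity), mul_one_div_cancel hp.ne', rpow_one]
      field_simp

theorem stmt3_general {V : Type*} [Fintype V] [DecidableEq V] [Nonempty V]
    (G : SimpleGraph V) [DecidableRel G.Adj]
    (k : ℕ) :
    MonotoneOn
      (fun p : ℝ =>
        p * ((2 / ((Finset.univ.sup (fun v => G.degree v) : ℕ) : ℝ)) * minimaxEig G k p)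
          ^ (1 / p))
      (Set.Ici 1) := by
  intro p (hp : 1 ≤ p) q (hq : 1 ≤ q) hpq
  obtain rfl | hpq := hpq.eq_or_lt
  · exact le_rfl
  by_cases hk : (minimaxFamily V k).Nonempty
  · refine mul_rpow_inv_le_of_le_mul_rpow (by linarith) (by linarith) (by positivity)
      (minimaxEig_nonneg G k p) (minimaxEig_nonneg G k q) ?_
    rw [inv_div]
    exact minimaxEig_le_mul_rpow G hp hpq
      (fun v => by exact_mod_cast le_sup (f := fun v => G.degree v) (mem_univ v)) hk
  -- with no admissible set, `minimaxEig G k` is `sInf ∅ = 0` at every exponent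
  · simp [minimaxEig_of_minimaxFamily_eq_empty G (not_nonempty_iff_eq_empty.1 hk),
      zero_rpow (by positivity : p⁻¹ ≠ 0), zero_rpow (by positivity : q⁻¹ ≠ 0)]

/-- Monotonicity: `p ↦ p · ((2/D) λ_k(p))^{1/p}` is increasing on `[1,∞)`,
where `D` is the maximal vertex degree. -/
theorem stmt3 {V : Type*} [Fintype V] [DecidableEq V] [Nonempty V]
    (G : SimpleGraph V) [DecidableRel G.Adj]
    (hD : 0 < Finset.univ.sup (fun v => G.degree v))
    (k : ℕ) (hk1 : 1 ≤ k) (hk2 : k ≤ Fintype.card V) :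
    MonotoneOn
      (fun p : ℝ =>
        p * ((2 / ((Finset.univ.sup (fun v => G.degree v) : ℕ) : ℝ)) * minimaxEig G k p)
          ^ (1 / p))
      (Set.Ici 1) :=
  stmt3_general G k
end

section
/- Let Γ = (V,E) be a finite simple graph with maximal vertex degree D > 0 and let k ∈ {1,…,|V|}. Then the function p ↦ 2^{−p} · λ_k(p) is monotonically decreasing on [1, +∞), where λ_k(p) is the k-th minimax eigenvalue of the up 0-Laplacian L^{up}_{0,p} of Γ. -/
open scoped BigOperators

noncomputable def psi (α : ℝ) (t : ℝ) : ℝ := (max t 0) ^ α - (max (-t) 0) ^ α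

lemma psi_of_nonneg {α t : ℝ} (hα : 0 < α) (ht : 0 ≤ t) : psi α t = t ^ α := by
  rw [psi, max_eq_left ht, max_eq_right (neg_nonpos.mpr ht), Real.zero_rpow hα.ne', sub_zero]

lemma psi_neg (α t : ℝ) : psi α (-t) = - psi α t := by
  simp [psi]

lemma psi_continuous {α : ℝ} (hα : 0 < α) : Continuous (psi α) := by
  apply Continuous.sub
  · exact (continuous_id.max continuous_const).rpow_const fun x => Or.inr hα.le
  · exact (continuous_neg.max continuous_const).rpow_const fun x => Or.inr hα.le

lemma abs_psi {α : ℝ} (hα : 0 < α) (t : ℝ) : |psi α t| = |t| ^ α := by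
  rcases le_total 0 t with h | h
  · rw [psi_of_nonneg hα h, abs_of_nonneg (Real.rpow_nonneg h α), abs_of_nonneg h]
  · rw [← neg_neg t, psi_neg, abs_neg, psi_of_nonneg hα (by linarith), abs_neg]
    rw [abs_neg, abs_of_nonpos h, abs_of_nonneg (Real.rpow_nonneg (by linarith) α)]

lemma psi_eq_zero {α : ℝ} (hα : 0 < α) {t : ℝ} (h : psi α t = 0) : t = 0 := by
  have := abs_psi hα t
  rw [h, abs_zero] at this
  have := (Real.rpow_eq_zero (abs_nonneg t) hα.ne').mp this.symm
  exact abs_eq_zero.mp this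

-- concavity two-term
lemma rpow_add_le' {α : ℝ} (hα0 : 0 < α) (hα1 : α ≤ 1) {x y : ℝ} (hx : 0 ≤ x) (hy : 0 ≤ y) :
    (x + y) ^ α ≤ x ^ α + y ^ α := by
  lift x to NNReal using hx
  lift y to NNReal using hy
  exact_mod_cast NNReal.rpow_add_le_add_rpow x y hα0.le hα1

lemma conc_two {α : ℝ} (hα0 : 0 < α) (hα1 : α ≤ 1) {x y : ℝ} (hx : 0 ≤ x) (hy : 0 ≤ y) :
    x ^ α + y ^ α ≤ 2 ^ (1 - α) * (x + y) ^ α := by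
  lift x to NNReal using hx
  lift y to NNReal using hy
  have key : (x : NNReal) ^ α + y ^ α ≤ 2 ^ (1 - α) * (x + y) ^ α := by
    have h := NNReal.rpow_add_le_mul_rpow_add_rpow (x ^ α) (y ^ α) (p := 1/α)
      (by rw [le_one_div (by norm_num) hα0]; simpa using hα1)
    have hxx : ((x:NNReal) ^ α) ^ (1/α) = x := by
      rw [← NNReal.rpow_mul]; rw [mul_one_div, div_self hα0.ne', NNReal.rpow_one]
    have hyy : ((y:NNReal) ^ α) ^ (1/α) = y := by
      rw [← NNReal.rpow_mul]; rw [mul_one_div, div_self hα0.ne', NNReal.rpow_one]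
    rw [hxx, hyy] at h
    have h2 := NNReal.rpow_le_rpow h hα0.le
    rw [← NNReal.rpow_mul, NNReal.mul_rpow, ← NNReal.rpow_mul] at h2
    have e1 : (1/α) * α = 1 := by field_simp
    have e2 : (1/α - 1) * α = 1 - α := by field_simp
    rwa [e1, e2, NNReal.rpow_one] at h2
  exact_mod_cast key

lemma one_le_two_rpow {α : ℝ} (hα1 : α ≤ 1) : (1:ℝ) ≤ 2 ^ (1 - α) :=
  Real.one_le_rpow (by norm_num) (by linarith)

lemma holder_nonneg {α : ℝ} (hα0 : 0 < α) (hα1 : α ≤ 1) {a b : ℝ} (hb : 0 ≤ b) (hba : b ≤ a) :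
    |psi α a - psi α b| ≤ 2 ^ (1 - α) * |a - b| ^ α := by
  rw [psi_of_nonneg hα0 (hb.trans hba), psi_of_nonneg hα0 hb]
  have hmono : b ^ α ≤ a ^ α := Real.rpow_le_rpow hb hba hα0.le
  rw [abs_of_nonneg (by linarith), abs_of_nonneg (by linarith : (0:ℝ) ≤ a - b)]
  have hsub : a ^ α ≤ (a - b) ^ α + b ^ α := by
    have := rpow_add_le' hα0 hα1 (sub_nonneg.mpr hba) hb
    rwa [sub_add_cancel] at this
  have h0 : (0:ℝ) ≤ (a - b) ^ α := Real.rpow_nonneg (by linarith) α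
  nlinarith [one_le_two_rpow hα1]

lemma holder_mixed {α : ℝ} (hα0 : 0 < α) (hα1 : α ≤ 1) {a b : ℝ} (hb : b ≤ 0) (ha : 0 ≤ a) :
    |psi α a - psi α b| ≤ 2 ^ (1 - α) * |a - b| ^ α := by
  rw [psi_of_nonneg hα0 ha, ← neg_neg b, psi_neg, psi_of_nonneg hα0 (by linarith : (0:ℝ) ≤ -b)]
  have h1 : (0:ℝ) ≤ a ^ α := Real.rpow_nonneg ha α
  have h2 : (0:ℝ) ≤ (-b) ^ α := Real.rpow_nonneg (by linarith) α
  rw [sub_neg_eq_add, abs_of_nonneg (by linarith)]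
  have := conc_two hα0 hα1 ha (by linarith : (0:ℝ) ≤ -b)
  have he : a + -b = a - b := by ring
  rw [he] at this
  calc a ^ α + (-b) ^ α ≤ 2 ^ (1 - α) * (a - b) ^ α := this
    _ = 2 ^ (1 - α) * |a - - -b| ^ α := by
        rw [show a - - -b = a - b by ring, abs_of_nonneg (by linarith : (0:ℝ) ≤ a - b)]

lemma psi_holder {α : ℝ} (hα0 : 0 < α) (hα1 : α ≤ 1) (a b : ℝ) :
    |psi α a - psi α b| ≤ 2 ^ (1 - α) * |a - b| ^ α := by
  have key : ∀ x y : ℝ, y ≤ x → |psi α x - psi α y| ≤ 2 ^ (1 - α) * |x - y| ^ α := by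
    intro x y hyx
    rcases le_total 0 y with hy | hy
    · exact holder_nonneg hα0 hα1 hy hyx
    · rcases le_total x 0 with hx | hx
      · have h := holder_nonneg hα0 hα1 (by linarith : (0:ℝ) ≤ -x) (by linarith : -x ≤ -y)
        have e : psi α (-y) - psi α (-x) = psi α x - psi α y := by
          rw [psi_neg, psi_neg]; ring
        rwa [e, show (-y) - (-x) = x - y by ring] at h
      · exact holder_mixed hα0 hα1 hy hx
  rcases le_total b a with h | h
  · exact key a b h
  · rw [abs_sub_comm, abs_sub_comm a b]; exact key b a h

lemma key_pow {p q : ℝ} (hp : 1 ≤ p) (hpq : p ≤ q) (a b : ℝ) :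
    |psi (p/q) a - psi (p/q) b| ^ q ≤ 2 ^ (q - p) * |a - b| ^ p := by
  have hp0 : 0 < p := lt_of_lt_of_le one_pos hp
  have hq0 : 0 < q := lt_of_lt_of_le one_pos (hp.trans hpq)
  have hα0 : 0 < p / q := div_pos hp0 hq0
  have hα1 : p / q ≤ 1 := (div_le_one hq0).mpr hpq
  have h := psi_holder hα0 hα1 a b
  have h2 := Real.rpow_le_rpow (abs_nonneg _) h hq0.le
  calc |psi (p/q) a - psi (p/q) b| ^ q
      ≤ (2 ^ (1 - p/q) * |a - b| ^ (p/q)) ^ q := h2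
    _ = 2 ^ (q - p) * |a - b| ^ p := by
        rw [Real.mul_rpow (Real.rpow_nonneg (by norm_num) _) (Real.rpow_nonneg (abs_nonneg _) _)]
        rw [← Real.rpow_mul (by norm_num : (0:ℝ) ≤ 2), ← Real.rpow_mul (abs_nonneg _)]
        congr 1
        · congr 1
          field_simp
        · congr 1
          field_simp

lemma abs_psi_pow {p q : ℝ} (hp : 1 ≤ p) (hpq : p ≤ q) (t : ℝ) :
    |psi (p/q) t| ^ q = |t| ^ p := by
  have hp0 : 0 < p := lt_of_lt_of_le one_pos hp
  have hq0 : 0 < q := lt_of_lt_of_le one_pos (hp.trans hpq)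
  rw [abs_psi (div_pos hp0 hq0), ← Real.rpow_mul (abs_nonneg t), div_mul_cancel₀ _ hq0.ne']

lemma rayleigh_nonneg {V : Type*} [Fintype V] [DecidableEq V] (G : SimpleGraph V)
    [DecidableRel G.Adj] (p : ℝ) (f : V → ℝ) : 0 ≤ rayleighP G p f := by
  apply div_nonneg
  · apply Finset.sum_nonneg
    intro e _
    induction e using Sym2.ind with
    | _ u v => simp only [Sym2.lift_mk]; exact Real.rpow_nonneg (abs_nonneg _) p
  · exact Finset.sum_nonneg fun v _ => Real.rpow_nonneg (abs_nonneg _) p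

lemma denom_pos {V : Type*} [Fintype V] {p : ℝ} (hp : 0 < p) {f : V → ℝ} (hf : f ≠ 0) :
    0 < ∑ v, |f v| ^ p := by
  obtain ⟨v, hv⟩ := Function.ne_iff.mp hf
  exact Finset.sum_pos' (fun i _ => Real.rpow_nonneg (abs_nonneg _) p)
    ⟨v, Finset.mem_univ v, Real.rpow_pos_of_pos (abs_pos.mpr hv) p⟩

lemma num_continuous {V : Type*} [Fintype V] [DecidableEq V] (G : SimpleGraph V)
    [DecidableRel G.Adj] {p : ℝ} (hp : 0 < p) :
    Continuous (fun f : V → ℝ => ∑ e ∈ G.edgeFinset,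
      Sym2.lift ⟨fun u v => |f u - f v| ^ p, fun u v => by simp only []; rw [abs_sub_comm]⟩ e) := by
  apply continuous_finset_sum
  intro e _
  induction e using Sym2.ind with
  | _ u v =>
    simp only [Sym2.lift_mk]
    exact (((continuous_apply u).sub (continuous_apply v)).abs).rpow_const fun f => Or.inr hp.le

lemma denom_continuous {V : Type*} [Fintype V] {p : ℝ} (hp : 0 < p) :
    Continuous (fun f : V → ℝ => ∑ v, |f v| ^ p) :=
  continuous_finset_sum _ fun v _ =>
    ((continuous_apply v).abs).rpow_const fun f => Or.inr hp.le

lemma rayleigh_compare {V : Type*} [Fintype V] [DecidableEq V] (G : SimpleGraph V)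
    [DecidableRel G.Adj] {p q : ℝ} (hp : 1 ≤ p) (hpq : p ≤ q) {f : V → ℝ} (hf : f ≠ 0) :
    rayleighP G q (fun v => psi (p/q) (f v)) ≤ 2 ^ (q - p) * rayleighP G p f := by
  have hp0 : 0 < p := lt_of_lt_of_le one_pos hp
  have hd : 0 < ∑ v, |f v| ^ p := denom_pos hp0 hf
  have hden : ∑ v, |psi (p/q) (f v)| ^ q = ∑ v, |f v| ^ p := by
    exact Finset.sum_congr rfl fun v _ => abs_psi_pow hp hpq (f v)
  have hnum : (∑ e ∈ G.edgeFinset,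
      Sym2.lift ⟨fun u v => |psi (p/q) (f u) - psi (p/q) (f v)| ^ q,
        fun u v => by simp only []; rw [abs_sub_comm]⟩ e)
      ≤ 2 ^ (q - p) * ∑ e ∈ G.edgeFinset,
      Sym2.lift ⟨fun u v => |f u - f v| ^ p, fun u v => by simp only []; rw [abs_sub_comm]⟩ e := by
    rw [Finset.mul_sum]
    apply Finset.sum_le_sum
    intro e _
    induction e using Sym2.ind with
    | _ u v =>
      simp only [Sym2.lift_mk]
      exact key_pow hp hpq (f u) (f v)
  rw [rayleighP, rayleighP, hden]
  rw [show (2:ℝ) ^ (q - p) * ((∑ e ∈ G.edgeFinset,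
      Sym2.lift ⟨fun u v => |f u - f v| ^ p, fun u v => by simp only []; rw [abs_sub_comm]⟩ e) /
      ∑ v, |f v| ^ p) = (2 ^ (q - p) * ∑ e ∈ G.edgeFinset,
      Sym2.lift ⟨fun u v => |f u - f v| ^ p, fun u v => by simp only []; rw [abs_sub_comm]⟩ e) /
      ∑ v, |f v| ^ p from (mul_div_assoc _ _ _).symm]
  exact div_le_div_of_nonneg_right hnum hd.le

lemma genus_le_genus {V : Type*} [Fintype V] [Nonempty V] {S S' : Set (V → ℝ)}
    (Ψ : (V → ℝ) → (V → ℝ)) (hΨc : Continuous Ψ) (hmap : ∀ x ∈ S, Ψ x ∈ S')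
    (hodd : ∀ x, Ψ (-x) = -Ψ x) (hS' : ∀ x ∈ S', x ≠ 0) : genus S ≤ genus S' := by
  have hsub : {k : ℕ | 0 < k ∧ ∃ φ : (V → ℝ) → Fin k → ℝ,
      ContinuousOn φ S' ∧ (∀ x ∈ S', φ (-x) = -φ x) ∧ ∀ x ∈ S', φ x ≠ 0} ⊆
      {k : ℕ | 0 < k ∧ ∃ φ : (V → ℝ) → Fin k → ℝ,
      ContinuousOn φ S ∧ (∀ x ∈ S, φ (-x) = -φ x) ∧ ∀ x ∈ S, φ x ≠ 0} := by
    rintro m ⟨hm, φ, hφc, hφodd, hφ0⟩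
    refine ⟨hm, φ ∘ Ψ, ?_, ?_, ?_⟩
    · exact hφc.comp hΨc.continuousOn hmap
    · intro x hx
      simp only [Function.comp_apply, hodd x]
      exact hφodd (Ψ x) (hmap x hx)
    · intro x hx
      exact hφ0 (Ψ x) (hmap x hx)
  have hne : ({k : ℕ | 0 < k ∧ ∃ φ : (V → ℝ) → Fin k → ℝ,
      ContinuousOn φ S' ∧ (∀ x ∈ S', φ (-x) = -φ x) ∧ ∀ x ∈ S', φ x ≠ 0}).Nonempty := by
    refine ⟨Fintype.card V, Fintype.card_pos, fun y i => y ((Fintype.equivFin V).symm i),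
      ?_, ?_, ?_⟩
    · exact (continuous_pi fun i => continuous_apply _).continuousOn
    · intro x _; rfl
    · intro x hx h
      apply hS' x hx
      funext v
      have := congrFun h (Fintype.equivFin V v)
      simpa using this
  exact Nat.sInf_le (hsub (Nat.sInf_mem hne))

/-- Monotonicity: `p ↦ 2^{−p} λ_k(p)` is decreasing on `[1,∞)`. -/
theorem stmt4 {V : Type*} [Fintype V] [DecidableEq V] [Nonempty V]
    (G : SimpleGraph V) [DecidableRel G.Adj]
    (hD : 0 < Finset.univ.sup (fun v => G.degree v))
    (k : ℕ) (hk1 : 1 ≤ k) (hk2 : k ≤ Fintype.card V) :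
    AntitoneOn (fun p : ℝ => (2 : ℝ) ^ (-p) * minimaxEig G k p) (Set.Ici 1) := by
  intro p hp q hq hpq
  simp only [Set.mem_Ici] at hp hq
  have hp0 : 0 < p := lt_of_lt_of_le one_pos hp
  have hq0 : 0 < q := lt_of_lt_of_le one_pos hq
  have hα0 : 0 < p / q := div_pos hp0 hq0
  set Ap := { r : ℝ | ∃ S : Set (V → ℝ), IsCompact S ∧ (∀ x ∈ S, x ≠ 0) ∧ (∀ x ∈ S, -x ∈ S) ∧
    k ≤ genus S ∧ r = sSup (rayleighP G p '' S) } with hAp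
  set Aq := { r : ℝ | ∃ S : Set (V → ℝ), IsCompact S ∧ (∀ x ∈ S, x ≠ 0) ∧ (∀ x ∈ S, -x ∈ S) ∧
    k ≤ genus S ∧ r = sSup (rayleighP G q '' S) } with hAq
  have hmq : minimaxEig G k q = sInf Aq := rfl
  have hmp : minimaxEig G k p = sInf Ap := rfl
  have hBdd : BddBelow Aq := by
    refine ⟨0, ?_⟩
    rintro r ⟨S, -, -, -, -, rfl⟩
    exact Real.sSup_nonneg (by rintro x ⟨f, -, rfl⟩; exact rayleigh_nonneg G q f)
  have key : ∀ r ∈ Ap, (2:ℝ) ^ (-q) * sInf Aq ≤ 2 ^ (-p) * r := by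
    rintro r ⟨S, hSc, hS0, hSsym, hSg, rfl⟩
    set Ψ : (V → ℝ) → (V → ℝ) := fun f v => psi (p/q) (f v) with hΨ
    have hΨc : Continuous Ψ :=
      continuous_pi fun v => (psi_continuous hα0).comp (continuous_apply v)
    have hΨodd : ∀ f, Ψ (-f) = -Ψ f := by
      intro f; funext v
      simp only [hΨ, Pi.neg_apply, psi_neg]
    set S' := Ψ '' S with hS'
    have hS'0 : ∀ x ∈ S', x ≠ 0 := by
      rintro x ⟨f, hf, rfl⟩ h0
      apply hS0 f hf
      funext v
      exact psi_eq_zero hα0 (congrFun h0 v)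
    have hr' : sSup (rayleighP G q '' S') ∈ Aq := by
      refine ⟨S', hSc.image hΨc, hS'0, ?_, ?_, rfl⟩
      · rintro x ⟨f, hf, rfl⟩
        exact ⟨-f, hSsym f hf, hΨodd f⟩
      · exact hSg.trans (genus_le_genus Ψ hΨc (fun x hx => Set.mem_image_of_mem _ hx) hΨodd hS'0)
    have h1 : sInf Aq ≤ sSup (rayleighP G q '' S') := csInf_le hBdd hr'
    have hbddp : BddAbove (rayleighP G p '' S) := by
      have hcont : ContinuousOn (rayleighP G p) S := by
        apply ContinuousOn.div ((num_continuous G hp0).continuousOn)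
          ((denom_continuous hp0).continuousOn)
        intro f hf
        exact (denom_pos hp0 (hS0 f hf)).ne'
      exact (hSc.image_of_continuousOn hcont).bddAbove
    have hsupnn : 0 ≤ sSup (rayleighP G p '' S) :=
      Real.sSup_nonneg (by rintro x ⟨f, -, rfl⟩; exact rayleigh_nonneg G p f)
    have h2 : sSup (rayleighP G q '' S') ≤ 2 ^ (q - p) * sSup (rayleighP G p '' S) := by
      apply Real.sSup_le
      · rintro x ⟨g, ⟨f, hf, rfl⟩, rfl⟩
        calc rayleighP G q (Ψ f) ≤ 2 ^ (q - p) * rayleighP G p f :=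
              rayleigh_compare G hp hpq (hS0 f hf)
          _ ≤ 2 ^ (q - p) * sSup (rayleighP G p '' S) :=
              mul_le_mul_of_nonneg_left (le_csSup hbddp ⟨f, hf, rfl⟩)
                (Real.rpow_nonneg (by norm_num) _)
      · exact mul_nonneg (Real.rpow_nonneg (by norm_num) _) hsupnn
    calc (2:ℝ) ^ (-q) * sInf Aq
        ≤ 2 ^ (-q) * sSup (rayleighP G q '' S') :=
          mul_le_mul_of_nonneg_left h1 (Real.rpow_nonneg (by norm_num) _)
      _ ≤ 2 ^ (-q) * (2 ^ (q - p) * sSup (rayleighP G p '' S)) :=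
          mul_le_mul_of_nonneg_left h2 (Real.rpow_nonneg (by norm_num) _)
      _ = 2 ^ (-p) * sSup (rayleighP G p '' S) := by
          rw [← mul_assoc, ← Real.rpow_add two_pos, show -q + (q - p) = -p by ring]
  show (2:ℝ) ^ (-q) * minimaxEig G k q ≤ 2 ^ (-p) * minimaxEig G k p
  rw [hmq, hmp]
  by_cases hA : Ap.Nonempty
  · have h2p : (0:ℝ) < 2 ^ p := Real.rpow_pos_of_pos two_pos p
    have h3 : (2:ℝ) ^ p * ((2:ℝ) ^ (-q) * sInf Aq) ≤ sInf Ap := by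
      apply le_csInf hA
      intro r hr
      calc (2:ℝ) ^ p * ((2:ℝ) ^ (-q) * sInf Aq) ≤ 2 ^ p * (2 ^ (-p) * r) :=
            mul_le_mul_of_nonneg_left (key r hr) h2p.le
        _ = r := by
            rw [← mul_assoc, ← Real.rpow_add two_pos]
            simp
    calc (2:ℝ) ^ (-q) * sInf Aq
        = 2 ^ (-p) * (2 ^ p * ((2:ℝ) ^ (-q) * sInf Aq)) := by
          rw [← mul_assoc, ← mul_assoc, ← Real.rpow_add two_pos]
          simp
      _ ≤ 2 ^ (-p) * sInf Ap :=
          mul_le_mul_of_nonneg_left h3 (Real.rpow_nonneg (by norm_num) _)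
  · have hAqe : ¬ Aq.Nonempty := by
      rintro ⟨r, S, h1, h2, h3, h4, -⟩
      exact hA ⟨sSup (rayleighP G p '' S), S, h1, h2, h3, h4, rfl⟩
    rw [Set.not_nonempty_iff_eq_empty] at hA hAqe
    rw [hA, hAqe, Real.sInf_empty, mul_zero, mul_zero]
end

section
/- Let Γ be a finite connected weighted graph on N ≥ 2 vertices, with Cheeger constant h and normalized Laplacian eigenvalues 0 = λ₁ < λ₂ ≤ ⋯ ≤ λ_N. Then 1 − √(1 − h²) ≤ λ₂ ≤ 2h; in particular λ₂ ≥ h²/2. -/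
open scoped BigOperators

/-- The degree of a vertex in a weighted graph: `deg v = Σ_u w v u`. -/
noncomputable def wdeg {V : Type*} [Fintype V] (w : V → V → ℝ) (v : V) : ℝ := ∑ u, w v u

/-- The normalized Laplacian of a weighted graph:
`Δf(v) = f(v) − (1/deg v) Σ_u w_{uv} f(u)`. -/
noncomputable def nlap {V : Type*} [Fintype V] (w : V → V → ℝ) (f : V → ℝ) : V → ℝ :=
  fun v => f v - (∑ u, w v u * f u) / wdeg w v

/-- The Cheeger constant of a weighted graph:
`h = min_{∅ ≠ S ⊊ V} |E(S, V∖S)| / min(vol S, vol(V∖S))`. -/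
noncomputable def cheeger {V : Type*} [Fintype V] [DecidableEq V] (w : V → V → ℝ) : ℝ :=
  sInf { r : ℝ | ∃ S : Finset V, S.Nonempty ∧ S ≠ Finset.univ ∧
    r = (∑ u ∈ S, ∑ v ∈ Sᶜ, w u v) /
      min (∑ v ∈ S, wdeg w v) (∑ v ∈ Sᶜ, wdeg w v) }

namespace Cheeger6

open Finset

set_option linter.unusedSectionVars false

variable {V : Type*} [Fintype V] [DecidableEq V]

noncomputable def gvol (w : V → V → ℝ) (S : Finset V) : ℝ := ∑ v ∈ S, wdeg w v

noncomputable def gcut (w : V → V → ℝ) (S : Finset V) : ℝ := ∑ u ∈ S, ∑ v ∈ Sᶜ, w u v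

noncomputable def gB (w : V → V → ℝ) (f g : V → ℝ) : ℝ := ∑ v, wdeg w v * f v * g v

def cheegSet (w : V → V → ℝ) : Set ℝ :=
  { r : ℝ | ∃ S : Finset V, S.Nonempty ∧ S ≠ Finset.univ ∧
    r = gcut w S / min (gvol w S) (gvol w Sᶜ) }

lemma cheeger_eq (w : V → V → ℝ) : cheeger w = sInf (cheegSet w) := rfl

lemma wdeg_nonneg (w : V → V → ℝ) (hnn : ∀ u v, 0 ≤ w u v) (v : V) : 0 ≤ wdeg w v :=
  Finset.sum_nonneg fun u _ => hnn v u

lemma wdeg_pos (w : V → V → ℝ) (hnn : ∀ u v, 0 ≤ w u v)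
    (hconn : ∀ u v : V, Relation.ReflTransGen (fun a b => 0 < w a b) u v)
    (hN : 2 ≤ Fintype.card V) (v : V) : 0 < wdeg w v := by
  obtain ⟨v', hv'⟩ := Fintype.exists_ne_of_one_lt_card (by omega) v
  rcases (hconn v v').cases_head with h | ⟨b, hb, -⟩
  · exact absurd h.symm hv'
  · calc (0:ℝ) < w v b := hb
      _ ≤ wdeg w v := Finset.single_le_sum (fun x _ => hnn v x) (mem_univ b)

lemma gvol_nonneg (w : V → V → ℝ) (hnn : ∀ u v, 0 ≤ w u v) (S : Finset V) : 0 ≤ gvol w S :=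
  Finset.sum_nonneg fun v _ => wdeg_nonneg w hnn v

lemma gcut_nonneg (w : V → V → ℝ) (hnn : ∀ u v, 0 ≤ w u v) (S : Finset V) : 0 ≤ gcut w S :=
  Finset.sum_nonneg fun x _ => Finset.sum_nonneg fun y _ => hnn x y

lemma cheegSet_nonneg (w : V → V → ℝ) (hnn : ∀ u v, 0 ≤ w u v) :
    ∀ r ∈ cheegSet w, (0:ℝ) ≤ r := by
  rintro r ⟨S, -, -, rfl⟩
  exact div_nonneg (gcut_nonneg w hnn S)
    (le_min (gvol_nonneg w hnn S) (gvol_nonneg w hnn Sᶜ))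

lemma cheegSet_bddBelow (w : V → V → ℝ) (hnn : ∀ u v, 0 ≤ w u v) :
    BddBelow (cheegSet w) := ⟨0, fun r hr => cheegSet_nonneg w hnn r hr⟩

lemma cheegSet_nonempty (w : V → V → ℝ) (hN : 2 ≤ Fintype.card V) :
    (cheegSet w).Nonempty := by
  obtain ⟨x, y, hxy⟩ := Fintype.exists_pair_of_one_lt_card (by omega : 1 < Fintype.card V)
  refine ⟨_, {x}, Finset.singleton_nonempty x, ?_, rfl⟩
  intro h
  have : y ∈ ({x} : Finset V) := h ▸ mem_univ y
  exact hxy (Finset.mem_singleton.mp this).symm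

lemma cheeger_nonneg (w : V → V → ℝ) (hnn : ∀ u v, 0 ≤ w u v) (hN : 2 ≤ Fintype.card V) :
    0 ≤ cheeger w := by
  rw [cheeger_eq]
  exact le_csInf (cheegSet_nonempty w hN) (cheegSet_nonneg w hnn)

lemma cheeger_le (w : V → V → ℝ) (hnn : ∀ u v, 0 ≤ w u v) {S : Finset V}
    (h1 : S.Nonempty) (h2 : S ≠ Finset.univ) :
    cheeger w ≤ gcut w S / min (gvol w S) (gvol w Sᶜ) := by
  rw [cheeger_eq]
  exact csInf_le (cheegSet_bddBelow w hnn) ⟨S, h1, h2, rfl⟩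

lemma cheeger_mul_vol_le (w : V → V → ℝ) (hnn : ∀ u v, 0 ≤ w u v)
    (hD : ∀ v, 0 < wdeg w v) {S : Finset V}
    (h1 : S.Nonempty) (h2 : S ≠ Finset.univ) (hvol : gvol w S ≤ gvol w Sᶜ) :
    cheeger w * gvol w S ≤ gcut w S := by
  have hpos : 0 < gvol w S := Finset.sum_pos (fun v _ => hD v) h1
  have := cheeger_le w hnn h1 h2
  rw [min_eq_left hvol] at this
  calc cheeger w * gvol w S ≤ (gcut w S / gvol w S) * gvol w S :=
        mul_le_mul_of_nonneg_right this hpos.le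
    _ = gcut w S := div_mul_cancel₀ _ hpos.ne'

lemma cheeger_attained (w : V → V → ℝ) (hN : 2 ≤ Fintype.card V) :
    ∃ S : Finset V, S.Nonempty ∧ S ≠ Finset.univ ∧
      cheeger w = gcut w S / min (gvol w S) (gvol w Sᶜ) := by
  have hfin : (cheegSet w).Finite := by
    apply Set.Finite.subset
      (Set.finite_range fun S : Finset V => gcut w S / min (gvol w S) (gvol w Sᶜ))
    rintro r ⟨S, -, -, rfl⟩
    exact ⟨S, rfl⟩
  have := (cheegSet_nonempty w hN).csInf_mem hfin
  rw [← cheeger_eq] at this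
  exact this

lemma sum_abs_indicator (w : V → V → ℝ) (hsymm : ∀ u v, w u v = w v u) (S : Finset V) :
    ∑ v, ∑ x, w v x * |(if v ∈ S then (1:ℝ) else 0) - (if x ∈ S then 1 else 0)|
      = 2 * gcut w S := by
  have hsplit : ∀ F : V → ℝ, ∑ v, F v = ∑ v ∈ S, F v + ∑ v ∈ Sᶜ, F v :=
    fun F => (Finset.sum_add_sum_compl S F).symm
  rw [hsplit]
  have h1 : ∀ v ∈ S, (∑ x, w v x * |(if v ∈ S then (1:ℝ) else 0) - (if x ∈ S then 1 else 0)|)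
      = ∑ x ∈ Sᶜ, w v x := by
    intro v hv
    rw [hsplit fun x => w v x * |(if v ∈ S then (1:ℝ) else 0) - (if x ∈ S then 1 else 0)|]
    rw [Finset.sum_congr rfl (fun x hx => by simp [hv, hx] : ∀ x ∈ S,
      w v x * |(if v ∈ S then (1:ℝ) else 0) - (if x ∈ S then 1 else 0)| = 0)]
    rw [Finset.sum_congr rfl (fun x hx => by
      simp [hv, (Finset.mem_compl.mp hx)] : ∀ x ∈ Sᶜ,
      w v x * |(if v ∈ S then (1:ℝ) else 0) - (if x ∈ S then 1 else 0)| = w v x)]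
    simp
  have h2 : ∀ v ∈ Sᶜ, (∑ x, w v x * |(if v ∈ S then (1:ℝ) else 0) - (if x ∈ S then 1 else 0)|)
      = ∑ x ∈ S, w v x := by
    intro v hv
    have hv' : v ∉ S := Finset.mem_compl.mp hv
    rw [hsplit fun x => w v x * |(if v ∈ S then (1:ℝ) else 0) - (if x ∈ S then 1 else 0)|]
    rw [Finset.sum_congr rfl (fun x hx => by simp [hv', hx] : ∀ x ∈ S,
      w v x * |(if v ∈ S then (1:ℝ) else 0) - (if x ∈ S then 1 else 0)| = w v x)]
    rw [Finset.sum_congr rfl (fun x hx => by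
      simp [hv', (Finset.mem_compl.mp hx)] : ∀ x ∈ Sᶜ,
      w v x * |(if v ∈ S then (1:ℝ) else 0) - (if x ∈ S then 1 else 0)| = 0)]
    simp
  rw [Finset.sum_congr rfl h1, Finset.sum_congr rfl h2]
  have h3 : ∑ v ∈ Sᶜ, ∑ x ∈ S, w v x = ∑ x ∈ S, ∑ v ∈ Sᶜ, w x v := by
    rw [Finset.sum_comm]
    exact Finset.sum_congr rfl fun x _ => Finset.sum_congr rfl fun v _ => hsymm v x
  rw [h3]
  unfold gcut; ring

lemma gB_nlap (w : V → V → ℝ) (hD : ∀ v, wdeg w v ≠ 0) (f g : V → ℝ) :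
    gB w (nlap w f) g = gB w f g - ∑ v, ∑ x, w v x * f x * g v := by
  unfold gB nlap
  rw [← Finset.sum_sub_distrib]
  refine Finset.sum_congr rfl fun v _ => ?_
  rw [← Finset.sum_mul]
  field_simp [hD v]

lemma sum_sq_expand (w : V → V → ℝ) (hsymm : ∀ u v, w u v = w v u) (f : V → ℝ) :
    ∑ v, ∑ x, w v x * (f v - f x)^2
      = 2 * gB w f f - 2 * ∑ v, ∑ x, w v x * f v * f x := by
  have h1 : ∑ v, ∑ x, w v x * (f v)^2 = gB w f f := by
    unfold gB
    refine Finset.sum_congr rfl fun v _ => ?_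
    rw [← Finset.sum_mul]
    show (wdeg w v) * (f v)^2 = _
    ring
  have h2 : ∑ v, ∑ x, w v x * (f x)^2 = gB w f f := by
    rw [Finset.sum_comm]
    rw [← h1]
    exact Finset.sum_congr rfl fun x _ => Finset.sum_congr rfl fun v _ => by rw [hsymm]
  have key : ∀ v x : V, w v x * (f v - f x)^2
      = w v x * (f v)^2 + w v x * (f x)^2 - 2 * (w v x * f v * f x) := fun v x => by ring
  calc ∑ v, ∑ x, w v x * (f v - f x)^2
      = ∑ v, ∑ x, (w v x * (f v)^2 + w v x * (f x)^2 - 2 * (w v x * f v * f x)) := by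
        exact Finset.sum_congr rfl fun v _ => Finset.sum_congr rfl fun x _ => key v x
    _ = 2 * gB w f f - 2 * ∑ v, ∑ x, w v x * f v * f x := by
        simp only [Finset.sum_sub_distrib, Finset.sum_add_distrib, ← Finset.mul_sum]
        rw [h1, h2]; ring

lemma sum_add_expand (w : V → V → ℝ) (hsymm : ∀ u v, w u v = w v u) (f : V → ℝ) :
    ∑ v, ∑ x, w v x * (f v + f x)^2
      = 2 * gB w f f + 2 * ∑ v, ∑ x, w v x * f v * f x := by
  have h1 : ∑ v, ∑ x, w v x * (f v)^2 = gB w f f := by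
    unfold gB
    refine Finset.sum_congr rfl fun v _ => ?_
    rw [← Finset.sum_mul]
    show (wdeg w v) * (f v)^2 = _
    ring
  have h2 : ∑ v, ∑ x, w v x * (f x)^2 = gB w f f := by
    rw [Finset.sum_comm]
    rw [← h1]
    exact Finset.sum_congr rfl fun x _ => Finset.sum_congr rfl fun v _ => by rw [hsymm]
  calc ∑ v, ∑ x, w v x * (f v + f x)^2
      = ∑ v, ∑ x, (w v x * (f v)^2 + w v x * (f x)^2 + 2 * (w v x * f v * f x)) :=
        Finset.sum_congr rfl fun v _ => Finset.sum_congr rfl fun x _ => by ring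
    _ = _ := by
        simp only [Finset.sum_add_distrib, ← Finset.mul_sum]
        rw [h1, h2]; ring

lemma quad (w : V → V → ℝ) (hsymm : ∀ u v, w u v = w v u) (hD : ∀ v, wdeg w v ≠ 0)
    (f : V → ℝ) :
    gB w (nlap w f) f = (∑ v, ∑ x, w v x * (f v - f x)^2) / 2 := by
  rw [gB_nlap w hD, sum_sq_expand w hsymm]
  have : ∑ v, ∑ x, w v x * f x * f v = ∑ v, ∑ x, w v x * f v * f x :=
    Finset.sum_congr rfl fun v _ => Finset.sum_congr rfl fun x _ => by ring
  rw [this]; ring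

lemma quad_nonneg (w : V → V → ℝ) (hsymm : ∀ u v, w u v = w v u) (hnn : ∀ u v, 0 ≤ w u v)
    (hD : ∀ v, wdeg w v ≠ 0) (f : V → ℝ) : 0 ≤ gB w (nlap w f) f := by
  rw [quad w hsymm hD]
  apply div_nonneg _ (by norm_num)
  exact Finset.sum_nonneg fun v _ => Finset.sum_nonneg fun x _ =>
    mul_nonneg (hnn v x) (sq_nonneg _)

lemma sum_wdeg_nlap (w : V → V → ℝ) (hsymm : ∀ u v, w u v = w v u)
    (hD : ∀ v, wdeg w v ≠ 0) (f : V → ℝ) :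
    ∑ v, wdeg w v * nlap w f v = 0 := by
  have h1 : ∀ v : V, wdeg w v * nlap w f v = wdeg w v * f v - ∑ x, w v x * f x := by
    intro v
    unfold nlap
    field_simp [hD v]
  rw [Finset.sum_congr rfl fun v _ => h1 v, Finset.sum_sub_distrib]
  have h2 : ∑ v, ∑ x, w v x * f x = ∑ v, wdeg w v * f v := by
    rw [Finset.sum_comm]
    refine Finset.sum_congr rfl fun x _ => ?_
    rw [← Finset.sum_mul]
    congr 1
    exact Finset.sum_congr rfl fun v _ => hsymm v x
  rw [h2, sub_self]

lemma const_of_quad_zero (w : V → V → ℝ) (hnn : ∀ u v, 0 ≤ w u v)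
    (hconn : ∀ u v : V, Relation.ReflTransGen (fun a b => 0 < w a b) u v)
    (f : V → ℝ) (hE : ∑ v, ∑ x, w v x * (f v - f x)^2 = 0) :
    ∀ a b, f a = f b := by
  have h1 : ∀ v ∈ (univ : Finset V), ∑ x, w v x * (f v - f x)^2 = 0 := by
    rw [← Finset.sum_eq_zero_iff_of_nonneg]
    · exact hE
    · exact fun v _ => Finset.sum_nonneg fun x _ => mul_nonneg (hnn v x) (sq_nonneg _)
  have h2 : ∀ v x : V, w v x * (f v - f x)^2 = 0 := by
    intro v x
    have := (Finset.sum_eq_zero_iff_of_nonneg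
      (fun x _ => mul_nonneg (hnn v x) (sq_nonneg (f v - f x)))).mp (h1 v (mem_univ v))
    exact this x (mem_univ x)
  have step : ∀ a b : V, 0 < w a b → f a = f b := by
    intro a b hab
    have := h2 a b
    have h3 : (f a - f b)^2 = 0 := by
      rcases mul_eq_zero.mp this with h | h
      · exact absurd h hab.ne'
      · exact h
    have := pow_eq_zero_iff (n := 2) (by norm_num) |>.mp h3
    linarith
  intro a b
  induction hconn a b with
  | refl => rfl
  | tail _ hbc ih => exact ih.trans (step _ _ hbc)

lemma gvol_mono (w : V → V → ℝ) (hnn : ∀ u v, 0 ≤ w u v) {S T : Finset V} (hST : S ⊆ T) :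
    gvol w S ≤ gvol w T :=
  Finset.sum_le_sum_of_subset_of_nonneg hST
    (fun v _ _ => Finset.sum_nonneg fun x _ => hnn v x)

lemma coarea (w : V → V → ℝ) (hsymm : ∀ u v, w u v = w v u) (hnn : ∀ u v, 0 ≤ w u v)
    (hN : 2 ≤ Fintype.card V) (hD : ∀ v, 0 < wdeg w v) :
    ∀ k : ℕ, ∀ q : V → ℝ, (∀ v, 0 ≤ q v) →
      ((univ.filter fun v => 0 < q v).image q).card ≤ k →
      gvol w (univ.filter fun v => 0 < q v) ≤ gvol w (univ.filter fun v => 0 < q v)ᶜ →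
      cheeger w * ∑ v, wdeg w v * q v ≤ (∑ v, ∑ x, w v x * |q v - q x|) / 2 := by
  intro k
  induction k with
  | zero =>
    intro q hq hcard _
    have h0 : ((univ.filter fun v => 0 < q v).image q) = ∅ :=
      Finset.card_eq_zero.mp (Nat.le_zero.mp hcard)
    have hfe : (univ.filter fun v => 0 < q v) = ∅ := Finset.image_eq_empty.mp h0
    have hq0 : ∀ v, q v = 0 := by
      intro v
      have : v ∉ (univ.filter fun v => 0 < q v) := by rw [hfe]; exact notMem_empty v
      have : ¬ 0 < q v := by simpa using this
      linarith [hq v]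
    simp [hq0]
  | succ k ih =>
    intro q hq hcard hvol
    by_cases hPne : (univ.filter fun v => 0 < q v).Nonempty
    case neg =>
      have hq0 : ∀ v, q v = 0 := by
        intro v
        have : v ∉ (univ.filter fun v => 0 < q v) := by
          rw [Finset.not_nonempty_iff_eq_empty.mp hPne]; exact notMem_empty v
        have : ¬ 0 < q v := by simpa using this
        linarith [hq v]
      simp [hq0]
    case pos =>
      set P := univ.filter fun v => 0 < q v with hP
      -- Pᶜ nonempty
      have hPc : Pᶜ.Nonempty := by
        by_contra hc
        have : P = univ := by
          have := Finset.not_nonempty_iff_eq_empty.mp hc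
          rwa [Finset.compl_eq_empty_iff] at this
        have hneV : Nonempty V := Fintype.card_pos_iff.mp (by omega)
        have hvolpos : 0 < gvol w P := by
          rw [this]
          exact Finset.sum_pos (fun v _ => hD v) univ_nonempty
        rw [this, Finset.compl_univ] at hvol
        have : gvol w (∅ : Finset V) = 0 := by simp [gvol]
        rw [‹P = univ›] at hvolpos
        rw [this] at hvol
        linarith
      obtain ⟨v₁, hv₁⟩ := hPc
      have hv₁P : v₁ ∉ P := Finset.mem_compl.mp hv₁
      have hv₁0 : q v₁ = 0 := by
        have : ¬ 0 < q v₁ := by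
          intro h; exact hv₁P (by simp [hP, h])
        linarith [hq v₁]
      have hPim : (P.image q).Nonempty := hPne.image q
      set m := (P.image q).max' hPim with hm
      obtain ⟨v₀, hv₀P, hv₀'⟩ := Finset.mem_image.mp ((P.image q).max'_mem hPim)
      have hv₀ : q v₀ = m := by rw [hm]; exact hv₀'
      have hm_pos : 0 < m := by
        rw [← hv₀]; exact (Finset.mem_filter.mp hv₀P).2
      have hq_le_m : ∀ v, q v ≤ m := by
        intro v
        by_cases hv : v ∈ P
        · exact Finset.le_max' _ _ (Finset.mem_image_of_mem q hv)
        · have : ¬ 0 < q v := fun h => hv (by simp [hP, h])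
          linarith [hq v]
      set L := univ.filter fun v => q v < m with hL
      have hv₁L : v₁ ∈ L := by simp [hL, hv₁0, hm_pos]
      have hLim : (L.image q).Nonempty := ⟨q v₁, Finset.mem_image_of_mem q hv₁L⟩
      set m' := (L.image q).max' hLim with hm'
      obtain ⟨x₁, hx₁L, hx₁'⟩ := Finset.mem_image.mp ((L.image q).max'_mem hLim)
      have hx₁ : q x₁ = m' := by rw [hm']; exact hx₁'
      have hm'_lt : m' < m := by
        rw [← hx₁]
        exact (Finset.mem_filter.mp hx₁L).2
      have hm'_nonneg : 0 ≤ m' := by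
        have h := Finset.le_max' (L.image q) (q v₁) (Finset.mem_image_of_mem q hv₁L)
        exact le_trans (le_of_eq hv₁0.symm) h
      have hle_m' : ∀ v, q v < m → q v ≤ m' := by
        intro v hv
        exact Finset.le_max' _ _ (Finset.mem_image_of_mem q (by simp [hL, hv]))
      set S := univ.filter fun v => q v = m with hS
      have hv₀S : v₀ ∈ S := by simp only [hS, Finset.mem_filter]; exact ⟨mem_univ v₀, hv₀⟩
      have hSP : S ⊆ P := by
        intro v hv
        have : q v = m := (Finset.mem_filter.mp hv).2
        simp [hP, this, hm_pos]
      have hSnu : S ≠ univ := by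
        intro h
        have : v₁ ∈ S := h ▸ mem_univ v₁
        have := (Finset.mem_filter.mp this).2
        rw [hv₁0] at this
        exact hm_pos.ne this
      set q' : V → ℝ := fun v => min (q v) m' with hq'def
      have hq' : ∀ v, 0 ≤ q' v := fun v => le_min (hq v) hm'_nonneg
      have hq'd : ∀ v, q v = q' v + (m - m') * (if v ∈ S then 1 else 0) := by
        intro v
        by_cases hv : v ∈ S
        · have hqv : q v = m := (Finset.mem_filter.mp hv).2
          have : q' v = m' := by
            rw [hq'def]; simp only []
            rw [hqv]; exact min_eq_right hm'_lt.le
          rw [hqv, this, if_pos hv]; ring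
        · have hqv : q v < m := lt_of_le_of_ne (hq_le_m v)
            (fun h => hv (by simp [hS, h]))
          have : q' v = q v := by
            rw [hq'def]; simp only []
            exact min_eq_left (hle_m' v hqv)
          rw [this, if_neg hv]; ring
      have habs : ∀ v x, |q v - q x| = |q' v - q' x|
          + (m - m') * |(if v ∈ S then (1:ℝ) else 0) - (if x ∈ S then 1 else 0)| := by
        intro v x
        have dv := hq'd v
        have dx := hq'd x
        by_cases hv : v ∈ S <;> by_cases hx : x ∈ S <;>
          simp only [hv, hx, if_pos, if_neg, if_true, if_false] at dv dx ⊢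
        · rw [show q v - q x = q' v - q' x by linarith]; simp
        · -- v ∈ S, x ∉ S : q v = m form
          have h1 : q' v = m' := by
            have hqv : q v = m := (Finset.mem_filter.mp hv).2
            rw [hq'def]; simp only []; rw [hqv]; exact min_eq_right hm'_lt.le
          have h2 : q' x = q x := by linarith
          have h3 : q x ≤ m' := by
            have hqx : q x < m := lt_of_le_of_ne (hq_le_m x) (fun h => hx (by simp [hS, h]))
            exact hle_m' x hqx
          rw [abs_of_nonneg (by linarith), abs_of_nonneg (by linarith),
            abs_of_nonneg (by norm_num)]
          linarith
        · have h1 : q' x = m' := by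
            have hqx : q x = m := (Finset.mem_filter.mp hx).2
            rw [hq'def]; simp only []; rw [hqx]; exact min_eq_right hm'_lt.le
          have h2 : q' v = q v := by linarith
          have h3 : q v ≤ m' := by
            have hqv : q v < m := lt_of_le_of_ne (hq_le_m v) (fun h => hv (by simp [hS, h]))
            exact hle_m' v hqv
          rw [abs_of_nonpos (by linarith), abs_of_nonpos (by linarith),
            abs_of_nonpos (by norm_num)]
          linarith
        · rw [show q v - q x = q' v - q' x by linarith]; simp
      -- sum identities
      have eq1 : ∑ v, wdeg w v * q v = (∑ v, wdeg w v * q' v) + (m - m') * gvol w S := by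
        calc ∑ v, wdeg w v * q v
            = ∑ v, (wdeg w v * q' v + (m - m') * (if v ∈ S then wdeg w v else 0)) := by
              refine Finset.sum_congr rfl fun v _ => ?_
              rw [hq'd v]
              by_cases hv : v ∈ S <;> simp [hv] <;> ring
          _ = (∑ v, wdeg w v * q' v) + (m - m') * gvol w S := by
              rw [Finset.sum_add_distrib, ← Finset.mul_sum]
              congr 2
              rw [Finset.sum_ite_mem, univ_inter]
              rfl
      have eq2 : ∑ v, ∑ x, w v x * |q v - q x|
          = (∑ v, ∑ x, w v x * |q' v - q' x|) + (m - m') * (2 * gcut w S) := by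
        calc ∑ v, ∑ x, w v x * |q v - q x|
            = ∑ v, ∑ x, (w v x * |q' v - q' x|
                + (m - m') * (w v x * |(if v ∈ S then (1:ℝ) else 0) - (if x ∈ S then 1 else 0)|)) := by
              refine Finset.sum_congr rfl fun v _ => Finset.sum_congr rfl fun x _ => ?_
              rw [habs v x]; ring
          _ = (∑ v, ∑ x, w v x * |q' v - q' x|)
                + (m - m') * ∑ v, ∑ x, w v x * |(if v ∈ S then (1:ℝ) else 0) - (if x ∈ S then 1 else 0)| := by
              simp only [Finset.sum_add_distrib, ← Finset.mul_sum]
          _ = _ := by rw [sum_abs_indicator w hsymm S]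
      have hvolS : gvol w S ≤ gvol w Sᶜ := by
        calc gvol w S ≤ gvol w P := gvol_mono w hnn hSP
          _ ≤ gvol w Pᶜ := hvol
          _ ≤ gvol w Sᶜ := gvol_mono w hnn (Finset.compl_subset_compl.mpr hSP)
      have hcutS : cheeger w * gvol w S ≤ gcut w S :=
        cheeger_mul_vol_le w hnn hD ⟨v₀, hv₀S⟩ hSnu hvolS
      -- apply ih to q'
      have hsub : (univ.filter fun v => 0 < q' v).image q' ⊆ (P.image q).erase m := by
        intro y hy
        obtain ⟨x, hx, rfl⟩ := Finset.mem_image.mp hy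
        have hx' : 0 < q' x := (Finset.mem_filter.mp hx).2
        rcases le_total (q x) m' with h | h
        · have hqq : q' x = q x := min_eq_left h
          have hxP : x ∈ P := by
            simp only [hP, Finset.mem_filter]
            refine ⟨mem_univ x, ?_⟩
            rw [← hqq]; exact hx'
          refine Finset.mem_erase.mpr ⟨?_, ?_⟩
          · rw [hqq]; exact ne_of_lt (lt_of_le_of_lt h hm'_lt)
          · rw [hqq]; exact Finset.mem_image_of_mem q hxP
        · have hqq : q' x = m' := min_eq_right h
          have hm'pos : 0 < m' := by rw [← hqq]; exact hx'
          have hx₁P : x₁ ∈ P := by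
            simp only [hP, Finset.mem_filter]
            refine ⟨mem_univ x₁, ?_⟩
            rw [hx₁]; exact hm'pos
          refine Finset.mem_erase.mpr ⟨?_, ?_⟩
          · rw [hqq]; exact hm'_lt.ne
          · rw [hqq, ← hx₁]; exact Finset.mem_image_of_mem q hx₁P
      have hcard' : ((univ.filter fun v => 0 < q' v).image q').card ≤ k := by
        have h1 := Finset.card_le_card hsub
        have hmm : m ∈ P.image q := by rw [← hv₀]; exact Finset.mem_image_of_mem q hv₀P
        have h2 : ((P.image q).erase m).card = (P.image q).card - 1 :=
          Finset.card_erase_of_mem hmm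
        have h3 : (P.image q).card ≤ k + 1 := hcard
        omega
      have hsub2 : (univ.filter fun v => 0 < q' v) ⊆ P := by
        intro v hv
        have h1 : 0 < q' v := (Finset.mem_filter.mp hv).2
        have h2 : 0 < q v := lt_of_lt_of_le h1 (min_le_left _ _)
        simp only [hP, Finset.mem_filter]
        exact ⟨mem_univ v, h2⟩
      have hvol' : gvol w (univ.filter fun v => 0 < q' v)
          ≤ gvol w (univ.filter fun v => 0 < q' v)ᶜ := by
        calc gvol w (univ.filter fun v => 0 < q' v) ≤ gvol w P := gvol_mono w hnn hsub2
          _ ≤ gvol w Pᶜ := hvol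
          _ ≤ _ := gvol_mono w hnn (Finset.compl_subset_compl.mpr hsub2)
      have hih := ih q' hq' hcard' hvol'
      -- combine
      have eq1' : cheeger w * (∑ v, wdeg w v * q v)
          = cheeger w * (∑ v, wdeg w v * q' v) + (m - m') * (cheeger w * gvol w S) := by
        rw [eq1]; ring
      have hmm' : 0 ≤ m - m' := by linarith
      have hineq : (m - m') * (cheeger w * gvol w S) ≤ (m - m') * gcut w S :=
        mul_le_mul_of_nonneg_left hcutS hmm'
      rw [eq1', eq2]
      linarith
lemma key (w : V → V → ℝ) (hsymm : ∀ u v, w u v = w v u) (hnn : ∀ u v, 0 ≤ w u v)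
    (hN : 2 ≤ Fintype.card V) (hD : ∀ v, 0 < wdeg w v)
    (lam1 : ℝ) (hl1 : lam1 ≤ 1)
    (f : V → ℝ) (heigf : ∀ v, nlap w f v = lam1 * f v)
    (hPne : (univ.filter fun v => 0 < f v).Nonempty)
    (hvol : gvol w (univ.filter fun v => 0 < f v)
      ≤ gvol w (univ.filter fun v => 0 < f v)ᶜ) :
    cheeger w ^ 2 ≤ lam1 * (2 - lam1) := by
  classical
  set P := univ.filter fun v => 0 < f v with hP
  set g : V → ℝ := fun v => max (f v) 0 with hg
  have hg0 : ∀ v, 0 ≤ g v := fun v => le_max_right _ _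
  have hgf : ∀ v, f v ≤ g v := fun v => le_max_left _ _
  have hgP : ∀ v ∈ P, g v = f v := by
    intro v hv
    exact max_eq_left (Finset.mem_filter.mp hv).2.le
  have hgnP : ∀ v, v ∉ P → g v = 0 := by
    intro v hv
    have : ¬ 0 < f v := fun h => hv (by simp [hP, h])
    exact max_eq_right (by linarith)
  set ν := gB w g g with hν
  set X := ∑ v, ∑ x, w v x * g v * g x with hX
  have hν_pos : 0 < ν := by
    obtain ⟨v₀, hv₀⟩ := hPne
    have hfv₀ : 0 < f v₀ := (Finset.mem_filter.mp hv₀).2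
    have h1 : 0 < wdeg w v₀ * g v₀ * g v₀ := by
      rw [hgP v₀ hv₀]
      exact mul_pos (mul_pos (hD v₀) hfv₀) hfv₀
    have h2 : ∀ v ∈ (univ : Finset V), 0 ≤ wdeg w v * g v * g v := fun v _ =>
      mul_nonneg (mul_nonneg (hD v).le (hg0 v)) (hg0 v)
    exact lt_of_lt_of_le h1 (Finset.single_le_sum h2 (mem_univ v₀))
  have hX0 : 0 ≤ X := Finset.sum_nonneg fun v _ => Finset.sum_nonneg fun x _ =>
    mul_nonneg (mul_nonneg (hnn v x) (hg0 v)) (hg0 x)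
  -- extension of P-sums
  have hext : ∀ F : V → ℝ, (∀ v, v ∉ P → F v = 0) → ∑ v ∈ P, F v = ∑ v, F v := by
    intro F hF
    rw [← Finset.sum_add_sum_compl P F]
    have : ∑ v ∈ Pᶜ, F v = 0 :=
      Finset.sum_eq_zero fun v hv => hF v (Finset.mem_compl.mp hv)
    rw [this, add_zero]
  have hνP : ∑ v ∈ P, wdeg w v * g v * g v = ν := by
    rw [hν]
    exact hext _ fun v hv => by rw [hgnP v hv]; ring
  -- Step A : ν - X ≤ lam1 * ν
  have stepA : ν - X ≤ lam1 * ν := by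
    have hA1 : ∑ v ∈ P, wdeg w v * g v * nlap w f v = lam1 * ν := by
      have : ∀ v ∈ P, wdeg w v * g v * nlap w f v = lam1 * (wdeg w v * g v * g v) := by
        intro v hv
        rw [heigf v, hgP v hv]
        ring
      rw [Finset.sum_congr rfl this, ← Finset.mul_sum, hνP]
    have hA2 : ∑ v ∈ P, wdeg w v * g v * nlap w f v
        = ν - ∑ v ∈ P, ∑ x, w v x * g v * f x := by
      have hterm : ∀ v ∈ P, wdeg w v * g v * nlap w f v
          = wdeg w v * g v * g v - ∑ x, w v x * g v * f x := by
        intro v hv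
        unfold nlap
        have hDv : wdeg w v ≠ 0 := (hD v).ne'
        have h1 : ∑ x, w v x * g v * f x = g v * ∑ x, w v x * f x := by
          rw [Finset.mul_sum]
          exact Finset.sum_congr rfl fun x _ => by ring
        rw [h1, hgP v hv]
        field_simp
      rw [Finset.sum_congr rfl hterm, Finset.sum_sub_distrib, hνP]
    have hA3 : ∑ v ∈ P, ∑ x, w v x * g v * f x ≤ X := by
      have h1 : ∑ v ∈ P, ∑ x, w v x * g v * f x ≤ ∑ v ∈ P, ∑ x, w v x * g v * g x := by
        refine Finset.sum_le_sum fun v _ => Finset.sum_le_sum fun x _ => ?_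
        exact mul_le_mul_of_nonneg_left (hgf x) (mul_nonneg (hnn v x) (hg0 v))
      have h2 : ∑ v ∈ P, ∑ x, w v x * g v * g x = X := by
        rw [hX]
        exact hext _ fun v hv => Finset.sum_eq_zero fun x _ => by rw [hgnP v hv]; ring
      linarith
    linarith
  have hW0 : 0 ≤ ν - X := by
    have := sum_sq_expand w hsymm g
    have h1 : 0 ≤ ∑ v, ∑ x, w v x * (g v - g x)^2 :=
      Finset.sum_nonneg fun v _ => Finset.sum_nonneg fun x _ =>
        mul_nonneg (hnn v x) (sq_nonneg _)
    rw [← hν] at this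
    linarith
  -- Step B : Cauchy-Schwarz
  set T := (∑ v, ∑ x, w v x * |g v * g v - g x * g x|) / 2 with hT
  have stepB : (2 * T)^2 ≤ (2*ν - 2*X) * (2*ν + 2*X) := by
    have hTT : 2 * T = ∑ v, ∑ x, w v x * |g v * g v - g x * g x| := by
      rw [hT]; ring
    rw [hTT]
    have hprod : ∑ v, ∑ x, w v x * |g v * g v - g x * g x|
        = ∑ p ∈ univ ×ˢ univ, (Real.sqrt (w p.1 p.2) * |g p.1 - g p.2|)
          * (Real.sqrt (w p.1 p.2) * (g p.1 + g p.2)) := by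
      rw [Finset.sum_product]
      refine Finset.sum_congr rfl fun v _ => Finset.sum_congr rfl fun x _ => ?_
      have h1 : Real.sqrt (w v x) * Real.sqrt (w v x) = w v x := Real.mul_self_sqrt (hnn v x)
      have h2 : |g v - g x| * (g v + g x) = |g v * g v - g x * g x| := by
        rw [show g v + g x = |g v + g x| from (abs_of_nonneg (by positivity)).symm,
          ← abs_mul]
        congr 1
        ring
      calc w v x * |g v * g v - g x * g x|
          = (Real.sqrt (w v x) * Real.sqrt (w v x)) * (|g v - g x| * (g v + g x)) := by
            rw [h1, h2]
        _ = _ := by ring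
    rw [hprod]
    have hcs := Finset.sum_mul_sq_le_sq_mul_sq (univ ×ˢ univ)
      (fun p : V × V => Real.sqrt (w p.1 p.2) * |g p.1 - g p.2|)
      (fun p : V × V => Real.sqrt (w p.1 p.2) * (g p.1 + g p.2))
    have hsq1 : ∑ p ∈ univ ×ˢ univ, (Real.sqrt (w p.1 p.2) * |g p.1 - g p.2|)^2
        = 2*ν - 2*X := by
      have e1 : ∑ p ∈ univ ×ˢ univ, (Real.sqrt (w p.1 p.2) * |g p.1 - g p.2|)^2
          = ∑ v, ∑ x, w v x * (g v - g x)^2 := by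
        rw [Finset.sum_product]
        refine Finset.sum_congr rfl fun v _ => Finset.sum_congr rfl fun x _ => ?_
        rw [mul_pow, Real.sq_sqrt (hnn v x), sq_abs]
      rw [e1, sum_sq_expand w hsymm g, hν, hX]
    have hsq2 : ∑ p ∈ univ ×ˢ univ, (Real.sqrt (w p.1 p.2) * (g p.1 + g p.2))^2
        = 2*ν + 2*X := by
      have e1 : ∑ p ∈ univ ×ˢ univ, (Real.sqrt (w p.1 p.2) * (g p.1 + g p.2))^2
          = ∑ v, ∑ x, w v x * (g v + g x)^2 := by
        rw [Finset.sum_product]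
        refine Finset.sum_congr rfl fun v _ => Finset.sum_congr rfl fun x _ => ?_
        rw [mul_pow, Real.sq_sqrt (hnn v x)]
      rw [e1, sum_add_expand w hsymm g, hν, hX]
    rw [hsq1, hsq2] at hcs
    exact hcs
  -- Step C : coarea applied to q = g²
  have stepC : cheeger w * ν ≤ T := by
    set q : V → ℝ := fun v => g v * g v with hq
    have hfilter : (univ.filter fun v => 0 < q v) = P := by
      apply Finset.filter_congr
      intro v _
      simp only [hq, hP]
      constructor
      · intro h
        by_contra hc
        have : g v = 0 := hgnP v (by simp [hP, hc])
        rw [this] at h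
        simp at h
      · intro h
        have : g v = f v := max_eq_left (le_of_lt h)
        rw [this]
        exact mul_pos h h
    have hDq : ∑ v, wdeg w v * q v = ν := by
      rw [hν]
      unfold gB
      refine Finset.sum_congr rfl fun v _ => ?_
      simp only [hq]
      ring
    have hvol' : gvol w (univ.filter fun v => 0 < q v)
        ≤ gvol w (univ.filter fun v => 0 < q v)ᶜ := by rw [hfilter]; exact hvol
    have hco := coarea w hsymm hnn hN hD
      (((univ.filter fun v => 0 < q v)).image q).card q
      (fun v => mul_nonneg (hg0 v) (hg0 v)) le_rfl hvol'
    rw [hDq] at hco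
    exact hco
  -- combine everything
  have h0 : 0 ≤ cheeger w * ν := mul_nonneg (cheeger_nonneg w hnn hN) hν_pos.le
  have h2 : (cheeger w * ν)^2 ≤ T^2 := pow_le_pow_left₀ h0 stepC 2
  have hT2 : T^2 ≤ ν*ν - X*X := by nlinarith [stepB]
  have hfact : 0 ≤ (lam1*ν - (ν - X)) * ((ν + X) - lam1*ν) := by
    apply mul_nonneg
    · linarith [stepA]
    · nlinarith [hl1, hν_pos.le, hX0]
  have h4 : (ν - X)*(ν + X) ≤ lam1*(2-lam1)*(ν*ν) := by nlinarith [hfact]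
  have hνν : 0 < ν*ν := mul_pos hν_pos hν_pos
  have hfin : cheeger w^2 * (ν*ν) ≤ (lam1*(2-lam1))*(ν*ν) := by nlinarith [h2, hT2, h4]
  exact le_of_mul_le_mul_right hfin hνν

lemma gB_symm (w : V → V → ℝ) (f g : V → ℝ) : gB w f g = gB w g f :=
  Finset.sum_congr rfl fun v _ => by ring

lemma gB_zero_left (w : V → V → ℝ) (g : V → ℝ) : gB w 0 g = 0 := by
  unfold gB; simp

lemma gB_sum_left (w : V → V → ℝ) {n : ℕ} (s : Finset (Fin n)) (c : Fin n → ℝ)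
    (uu : Fin n → V → ℝ) (g : V → ℝ) :
    gB w (∑ i ∈ s, c i • uu i) g = ∑ i ∈ s, c i * gB w (uu i) g := by
  unfold gB
  have h1 : ∀ v : V, wdeg w v * (∑ i ∈ s, c i • uu i) v * g v
      = ∑ i ∈ s, c i * (wdeg w v * uu i v * g v) := by
    intro v
    simp only [Finset.sum_apply, Pi.smul_apply, smul_eq_mul]
    rw [Finset.mul_sum, Finset.sum_mul]
    exact Finset.sum_congr rfl fun i _ => by ring
  rw [Finset.sum_congr rfl fun v _ => h1 v, Finset.sum_comm]
  exact Finset.sum_congr rfl fun i _ => by rw [← Finset.mul_sum]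

lemma gB_expand (w : V → V → ℝ) {n : ℕ} (uu : Fin n → V → ℝ)
    (horth : ∀ i j, gB w (uu i) (uu j) = if i = j then 1 else 0)
    (aa bb : Fin n → ℝ) :
    gB w (∑ i, aa i • uu i) (∑ j, bb j • uu j) = ∑ i, aa i * bb i := by
  rw [gB_sum_left]
  refine Finset.sum_congr rfl fun i _ => ?_
  have h : gB w (uu i) (∑ j, bb j • uu j) = bb i := by
    rw [gB_symm, gB_sum_left]
    rw [Finset.sum_congr rfl fun j (_ : j ∈ univ) => by rw [horth j i]]
    simp [Finset.sum_ite_eq', mul_ite]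
  rw [h]

lemma exists_expansion (w : V → V → ℝ)
    (hN : 2 ≤ Fintype.card V)
    (u : Fin (Fintype.card V) → V → ℝ)
    (horth : ∀ i j, gB w (u i) (u j) = if i = j then 1 else 0)
    (f : V → ℝ) : ∃ c : Fin (Fintype.card V) → ℝ, f = ∑ i, c i • u i := by
  have hli : LinearIndependent ℝ u := by
    rw [linearIndependent_iff']
    intro s coef hsum i hi
    have h := congrArg (fun F => gB w F (u i)) hsum
    rw [gB_sum_left, gB_zero_left] at h
    rw [Finset.sum_congr rfl fun j (_ : j ∈ s) => by rw [horth j i]] at h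
    simp only [mul_ite, mul_one, mul_zero] at h
    rw [Finset.sum_ite_eq' s i coef] at h
    rw [if_pos hi] at h
    exact h
  have hnei : Nonempty (Fin (Fintype.card V)) := ⟨⟨0, by omega⟩⟩
  have hcard : Fintype.card (Fin (Fintype.card V)) = Module.finrank ℝ (V → ℝ) := by
    rw [Fintype.card_fin, Module.finrank_fintype_fun_eq_card]
  have hsp := hli.span_eq_top_of_card_eq_finrank hcard
  have hmem : f ∈ Submodule.span ℝ (Set.range u) := by
    rw [hsp]; trivial
  obtain ⟨c, hc⟩ := (Submodule.mem_span_range_iff_exists_fun ℝ).mp hmem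
  exact ⟨c, hc.symm⟩

lemma nlap_sum_smul (w : V → V → ℝ) (hD : ∀ v, wdeg w v ≠ 0)
    {n : ℕ} (u : Fin n → V → ℝ) (lam : Fin n → ℝ)
    (heig : ∀ i, nlap w (u i) = lam i • u i) (c : Fin n → ℝ) :
    nlap w (∑ i, c i • u i) = ∑ i, (c i * lam i) • u i := by
  funext v
  show nlap w (∑ i, c i • u i) v = _
  unfold nlap
  simp only [Finset.sum_apply, Pi.smul_apply, smul_eq_mul]
  have h1 : ∑ x, w v x * ∑ i, c i * u i x = ∑ i, c i * ∑ x, w v x * u i x := by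
    have : ∀ x, w v x * ∑ i, c i * u i x = ∑ i, c i * (w v x * u i x) := by
      intro x
      rw [Finset.mul_sum]
      exact Finset.sum_congr rfl fun i _ => by ring
    rw [Finset.sum_congr rfl fun x _ => this x, Finset.sum_comm]
    exact Finset.sum_congr rfl fun i _ => by rw [← Finset.mul_sum]
  rw [h1, Finset.sum_div, ← Finset.sum_sub_distrib]
  refine Finset.sum_congr rfl fun i _ => ?_
  have h2 : u i v - (∑ x, w v x * u i x) / wdeg w v = lam i * u i v := by
    have := congrFun (heig i) v
    simpa [nlap] using this
  rw [mul_div_assoc]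
  calc c i * u i v - c i * ((∑ x, w v x * u i x) / wdeg w v)
      = c i * (u i v - (∑ x, w v x * u i x) / wdeg w v) := by ring
    _ = c i * (lam i * u i v) := by rw [h2]
    _ = c i * lam i * u i v := by ring

lemma cheeger_le_one (w : V → V → ℝ) (hsymm : ∀ u v, w u v = w v u)
    (hnn : ∀ u v, 0 ≤ w u v)
    (hconn : ∀ u v : V, Relation.ReflTransGen (fun a b => 0 < w a b) u v)
    (hN : 2 ≤ Fintype.card V) : cheeger w ≤ 1 := by
  have hD := wdeg_pos w hnn hconn hN
  obtain ⟨x, y, hxy⟩ := Fintype.exists_pair_of_one_lt_card (by omega : 1 < Fintype.card V)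
  have h1 : ({x} : Finset V).Nonempty := Finset.singleton_nonempty x
  have h2 : ({x} : Finset V) ≠ univ := by
    intro h
    have : y ∈ ({x} : Finset V) := h ▸ mem_univ y
    exact hxy (Finset.mem_singleton.mp this).symm
  have hcv : gcut w {x} ≤ gvol w {x} := by
    unfold gcut gvol
    refine Finset.sum_le_sum fun a _ => ?_
    calc ∑ v ∈ ({x} : Finset V)ᶜ, w a v ≤ ∑ v, w a v :=
          Finset.sum_le_sum_of_subset_of_nonneg (Finset.subset_univ _)
            (fun v _ _ => hnn a v)
      _ = wdeg w a := rfl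
  have hcv' : gcut w {x} ≤ gvol w ({x} : Finset V)ᶜ := by
    unfold gcut gvol
    rw [Finset.sum_comm]
    refine Finset.sum_le_sum fun v _ => ?_
    calc ∑ a ∈ ({x} : Finset V), w a v ≤ ∑ a, w a v :=
          Finset.sum_le_sum_of_subset_of_nonneg (Finset.subset_univ _)
            (fun a _ _ => hnn a v)
      _ = wdeg w v := by
          refine Finset.sum_congr rfl fun a _ => hsymm a v
  have hSc : ({x} : Finset V)ᶜ.Nonempty := by
    refine ⟨y, Finset.mem_compl.mpr ?_⟩
    intro h
    exact hxy (Finset.mem_singleton.mp h).symm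
  have hmin : 0 < min (gvol w {x}) (gvol w ({x} : Finset V)ᶜ) :=
    lt_min (Finset.sum_pos (fun v _ => hD v) h1) (Finset.sum_pos (fun v _ => hD v) hSc)
  calc cheeger w ≤ gcut w {x} / min (gvol w {x}) (gvol w ({x} : Finset V)ᶜ) :=
        cheeger_le w hnn h1 h2
    _ ≤ 1 := by
        rw [div_le_one hmin]
        exact le_min hcv hcv'

end Cheeger6

open Cheeger6 Finset in
/-- Cheeger's inequality for graphs: for a finite connected weighted graph on `N ≥ 2` vertices,
the second smallest eigenvalue `λ₂` of the normalized Laplacian satisfies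
`1 − √(1 − h²) ≤ λ₂ ≤ 2h`; in particular `λ₂ ≥ h²/2`. The eigenvalues are encoded by a
monotone list `lam` together with an eigenbasis `u`, orthonormal with respect to the
degree-weighted inner product. -/
theorem stmt6 {V : Type*} [Fintype V] [DecidableEq V]
    (w : V → V → ℝ)
    (hsymm : ∀ u v, w u v = w v u)
    (hnn : ∀ u v, 0 ≤ w u v)
    (hloop : ∀ v, w v v = 0)
    (hconn : ∀ u v : V, Relation.ReflTransGen (fun a b => 0 < w a b) u v)
    (hN : 2 ≤ Fintype.card V)
    (lam : Fin (Fintype.card V) → ℝ) (hmono : Monotone lam)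
    (u : Fin (Fintype.card V) → V → ℝ)
    (heig : ∀ i, nlap w (u i) = lam i • u i)
    (horth : ∀ i j, (∑ v, wdeg w v * u i v * u j v) = if i = j then 1 else 0) :
    1 - Real.sqrt (1 - cheeger w ^ 2) ≤ lam ⟨1, by omega⟩ ∧
      lam ⟨1, by omega⟩ ≤ 2 * cheeger w ∧
      cheeger w ^ 2 / 2 ≤ lam ⟨1, by omega⟩ := by
  classical
  have hD : ∀ v, 0 < wdeg w v := wdeg_pos w hnn hconn hN
  have hDne : ∀ v, wdeg w v ≠ 0 := fun v => (hD v).ne'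
  have hgB : ∀ i j, gB w (u i) (u j) = if i = j then 1 else 0 := horth
  have hNe : Nonempty V := Fintype.card_pos_iff.mp (by omega)
  set i0 : Fin (Fintype.card V) := ⟨0, by omega⟩ with hi0
  set i1 : Fin (Fintype.card V) := ⟨1, by omega⟩ with hi1
  have hi01 : i0 ≤ i1 := by
    rw [hi0, hi1]; exact Fin.mk_le_mk.mpr (by omega)
  have hi0ne1 : i0 ≠ i1 := by
    rw [hi0, hi1]
    intro h
    have : (0:ℕ) = 1 := congrArg Fin.val h
    omega
  have lam_eq : ∀ i, lam i = gB w (nlap w (u i)) (u i) := by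
    intro i
    rw [heig i]
    unfold gB
    have h1 : ∀ v : V, wdeg w v * (lam i • u i) v * u i v
        = lam i * (wdeg w v * u i v * u i v) := by
      intro v; simp only [Pi.smul_apply, smul_eq_mul]; ring
    rw [Finset.sum_congr rfl fun v _ => h1 v, ← Finset.mul_sum, horth i i, if_pos rfl,
      mul_one]
  have lam_nonneg : ∀ i, 0 ≤ lam i := fun i =>
    lam_eq i ▸ quad_nonneg w hsymm hnn hDne (u i)
  -- positivity of lam i1
  have lam1_pos : 0 < lam i1 := by
    by_contra hc
    push_neg at hc
    have h10 : lam i1 = 0 := le_antisymm hc (lam_nonneg i1)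
    have h00 : lam i0 = 0 := le_antisymm (h10 ▸ hmono hi01) (lam_nonneg i0)
    have hconst : ∀ i, lam i = 0 → ∀ a b, u i a = u i b := by
      intro i hi a b
      apply const_of_quad_zero w hnn hconn (u i)
      have h1 := lam_eq i
      rw [hi, quad w hsymm hDne] at h1
      linarith
    obtain ⟨v₀⟩ := hNe
    have e : ∀ i : Fin (Fintype.card V), lam i = 0 → ∀ j : Fin (Fintype.card V),
        lam j = 0 →
        (∑ v, wdeg w v * u i v * u j v) = (∑ v, wdeg w v) * (u i v₀ * u j v₀) := by
      intro i hi j hj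
      have h1 : ∀ v : V, wdeg w v * u i v * u j v = wdeg w v * (u i v₀ * u j v₀) := by
        intro v
        rw [hconst i hi v v₀, hconst j hj v v₀]
        ring
      rw [Finset.sum_congr rfl fun v _ => h1 v, ← Finset.sum_mul]
    have h00' := horth i0 i0
    rw [e i0 h00 i0 h00, if_pos rfl] at h00'
    have h11' := horth i1 i1
    rw [e i1 h10 i1 h10, if_pos rfl] at h11'
    have h01' := horth i0 i1
    rw [e i0 h00 i1 h10, if_neg hi0ne1] at h01'
    have hcontr : ((∑ v, wdeg w v) * (u i0 v₀ * u i1 v₀))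
        * ((∑ v, wdeg w v) * (u i0 v₀ * u i1 v₀))
        = ((∑ v, wdeg w v) * (u i0 v₀ * u i0 v₀))
        * ((∑ v, wdeg w v) * (u i1 v₀ * u i1 v₀)) := by ring
    rw [h01', h00', h11'] at hcontr
    norm_num at hcontr
  -- f := u i1
  set f : V → ℝ := u i1 with hf
  have heigf : ∀ v, nlap w f v = lam i1 * f v := by
    intro v
    have := congrFun (heig i1) v
    simpa using this
  have hsum0 : ∑ v, wdeg w v * f v = 0 := by
    have h1 := sum_wdeg_nlap w hsymm hDne f
    have h2 : ∑ v, wdeg w v * nlap w f v = lam i1 * ∑ v, wdeg w v * f v := by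
      rw [Finset.mul_sum]
      exact Finset.sum_congr rfl fun v _ => by rw [heigf v]; ring
    rw [h2] at h1
    exact (mul_eq_zero.mp h1).resolve_left lam1_pos.ne'
  have hBff : gB w f f = 1 := by
    have := hgB i1 i1
    rw [if_pos rfl] at this
    exact this
  have hPplus : (univ.filter fun v => 0 < f v).Nonempty := by
    rw [Finset.filter_nonempty_iff]
    by_contra hcon
    push_neg at hcon
    have hle : ∀ v, f v ≤ 0 := fun v => hcon v (mem_univ v)
    have hz : ∑ v, wdeg w v * (-f v) = 0 := by
      have : ∀ v : V, wdeg w v * (-f v) = -(wdeg w v * f v) := fun v => by ring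
      rw [Finset.sum_congr rfl fun v _ => this v, Finset.sum_neg_distrib, hsum0, neg_zero]
    have hf0 : ∀ v, f v = 0 := by
      intro v
      have hterm := (Finset.sum_eq_zero_iff_of_nonneg
        (fun v _ => mul_nonneg (hD v).le (by linarith [hle v]))).mp hz v (mem_univ v)
      rcases mul_eq_zero.mp hterm with h | h
      · exact absurd h (hDne v)
      · linarith
    have : gB w f f = 0 := by
      unfold gB
      exact Finset.sum_eq_zero fun v _ => by rw [hf0 v]; ring
    rw [this] at hBff
    norm_num at hBff
  have hPminus : (univ.filter fun v => f v < 0).Nonempty := by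
    rw [Finset.filter_nonempty_iff]
    by_contra hcon
    push_neg at hcon
    have hle : ∀ v, 0 ≤ f v := fun v => hcon v (mem_univ v)
    have hf0 : ∀ v, f v = 0 := by
      intro v
      have hterm := (Finset.sum_eq_zero_iff_of_nonneg
        (fun v _ => mul_nonneg (hD v).le (hle v))).mp hsum0 v (mem_univ v)
      rcases mul_eq_zero.mp hterm with h | h
      · exact absurd h (hDne v)
      · exact h
    have : gB w f f = 0 := by
      unfold gB
      exact Finset.sum_eq_zero fun v _ => by rw [hf0 v]; ring
    rw [this] at hBff
    norm_num at hBff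
  have hsubpm : (univ.filter fun v => f v < 0) ⊆ (univ.filter fun v => 0 < f v)ᶜ := by
    intro v hv
    rw [Finset.mem_compl, Finset.mem_filter]
    push_neg
    intro _
    linarith [(Finset.mem_filter.mp hv).2]
  have hsubmp : (univ.filter fun v => 0 < f v) ⊆ (univ.filter fun v => f v < 0)ᶜ := by
    intro v hv
    rw [Finset.mem_compl, Finset.mem_filter]
    push_neg
    intro _
    linarith [(Finset.mem_filter.mp hv).2]
  have hkey : lam i1 ≤ 1 → cheeger w ^ 2 ≤ lam i1 * (2 - lam i1) := by
    intro hl1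
    rcases le_total (gvol w (univ.filter fun v => 0 < f v))
        (gvol w (univ.filter fun v => f v < 0)) with hcase | hcase
    · apply key w hsymm hnn hN hD _ hl1 f heigf hPplus
      calc gvol w (univ.filter fun v => 0 < f v)
          ≤ gvol w (univ.filter fun v => f v < 0) := hcase
        _ ≤ gvol w (univ.filter fun v => 0 < f v)ᶜ := gvol_mono w hnn hsubpm
    · have heigf' : ∀ v, nlap w (fun x => -f x) v = lam i1 * (fun x => -f x) v := by
        intro v
        show nlap w (fun x => -f x) v = lam i1 * (-f v)
        unfold nlap
        have h1 : ∑ x, w v x * -f x = -∑ x, w v x * f x := by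
          rw [← Finset.sum_neg_distrib]
          exact Finset.sum_congr rfl fun x _ => by ring
        rw [h1, neg_div]
        have h2 := heigf v
        unfold nlap at h2
        linarith [h2]
      have hfilter' : (univ.filter fun v => 0 < (fun x => -f x) v)
          = (univ.filter fun v => f v < 0) := by
        apply Finset.filter_congr
        intro v _
        simp [neg_pos]
      apply key w hsymm hnn hN hD _ hl1 (fun x => -f x) heigf'
      · rw [hfilter']; exact hPminus
      · rw [hfilter']
        calc gvol w (univ.filter fun v => f v < 0)
            ≤ gvol w (univ.filter fun v => 0 < f v) := hcase
          _ ≤ gvol w (univ.filter fun v => f v < 0)ᶜ := gvol_mono w hnn hsubmp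
  have hch0 : 0 ≤ cheeger w := cheeger_nonneg w hnn hN
  -- goal 1
  have goal1 : 1 - Real.sqrt (1 - cheeger w ^ 2) ≤ lam i1 := by
    rcases le_or_gt (lam i1) 1 with hl1 | hl1
    · have hk := hkey hl1
      have h2 : (1 - lam i1)^2 ≤ 1 - cheeger w ^ 2 := by nlinarith [hk]
      have h3 : 1 - lam i1 ≤ Real.sqrt (1 - cheeger w ^ 2) := by
        calc 1 - lam i1 ≤ |1 - lam i1| := le_abs_self _
          _ = Real.sqrt ((1 - lam i1)^2) := (Real.sqrt_sq_eq_abs _).symm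
          _ ≤ _ := Real.sqrt_le_sqrt h2
      linarith
    · have := Real.sqrt_nonneg (1 - cheeger w ^ 2)
      linarith
  -- goal 3
  have goal3 : cheeger w ^ 2 / 2 ≤ lam i1 := by
    rcases le_or_gt (lam i1) 1 with hl1 | hl1
    · have hk := hkey hl1
      nlinarith [sq_nonneg (lam i1)]
    · have hle1 : cheeger w ≤ 1 := cheeger_le_one w hsymm hnn hconn hN
      nlinarith [hch0, hle1]
  -- goal 2 : upper bound
  have goal2 : lam i1 ≤ 2 * cheeger w := by
    obtain ⟨S₀, hS₀ne, hS₀nu, hS₀⟩ := cheeger_attained w hN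
    set a := gvol w S₀ with haeq
    set b := gvol w S₀ᶜ with hbeq
    have hScne : S₀ᶜ.Nonempty := by
      rw [Finset.nonempty_iff_ne_empty]
      intro h
      exact hS₀nu (by rwa [Finset.compl_eq_empty_iff] at h)
    have ha : 0 < a := Finset.sum_pos (fun v _ => hD v) hS₀ne
    have hb : 0 < b := Finset.sum_pos (fun v _ => hD v) hScne
    set fS : V → ℝ := fun v => if v ∈ S₀ then 1/a else -(1/b) with hfS
    have hsumfS : ∑ v, wdeg w v * fS v = 0 := by
      rw [← Finset.sum_add_sum_compl S₀]
      have h1 : ∑ v ∈ S₀, wdeg w v * fS v = 1 := by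
        rw [Finset.sum_congr rfl (fun v hv => by
          rw [show fS v = 1/a from by rw [hfS]; exact if_pos hv])]
        rw [← Finset.sum_mul]
        rw [show (∑ v ∈ S₀, wdeg w v) = a from rfl]
        field_simp
      have h2 : ∑ v ∈ S₀ᶜ, wdeg w v * fS v = -1 := by
        rw [Finset.sum_congr rfl (fun v hv => by
          rw [show fS v = -(1/b) from by
            rw [hfS]; exact if_neg (Finset.mem_compl.mp hv)])]
        have : ∀ v : V, wdeg w v * -(1/b) = -(wdeg w v * (1/b)) := fun v => by ring
        rw [Finset.sum_congr rfl fun v _ => this v, Finset.sum_neg_distrib, ← Finset.sum_mul]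
        rw [show (∑ v ∈ S₀ᶜ, wdeg w v) = b from rfl]
        field_simp
      rw [h1, h2]
      ring
    obtain ⟨c, hc⟩ := exists_expansion w hN u hgB (fun _ => (1:ℝ))
    obtain ⟨d, hd⟩ := exists_expansion w hN u hgB fS
    have hnlapconst : nlap w (fun _ => (1:ℝ)) = fun _ => 0 := by
      funext v
      unfold nlap
      have h1 : ∑ x, w v x * (1:ℝ) = wdeg w v := by
        rw [wdeg]
        exact Finset.sum_congr rfl fun x _ => by ring
      rw [h1, div_self (hDne v), sub_self]
    have hQ1 : ∑ i, (c i * lam i) * c i = 0 := by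
      have h1 : gB w (nlap w (fun _ => (1:ℝ))) (fun _ => (1:ℝ)) = 0 := by
        rw [hnlapconst]
        unfold gB
        simp
      rw [show nlap w (fun _ => (1:ℝ)) = ∑ i, (c i * lam i) • u i from by
        rw [hc]; exact nlap_sum_smul w hDne u lam heig c] at h1
      rw [show (fun _ => (1:ℝ)) = ∑ i, c i • u i from hc] at h1
      rw [gB_expand w u hgB] at h1
      exact h1
    have hc_zero : ∀ i, i ≠ i0 → c i = 0 := by
      intro i hi
      have hterm : ∀ j ∈ (univ : Finset (Fin (Fintype.card V))),
          0 ≤ (c j * lam j) * c j := by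
        intro j _
        have : (c j * lam j) * c j = lam j * (c j * c j) := by ring
        rw [this]
        exact mul_nonneg (lam_nonneg j) (mul_self_nonneg _)
      have h1 := (Finset.sum_eq_zero_iff_of_nonneg hterm).mp hQ1 i (mem_univ i)
      have hi1le : i1 ≤ i := by
        rw [hi1]
        have : i.val ≠ 0 := by
          intro h
          exact hi (by rw [hi0]; exact Fin.ext h)
        exact Fin.mk_le_mk.mpr (by omega) |>.trans_eq rfl
      have hlami : 0 < lam i := lt_of_lt_of_le lam1_pos (hmono hi1le)
      have h2 : lam i * (c i * c i) = 0 := by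
        rw [show lam i * (c i * c i) = (c i * lam i) * c i from by ring, h1]
      have h3 : c i * c i = 0 := by
        rcases mul_eq_zero.mp h2 with h | h
        · exact absurd h hlami.ne'
        · exact h
      exact mul_self_eq_zero.mp h3
    have hBf1 : gB w fS (fun _ => (1:ℝ)) = 0 := by
      unfold gB
      rw [Finset.sum_congr rfl fun v (_ : v ∈ univ) =>
        (by ring : wdeg w v * fS v * (fun _ => (1:ℝ)) v = wdeg w v * fS v)]
      exact hsumfS
    have hdc : gB w fS (fun _ => (1:ℝ)) = d i0 * c i0 := by
      rw [hd, hc, gB_expand w u hgB]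
      rw [Finset.sum_eq_single i0]
      · intro j _ hj
        rw [hc_zero j hj]
        ring
      · intro h
        exact absurd (mem_univ i0) h
    have hVol_pos : 0 < ∑ v, wdeg w v :=
      Finset.sum_pos (fun v _ => hD v) univ_nonempty
    have hc0sq : c i0 * c i0 = ∑ v, wdeg w v := by
      have h1 : gB w (fun _ => (1:ℝ)) (fun _ => (1:ℝ)) = ∑ v, wdeg w v := by
        unfold gB
        exact Finset.sum_congr rfl fun v _ => by ring
      have h2 : gB w (fun _ => (1:ℝ)) (fun _ => (1:ℝ)) = ∑ i, c i * c i := by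
        rw [show (fun _ => (1:ℝ)) = ∑ i, c i • u i from hc, gB_expand w u hgB]
      have h3 : ∑ i, c i * c i = c i0 * c i0 := by
        rw [Finset.sum_eq_single i0]
        · intro j _ hj
          rw [hc_zero j hj]; ring
        · intro h; exact absurd (mem_univ i0) h
      rw [← h3, ← h2, h1]
    have hc0ne : c i0 ≠ 0 := by
      intro h
      rw [h] at hc0sq
      simp at hc0sq
      linarith [hVol_pos, hc0sq]
    have hd0 : d i0 = 0 := by
      rw [hBf1] at hdc
      rcases mul_eq_zero.mp hdc.symm with h | h
      · exact h
      · exact absurd h hc0ne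
    have hQf : gB w (nlap w fS) fS = ∑ i, (d i * lam i) * d i := by
      rw [show nlap w fS = ∑ i, (d i * lam i) • u i from by
        rw [hd]; exact nlap_sum_smul w hDne u lam heig d]
      rw [show fS = ∑ i, d i • u i from hd]
      · exact gB_expand w u hgB _ _
    have hBfSfS : gB w fS fS = ∑ i, d i * d i := by
      rw [show fS = ∑ i, d i • u i from hd]
      exact gB_expand w u hgB _ _
    have hray : lam i1 * gB w fS fS ≤ gB w (nlap w fS) fS := by
      rw [hQf, hBfSfS, Finset.mul_sum]
      apply Finset.sum_le_sum
      intro i _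
      by_cases hi : i = i0
      · rw [hi, hd0]; simp
      · have hi1le : i1 ≤ i := by
          have : i.val ≠ 0 := by
            intro h
            exact hi (by rw [hi0]; exact Fin.ext h)
          rw [hi1]
          exact Fin.mk_le_mk.mpr (by omega)
        have h1 : lam i1 ≤ lam i := hmono hi1le
        have h2 : 0 ≤ d i * d i := mul_self_nonneg _
        calc lam i1 * (d i * d i) ≤ lam i * (d i * d i) :=
              mul_le_mul_of_nonneg_right h1 h2
          _ = (d i * lam i) * d i := by ring
    set s := 1/a + 1/b with hs
    have hBval : gB w fS fS = s := by
      unfold gB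
      rw [← Finset.sum_add_sum_compl S₀]
      have h1 : ∑ v ∈ S₀, wdeg w v * fS v * fS v = 1/a := by
        rw [Finset.sum_congr rfl (fun v hv => by
          rw [show fS v = 1/a from by rw [hfS]; exact if_pos hv])]
        rw [show (∑ v ∈ S₀, wdeg w v * (1/a) * (1/a))
            = (∑ v ∈ S₀, wdeg w v) * ((1/a) * (1/a)) from by
          rw [Finset.sum_mul]
          exact Finset.sum_congr rfl fun v _ => by ring]
        rw [show (∑ v ∈ S₀, wdeg w v) = a from rfl]
        field_simp
      have h2 : ∑ v ∈ S₀ᶜ, wdeg w v * fS v * fS v = 1/b := by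
        rw [Finset.sum_congr rfl (fun v hv => by
          rw [show fS v = -(1/b) from by
            rw [hfS]; exact if_neg (Finset.mem_compl.mp hv)])]
        rw [show (∑ v ∈ S₀ᶜ, wdeg w v * -(1/b) * -(1/b))
            = (∑ v ∈ S₀ᶜ, wdeg w v) * ((1/b) * (1/b)) from by
          rw [Finset.sum_mul]
          exact Finset.sum_congr rfl fun v _ => by ring]
        rw [show (∑ v ∈ S₀ᶜ, wdeg w v) = b from rfl]
        field_simp
      rw [h1, h2, hs]
    have hQval : gB w (nlap w fS) fS = gcut w S₀ * (s * s) := by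
      rw [quad w hsymm hDne]
      have hpt : ∀ v x : V, (fS v - fS x)^2
          = (s*s) * |(if v ∈ S₀ then (1:ℝ) else 0) - (if x ∈ S₀ then 1 else 0)| := by
        intro v x
        by_cases hv : v ∈ S₀ <;> by_cases hx : x ∈ S₀ <;>
          simp only [hfS, hv, hx, if_pos, if_neg, if_true, if_false, hs]
        · simp
        · rw [show (1/a - -(1/b)) = (1/a + 1/b) from by ring]
          rw [show |(1:ℝ) - 0| = 1 from by norm_num]
          ring
        · rw [show (-(1/b) - 1/a) = -(1/a + 1/b) from by ring]
          rw [show |(0:ℝ) - 1| = 1 from by norm_num]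
          ring
        · simp
      rw [Finset.sum_congr rfl fun v (_ : v ∈ univ) => Finset.sum_congr rfl
        fun x (_ : x ∈ univ) => by rw [hpt v x]]
      rw [show (∑ v, ∑ x, w v x * ((s*s) *
          |(if v ∈ S₀ then (1:ℝ) else 0) - (if x ∈ S₀ then 1 else 0)|))
          = (s*s) * ∑ v, ∑ x, w v x *
          |(if v ∈ S₀ then (1:ℝ) else 0) - (if x ∈ S₀ then 1 else 0)| from by
        rw [Finset.mul_sum]
        refine Finset.sum_congr rfl fun v _ => ?_
        rw [Finset.mul_sum]
        exact Finset.sum_congr rfl fun x _ => by ring]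
      rw [sum_abs_indicator w hsymm S₀]
      ring
    have hs_pos : 0 < s := by rw [hs]; positivity
    have hstep : lam i1 ≤ gcut w S₀ * s := by
      have h1 := hray
      rw [hBval, hQval] at h1
      have h2 : lam i1 * s ≤ (gcut w S₀ * s) * s := by
        calc lam i1 * s ≤ gcut w S₀ * (s * s) := h1
          _ = (gcut w S₀ * s) * s := by ring
      exact le_of_mul_le_mul_right h2 hs_pos
    have hmin_pos : 0 < min a b := lt_min ha hb
    have hcut0 : 0 ≤ gcut w S₀ := gcut_nonneg w hnn S₀
    have h1a : gcut w S₀ * (1/a) ≤ gcut w S₀ * (1/(min a b)) :=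
      mul_le_mul_of_nonneg_left
        (one_div_le_one_div_of_le hmin_pos (min_le_left a b)) hcut0
    have h1b : gcut w S₀ * (1/b) ≤ gcut w S₀ * (1/(min a b)) :=
      mul_le_mul_of_nonneg_left
        (one_div_le_one_div_of_le hmin_pos (min_le_right a b)) hcut0
    have hsplit : gcut w S₀ * s = gcut w S₀ * (1/a) + gcut w S₀ * (1/b) := by
      rw [hs]; ring
    have hcheq : 2 * cheeger w = gcut w S₀ * (1/(min a b)) + gcut w S₀ * (1/(min a b)) := by
      rw [hS₀]
      rw [div_eq_mul_one_div]
      ring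
    calc lam i1 ≤ gcut w S₀ * s := hstep
      _ = gcut w S₀ * (1/a) + gcut w S₀ * (1/b) := hsplit
      _ ≤ gcut w S₀ * (1/(min a b)) + gcut w S₀ * (1/(min a b)) := add_le_add h1a h1b
      _ = 2 * cheeger w := hcheq.symm
  exact ⟨goal1, goal2, goal3⟩
end

section
/- Let Γ be a finite connected unweighted simple graph on N ≥ 2 vertices, with dual Cheeger constant h̄ and normalized Laplacian eigenvalues 0 = λ₁ ≤ λ₂ ≤ ⋯ ≤ λ_N. Then 2h̄ ≤ λ_N ≤ 1 + √(1 − (1 − h̄)²). -/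
open scoped BigOperators

/-- The normalized Laplacian of a finite simple graph:
`Δf(v) = f(v) − (1/deg v) Σ_{u∼v} f(u)`. -/
noncomputable def nlapG {V : Type*} [Fintype V] (G : SimpleGraph V) [DecidableRel G.Adj]
    (f : V → ℝ) : V → ℝ :=
  fun v => f v - (∑ u ∈ G.neighborFinset v, f u) / (G.degree v : ℝ)

/-- The dual Cheeger constant: `h̄ = max` over pairs of disjoint nonempty subsets `V₁, V₂`
of `2|E(V₁,V₂)| / (vol V₁ + vol V₂)`. -/
noncomputable def dualCheeger {V : Type*} [Fintype V] (G : SimpleGraph V)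
    [DecidableRel G.Adj] : ℝ :=
  sSup { r : ℝ | ∃ V₁ V₂ : Finset V, V₁.Nonempty ∧ V₂.Nonempty ∧ Disjoint V₁ V₂ ∧
    r = 2 * (∑ u ∈ V₁, ∑ v ∈ V₂, if G.Adj u v then (1 : ℝ) else 0) /
      ((∑ v ∈ V₁, (G.degree v : ℝ)) + ∑ v ∈ V₂, (G.degree v : ℝ)) }

/-!
Lower bound: expanding in the eigenbasis, `λ_N` bounds the Rayleigh quotient `(Δg, g) / (g, g)`,
and the test function `g = 1_{V₁} - 1_{V₂}` has quotient at least
`4 |E(V₁, V₂)| / (vol V₁ + vol V₂)`.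

Upper bound: let `f` be a normalized eigenfunction with eigenvalue `λ > 1`. Summing over darts,
`∑ (f x + f y)² = 2 (2 - λ)` is small, so most of the mass of `f` sits on edges where it changes
sign; Cauchy–Schwarz and AM–GM give `1 - M ≤ √(λ (2 - λ))` for
`M = ∑_{f x f y < 0} min (f x², f y²)`. Sweeping the pairs of level sets `{f > 0, f² ≥ t}`,
`{f < 0, f² ≥ t}` over all thresholds `t` and averaging finds a pair of cut ratio at least `M`,
so `1 - h̄ ≤ √(λ (2 - λ))`, which rearranges to `(λ - 1)² ≤ 1 - (1 - h̄)²`.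
-/

open Finset

lemma Real.sqrt_mul_add_le_sqrt_add_mul_add {a b s : ℝ} (ha : 0 ≤ a) (hb : 0 ≤ b) (hs : 0 ≤ s) :
    √(a * b) + s ≤ √((a + s) * (b + s)) := by
  apply Real.le_sqrt_of_sq_le
  have hsq := Real.sq_sqrt (mul_nonneg ha hb)
  have hamgm : 2 * √(a * b) ≤ a + b := by nlinarith [Real.sqrt_nonneg (a * b), sq_nonneg (a - b)]
  nlinarith

lemma add_sqrt_mul_le_two_mul_sqrt {s A B ε : ℝ} (hs : 0 ≤ s) (hA : 0 ≤ A) (hB : 0 ≤ B)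
    (hsum : A + B + 2 * s = 4) (hAs : A + s ≤ 2 * ε) (hε : ε ≤ 1) :
    s + √(A * B) ≤ 2 * √(ε * (2 - ε)) := by
  have htwo : 2 * √(ε * (2 - ε)) = √((2 * ε) * (4 - 2 * ε)) := by
    rw [show (2 * ε) * (4 - 2 * ε) = 2 ^ 2 * (ε * (2 - ε)) by ring,
      Real.sqrt_mul (by norm_num) (ε * (2 - ε)), Real.sqrt_sq (by norm_num)]
  calc s + √(A * B) ≤ √((A + s) * (B + s)) := by
        rw [add_comm]; exact Real.sqrt_mul_add_le_sqrt_add_mul_add hA hB hs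
    _ ≤ √((2 * ε) * (4 - 2 * ε)) := by
        apply Real.sqrt_le_sqrt
        nlinarith
    _ = 2 * √(ε * (2 - ε)) := htwo.symm

lemma two_mul_min_sq (x y : ℝ) : 2 * min (x ^ 2) (y ^ 2) = x ^ 2 + y ^ 2 - |x - y| * |x + y| := by
  rw [← abs_mul, show (x - y) * (x + y) = x ^ 2 - y ^ 2 by ring]
  rcases le_total (x ^ 2) (y ^ 2) with h | h
  · rw [min_eq_left h, abs_of_nonpos (by linarith)]; ring
  · rw [min_eq_right h, abs_of_nonneg (by linarith)]; ring

/-- On the terms with `x y < 0` write `2 min (x², y²) = x² + y² - |x - y| |x + y|` and apply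
Cauchy–Schwarz; on the others `x² + y² ≤ (x + y)²`. -/
lemma one_sub_sum_min_sq_le {ι : Type*} (S : Finset ι) (x y : ι → ℝ) {ε : ℝ}
    (hnorm : ∑ i ∈ S, (x i ^ 2 + y i ^ 2) = 2) (hplus : ∑ i ∈ S, (x i + y i) ^ 2 = 2 * ε)
    (hε : ε ≤ 1) :
    1 - ∑ i ∈ S with x i * y i < 0, min (x i ^ 2) (y i ^ 2) ≤ √(ε * (2 - ε)) := by
  set P := S.filter (fun i => x i * y i < 0)
  set s := ∑ i ∈ S with ¬ x i * y i < 0, (x i ^ 2 + y i ^ 2)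
  set A := ∑ i ∈ P, (x i + y i) ^ 2
  set B := ∑ i ∈ P, (x i - y i) ^ 2
  have hsplit : ∑ i ∈ P, (x i ^ 2 + y i ^ 2) + s = 2 := by
    rw [sum_filter_add_sum_filter_not, hnorm]
  have hmin : 2 * ∑ i ∈ P, min (x i ^ 2) (y i ^ 2)
      = ∑ i ∈ P, (x i ^ 2 + y i ^ 2) - ∑ i ∈ P, |x i - y i| * |x i + y i| := by
    rw [mul_sum, ← sum_sub_distrib]
    exact sum_congr rfl fun i _ => two_mul_min_sq (x i) (y i)
  have hcs : ∑ i ∈ P, |x i - y i| * |x i + y i| ≤ √(A * B) := by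
    rw [mul_comm A, Real.sqrt_mul (sum_nonneg fun _ _ => sq_nonneg _)]
    simpa only [sq_abs] using Real.sum_mul_le_sqrt_mul_sqrt P (fun i => |x i - y i|)
      (fun i => |x i + y i|)
  have hAB : A + B = 2 * ∑ i ∈ P, (x i ^ 2 + y i ^ 2) := by
    rw [← sum_add_distrib, mul_sum]
    exact sum_congr rfl fun i _ => by ring
  have hs_le : s ≤ ∑ i ∈ S with ¬ x i * y i < 0, (x i + y i) ^ 2 :=
    sum_le_sum fun i hi => by nlinarith [(mem_filter.mp hi).2]
  have hAs : A + s ≤ 2 * ε := by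
    rw [← hplus, ← sum_filter_add_sum_filter_not S (fun i => x i * y i < 0)]
    exact add_le_add_right hs_le A
  have hkey := add_sqrt_mul_le_two_mul_sqrt (B := B) (sum_nonneg fun i _ => by positivity)
    (sum_nonneg fun i _ => sq_nonneg _) (sum_nonneg fun i _ => sq_nonneg _) (by linarith) hAs hε
  linarith

/-- For `ts ⊆ (0, ∞)` with elements `t₁ < ⋯ < tₖ`, `layerWidth ts tⱼ = tⱼ - tⱼ₋₁`,
where `t₀ = 0`. -/
noncomputable def layerWidth (ts : Finset ℝ) (t : ℝ) : ℝ :=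
  t - WithBot.unbotD 0 (ts.filter (· < t)).max

lemma sum_layerWidth (ts : Finset ℝ) : ∑ t ∈ ts, layerWidth ts t = WithBot.unbotD 0 ts.max := by
  induction ts using Finset.induction_on_max with
  | empty => simp
  | insert a s hlt ih =>
    have hbelow : (insert a s).filter (· < a) = s := by
      rw [filter_insert, if_neg (lt_irrefl a), filter_true_of_mem hlt]
    have hrest : ∀ t ∈ s, layerWidth (insert a s) t = layerWidth s t := fun t ht => by
      rw [layerWidth, layerWidth, filter_insert, if_neg (not_lt.mpr (hlt t ht).le)]
    have ha : a ∉ s := fun h => lt_irrefl a (hlt a h)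
    rw [sum_insert ha, sum_congr rfl hrest, ih, layerWidth, hbelow, max_insert,
      max_eq_left (Finset.max_le fun x hx => WithBot.coe_le_coe.mpr (hlt x hx).le)]
    simp

lemma layerWidth_pos {ts : Finset ℝ} (hts : ∀ t ∈ ts, 0 < t) {t : ℝ} (ht : t ∈ ts) :
    0 < layerWidth ts t := by
  rw [layerWidth, sub_pos]
  rcases (ts.filter (· < t)).eq_empty_or_nonempty with h | h
  · simpa [h] using hts t ht
  · rw [← coe_max' h, WithBot.unbotD_coe]
    exact (mem_filter.mp (max'_mem _ h)).2

lemma sum_layerWidth_filter_le {ts : Finset ℝ} (hts : ∀ t ∈ ts, 0 < t) {x : ℝ}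
    (hx : x ∈ insert 0 ts) :
    ∑ t ∈ ts with t ≤ x, layerWidth ts t = x := by
  rcases mem_insert.mp hx with rfl | hx
  · exact sum_eq_zero fun t ht =>
      absurd (mem_filter.mp ht).2 (not_le.mpr (hts t (mem_filter.mp ht).1))
  · have hwidth : ∀ t ∈ ts.filter (· ≤ x), layerWidth ts t = layerWidth (ts.filter (· ≤ x)) t :=
      fun t ht => by
        rw [layerWidth, layerWidth, filter_filter]
        congr 3
        refine filter_congr fun y _ => ⟨fun h => ⟨?_, h⟩, fun h => h.2⟩
        linarith [(mem_filter.mp ht).2]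
    have hmax : (ts.filter (· ≤ x)).max = x :=
      le_antisymm (Finset.max_le fun y hy => WithBot.coe_le_coe.mpr (mem_filter.mp hy).2)
        (le_max (mem_filter.mpr ⟨hx, le_rfl⟩))
    rw [sum_congr rfl hwidth, sum_layerWidth, hmax, WithBot.unbotD_coe]

lemma sum_layerWidth_mul_sum_ite {ι : Type*} {ts : Finset ℝ} (hts : ∀ t ∈ ts, 0 < t)
    (s : Finset ι) (a x : ι → ℝ) (hx : ∀ i ∈ s, x i ∈ insert 0 ts) :
    ∑ t ∈ ts, layerWidth ts t * ∑ i ∈ s, (if t ≤ x i then a i else 0) = ∑ i ∈ s, a i * x i := by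
  simp only [mul_sum, mul_ite, mul_zero]
  rw [sum_comm]
  refine sum_congr rfl fun i hi => ?_
  rw [← sum_filter, ← sum_mul, sum_layerWidth_filter_le hts (hx i hi), mul_comm]

section LevelSets

variable {V : Type*} [Fintype V]

noncomputable def posLevelSet (f : V → ℝ) (t : ℝ) : Finset V :=
  univ.filter fun v => 0 < f v ∧ t ≤ f v ^ 2

noncomputable def sqLevels (f : V → ℝ) : Finset ℝ :=
  (univ.image fun v => f v ^ 2).filter (0 < ·)

lemma pos_of_mem_sqLevels {f : V → ℝ} {t : ℝ} (ht : t ∈ sqLevels f) :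
    0 < t :=
  (mem_filter.mp ht).2

lemma sq_mem_insert_zero_sqLevels (f : V → ℝ) (v : V) :
    f v ^ 2 ∈ insert 0 (sqLevels f) := by
  rcases (sq_nonneg (f v)).eq_or_lt with h | h
  · exact h ▸ mem_insert_self 0 _
  · exact mem_insert_of_mem (mem_filter.mpr ⟨mem_image_of_mem _ (mem_univ v), h⟩)

end LevelSets

namespace SimpleGraph

variable {V : Type*} (G : SimpleGraph V) [DecidableRel G.Adj]

def numEdgesBetween (s t : Finset V) : ℝ := ∑ a ∈ s, ∑ b ∈ t, if G.Adj a b then (1 : ℝ) else 0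

lemma numEdgesBetween_comm (s t : Finset V) : G.numEdgesBetween s t = G.numEdgesBetween t s := by
  rw [numEdgesBetween, numEdgesBetween, sum_comm]
  simp_rw [G.adj_comm]

variable [Fintype V]

def vol (s : Finset V) : ℝ := ∑ v ∈ s, (G.degree v : ℝ)

lemma vol_nonneg (s : Finset V) : 0 ≤ G.vol s := sum_nonneg fun _ _ => by positivity

noncomputable def cutRatio (s t : Finset V) : ℝ := 2 * G.numEdgesBetween s t / (G.vol s + G.vol t)

def degInner (f g : V → ℝ) : ℝ := ∑ v, (G.degree v : ℝ) * f v * g v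

lemma sum_darts_eq_sum_adj (F : V → V → ℝ) :
    ∑ d : G.Dart, F d.fst d.snd = ∑ a, ∑ b, if G.Adj a b then F a b else 0 := by
  let e : G.Dart ≃ {p : V × V // G.Adj p.1 p.2} :=
    ⟨fun d => ⟨d.toProd, d.adj⟩, fun p => ⟨p.1, p.2⟩, fun _ => rfl, fun _ => rfl⟩
  rw [← Fintype.sum_prod_type', ← sum_filter, sum_subtype _ (fun _ => mem_filter_univ _)]
  exact Fintype.sum_equiv e _ _ fun _ => rfl

lemma sum_darts_swap (F : V → V → ℝ) :
    ∑ d : G.Dart, F d.snd d.fst = ∑ d : G.Dart, F d.fst d.snd :=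
  Fintype.sum_equiv (Dart.symm_involutive.toPerm _) _ _ fun _ => rfl

lemma sum_adj_eq_degree (a : V) : ∑ b, (if G.Adj a b then (1 : ℝ) else 0) = G.degree a := by
  rw [sum_boole, ← card_neighborFinset_eq_degree, neighborFinset_eq_filter]

lemma sum_darts_fst (F : V → ℝ) : ∑ d : G.Dart, F d.fst = ∑ v, (G.degree v : ℝ) * F v := by
  rw [G.sum_darts_eq_sum_adj fun a _ => F a]
  refine sum_congr rfl fun a _ => ?_
  rw [← G.sum_adj_eq_degree a, sum_mul]
  exact sum_congr rfl fun b _ => by split_ifs <;> simp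

lemma sum_darts_snd (F : V → ℝ) : ∑ d : G.Dart, F d.snd = ∑ v, (G.degree v : ℝ) * F v :=
  (G.sum_darts_swap fun a _ => F a).trans (G.sum_darts_fst F)

lemma numEdgesBetween_eq_sum_darts [DecidableEq V] (s t : Finset V) :
    G.numEdgesBetween s t = ∑ d : G.Dart, if d.fst ∈ s ∧ d.snd ∈ t then (1 : ℝ) else 0 := by
  rw [G.sum_darts_eq_sum_adj fun a b => if a ∈ s ∧ b ∈ t then (1 : ℝ) else 0, numEdgesBetween]
  conv_lhs => rw [← filter_univ_mem s, sum_filter]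
  refine sum_congr rfl fun a _ => ?_
  split_ifs with ha
  · conv_lhs => rw [← filter_univ_mem t, sum_filter]
    exact sum_congr rfl fun b _ => by by_cases hb : b ∈ t <;> simp [ha, hb]
  · exact (sum_eq_zero fun b _ => by simp [ha]).symm

lemma numEdgesBetween_le_vol (s t : Finset V) : G.numEdgesBetween s t ≤ G.vol s := by
  refine sum_le_sum fun a _ => (sum_le_sum_of_subset_of_nonneg (subset_univ t)
    fun _ _ _ => by positivity).trans (G.sum_adj_eq_degree a).le

lemma cutRatio_le_one (s t : Finset V) : G.cutRatio s t ≤ 1 := by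
  have h1 := G.numEdgesBetween_le_vol s t
  have h2 := G.numEdgesBetween_comm s t ▸ G.numEdgesBetween_le_vol t s
  exact div_le_one_of_le₀ (by linarith) (add_nonneg (G.vol_nonneg s) (G.vol_nonneg t))

lemma degInner_comm (f g : V → ℝ) : G.degInner f g = G.degInner g f :=
  sum_congr rfl fun _ _ => by ring

lemma degInner_self_nonneg (f : V → ℝ) : 0 ≤ G.degInner f f :=
  sum_nonneg fun v _ => by rw [mul_assoc]; exact mul_nonneg (by positivity) (mul_self_nonneg _)

lemma degInner_smul_left (c : ℝ) (f g : V → ℝ) : G.degInner (c • f) g = c * G.degInner f g := by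
  rw [degInner, degInner, mul_sum]
  exact sum_congr rfl fun _ _ => by simp only [Pi.smul_apply, smul_eq_mul]; ring

lemma degInner_sum_smul_right {ι : Type*} (s : Finset ι) (c : ι → ℝ) (f : V → ℝ)
    (u : ι → V → ℝ) : G.degInner f (∑ i ∈ s, c i • u i) = ∑ i ∈ s, c i * G.degInner f (u i) := by
  simp only [degInner, Finset.sum_apply, Pi.smul_apply, smul_eq_mul, mul_sum]
  rw [sum_comm]
  exact sum_congr rfl fun _ _ => sum_congr rfl fun _ _ => by ring

lemma degInner_nlapG (hdeg : ∀ v, 0 < G.degree v) (f g : V → ℝ) :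
    G.degInner (nlapG G f) g = G.degInner f g - ∑ d : G.Dart, g d.fst * f d.snd := by
  rw [G.sum_darts_eq_sum_adj fun a b => g a * f b, degInner, degInner, ← sum_sub_distrib]
  refine sum_congr rfl fun v _ => ?_
  have hv : (G.degree v : ℝ) ≠ 0 := by exact_mod_cast (hdeg v).ne'
  rw [nlapG, neighborFinset_eq_filter, sum_filter, mul_sub, mul_div_cancel₀ _ hv, sub_mul, sum_mul]
  congr 1
  exact sum_congr rfl fun w _ => by split_ifs <;> ring

lemma degInner_nlapG_comm (hdeg : ∀ v, 0 < G.degree v) (f g : V → ℝ) :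
    G.degInner (nlapG G f) g = G.degInner f (nlapG G g) := by
  rw [G.degInner_comm f, G.degInner_nlapG hdeg, G.degInner_nlapG hdeg, G.degInner_comm f,
    ← G.sum_darts_swap fun a b => g a * f b]
  simp only [mul_comm]

lemma degInner_nlapG_self (hdeg : ∀ v, 0 < G.degree v) (f : V → ℝ) :
    G.degInner (nlapG G f) f = (∑ d : G.Dart, (f d.fst - f d.snd) ^ 2) / 2 := by
  have hsq : ∑ d : G.Dart, (f d.fst - f d.snd) ^ 2
      = ∑ d : G.Dart, f d.fst ^ 2 + ∑ d : G.Dart, f d.snd ^ 2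
        - 2 * ∑ d : G.Dart, f d.fst * f d.snd := by
    rw [mul_sum, ← sum_add_distrib, ← sum_sub_distrib]
    exact sum_congr rfl fun _ _ => by ring
  rw [hsq, G.sum_darts_fst (f · ^ 2), G.sum_darts_snd (f · ^ 2), G.degInner_nlapG hdeg, degInner]
  simp only [mul_assoc, ← sq]
  ring

lemma eq_sum_degInner_smul {ι : Type*} [Fintype ι] [DecidableEq ι]
    (hcard : Fintype.card ι = Fintype.card V) (u : ι → V → ℝ)
    (horth : ∀ i j, G.degInner (u i) (u j) = if i = j then 1 else 0) (g : V → ℝ) :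
    g = ∑ i, G.degInner g (u i) • u i := by
  classical
  let A : Matrix ι V ℝ := fun i v => G.degree v * u i v
  let B : Matrix V ι ℝ := fun v j => u j v
  have hAB : A * B = 1 := by
    ext i j
    rw [Matrix.mul_apply, Matrix.one_apply, ← horth i j]
    exact sum_congr rfl fun _ _ => by ring
  -- `A * B = 1` is orthonormality; for square matrices it forces `B * A = 1`, i.e. completeness.
  have hBA : B * A = 1 := (Matrix.mul_eq_one_comm_of_card_eq _ _ _ hcard).mp hAB
  funext v
  have hdelta : ∀ w, ∑ i, u i v * (G.degree w * u i w) = if v = w then 1 else 0 := fun w => by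
    rw [← Matrix.one_apply, ← hBA, Matrix.mul_apply]
  calc g v = ∑ w, g w * (if v = w then 1 else 0) := by simp
    _ = ∑ w, g w * ∑ i, u i v * (G.degree w * u i w) := by simp_rw [hdelta]
    _ = (∑ i, G.degInner g (u i) • u i) v := by
      simp only [Finset.sum_apply, Pi.smul_apply, smul_eq_mul, degInner, mul_sum, sum_mul]
      rw [sum_comm]
      exact sum_congr rfl fun _ _ => sum_congr rfl fun _ _ => by ring

lemma degInner_nlapG_le_of_eigenbasis (hdeg : ∀ v, 0 < G.degree v) {ι : Type*} [Fintype ι]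
    [DecidableEq ι] (hcard : Fintype.card ι = Fintype.card V) (u : ι → V → ℝ)
    (horth : ∀ i j, G.degInner (u i) (u j) = if i = j then 1 else 0) (lam : ι → ℝ)
    (heig : ∀ i, nlapG G (u i) = lam i • u i) {Λ : ℝ} (hlam : ∀ i, lam i ≤ Λ) (g : V → ℝ) :
    G.degInner (nlapG G g) g ≤ Λ * G.degInner g g := by
  set c := fun i => G.degInner g (u i)
  have hg : g = ∑ i, c i • u i := G.eq_sum_degInner_smul hcard u horth g
  have hnorm : G.degInner g g = ∑ i, c i * c i := by
    rw [congrArg (G.degInner g) hg, degInner_sum_smul_right]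
  have henergy : G.degInner (nlapG G g) g = ∑ i, c i * (lam i * c i) := by
    rw [congrArg (G.degInner (nlapG G g)) hg, degInner_sum_smul_right]
    refine sum_congr rfl fun i _ => ?_
    rw [G.degInner_nlapG_comm hdeg, heig, G.degInner_comm, degInner_smul_left, G.degInner_comm]
  rw [henergy, hnorm, mul_sum]
  exact sum_le_sum fun i _ => by nlinarith [mul_self_nonneg (c i), hlam i]

lemma cutRatio_nonneg (s t : Finset V) : 0 ≤ G.cutRatio s t :=
  div_nonneg (mul_nonneg zero_le_two (sum_nonneg fun _ _ => sum_nonneg fun _ _ => by positivity))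
    (add_nonneg (G.vol_nonneg s) (G.vol_nonneg t))

lemma cutRatio_le_dualCheeger {s t : Finset V} (hs : s.Nonempty) (ht : t.Nonempty)
    (hst : Disjoint s t) : G.cutRatio s t ≤ dualCheeger G :=
  le_csSup ⟨1, by rintro _ ⟨_, _, _, _, _, rfl⟩; exact G.cutRatio_le_one _ _⟩
    ⟨s, t, hs, ht, hst, rfl⟩

lemma dualCheeger_le {c : ℝ} (hc : 0 ≤ c)
    (h : ∀ s t : Finset V, s.Nonempty → t.Nonempty → Disjoint s t → G.cutRatio s t ≤ c) :
    dualCheeger G ≤ c :=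
  Real.sSup_le (by rintro _ ⟨s, t, hs, ht, hst, rfl⟩; exact h s t hs ht hst) hc

lemma dualCheeger_le_one : dualCheeger G ≤ 1 :=
  G.dualCheeger_le zero_le_one fun s t _ _ _ => G.cutRatio_le_one s t

lemma dualCheeger_nonneg : 0 ≤ dualCheeger G :=
  Real.sSup_nonneg (by rintro _ ⟨s, t, _, _, _, rfl⟩; exact G.cutRatio_nonneg s t)

lemma vol_eq_sum_ite [DecidableEq V] (s : Finset V) :
    G.vol s = ∑ v, if v ∈ s then (G.degree v : ℝ) else 0 := by
  rw [← sum_filter, filter_univ_mem, vol]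

lemma two_mul_cutRatio_le [DecidableEq V] (hdeg : ∀ v, 0 < G.degree v) {Λ : ℝ}
    (hray : ∀ g, G.degInner (nlapG G g) g ≤ Λ * G.degInner g g) {s t : Finset V}
    (hs : s.Nonempty) (hst : Disjoint s t) : 2 * G.cutRatio s t ≤ Λ := by
  set g : V → ℝ := fun v => (if v ∈ s then 1 else 0) - (if v ∈ t then 1 else 0)
  have hdisj := Finset.disjoint_left.mp hst
  have hnorm : G.degInner g g = G.vol s + G.vol t := by
    rw [vol_eq_sum_ite, vol_eq_sum_ite, ← sum_add_distrib]
    refine sum_congr rfl fun v _ => ?_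
    by_cases hvs : v ∈ s <;> by_cases hvt : v ∈ t <;> simp_all [g]
  have hcut : ∀ d : G.Dart, 4 * ((if d.fst ∈ s ∧ d.snd ∈ t then 1 else 0)
      + (if d.fst ∈ t ∧ d.snd ∈ s then 1 else 0)) ≤ (g d.fst - g d.snd) ^ 2 := fun d => by
    by_cases has : d.fst ∈ s <;> by_cases hat : d.fst ∈ t <;> by_cases hbs : d.snd ∈ s <;>
      by_cases hbt : d.snd ∈ t <;> simp_all [g] <;> norm_num
  have henergy : 4 * G.numEdgesBetween s t ≤ G.degInner (nlapG G g) g := by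
    have h := sum_le_sum fun d (_ : d ∈ univ) => hcut d
    rw [← mul_sum, sum_add_distrib, ← numEdgesBetween_eq_sum_darts, ← numEdgesBetween_eq_sum_darts,
      G.numEdgesBetween_comm t] at h
    rw [G.degInner_nlapG_self hdeg]
    linarith
  have hvol : 0 < G.vol s + G.vol t :=
    add_pos_of_pos_of_nonneg (sum_pos (fun v _ => by exact_mod_cast hdeg v) hs) (G.vol_nonneg t)
  have hrayg := hnorm ▸ hray g
  rw [cutRatio, ← mul_div_assoc, div_le_iff₀ hvol]
  linarith

lemma vol_posLevelSet_add_vol_posLevelSet_neg {t : ℝ} (ht : 0 < t) (f : V → ℝ) :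
    G.vol (posLevelSet f t) + G.vol (posLevelSet (-f) t)
      = ∑ v, if t ≤ f v ^ 2 then (G.degree v : ℝ) else 0 := by
  rw [vol, vol, posLevelSet, posLevelSet, sum_filter, sum_filter, ← sum_add_distrib]
  refine sum_congr rfl fun v _ => ?_
  rcases lt_trichotomy (f v) 0 with h | h | h
  · simp [h, h.not_gt]
  · simp [h, ht.not_ge]
  · simp [h, h.not_gt]

lemma two_mul_numEdgesBetween_posLevelSet [DecidableEq V] {t : ℝ} (ht : 0 < t) (f : V → ℝ) :
    2 * G.numEdgesBetween (posLevelSet f t) (posLevelSet (-f) t)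
      = ∑ d : G.Dart,
          if t ≤ (if f d.fst * f d.snd < 0 then min (f d.fst ^ 2) (f d.snd ^ 2) else 0)
          then 1 else 0 := by
  rw [two_mul]
  nth_rewrite 2 [numEdgesBetween_comm]
  rw [numEdgesBetween_eq_sum_darts, numEdgesBetween_eq_sum_darts, ← sum_add_distrib]
  refine sum_congr rfl fun d _ => ?_
  simp only [posLevelSet, mem_filter, mem_univ, true_and, Pi.neg_apply, neg_pos, neg_sq]
  rcases lt_trichotomy (f d.fst) 0 with ha | ha | ha <;>
    rcases lt_trichotomy (f d.snd) 0 with hb | hb | hb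
  all_goals simp [ha, hb, ha.not_gt, hb.not_gt, ht.not_ge, mul_neg_iff]

lemma sum_layerWidth_mul_vol_posLevelSet (f : V → ℝ) :
    ∑ t ∈ sqLevels f, layerWidth (sqLevels f) t
      * (G.vol (posLevelSet f t) + G.vol (posLevelSet (-f) t)) = G.degInner f f :=
  calc ∑ t ∈ sqLevels f, layerWidth (sqLevels f) t
        * (G.vol (posLevelSet f t) + G.vol (posLevelSet (-f) t))
      = ∑ t ∈ sqLevels f, layerWidth (sqLevels f) t
          * ∑ v, if t ≤ f v ^ 2 then (G.degree v : ℝ) else 0 :=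
        sum_congr rfl fun t ht => by
          rw [G.vol_posLevelSet_add_vol_posLevelSet_neg (pos_of_mem_sqLevels ht) f]
    _ = G.degInner f f := by
        rw [sum_layerWidth_mul_sum_ite (fun _ => pos_of_mem_sqLevels) _ _ _
          fun v _ => sq_mem_insert_zero_sqLevels f v]
        exact sum_congr rfl fun v _ => by ring

lemma sum_layerWidth_mul_numEdgesBetween_posLevelSet [DecidableEq V] (f : V → ℝ) :
    ∑ t ∈ sqLevels f, layerWidth (sqLevels f) t
      * (2 * G.numEdgesBetween (posLevelSet f t) (posLevelSet (-f) t))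
      = ∑ d : G.Dart with f d.fst * f d.snd < 0, min (f d.fst ^ 2) (f d.snd ^ 2) := by
  have hmin : ∀ d : G.Dart, (if f d.fst * f d.snd < 0 then min (f d.fst ^ 2) (f d.snd ^ 2) else 0)
      ∈ insert 0 (sqLevels f) := fun d => by
    split_ifs
    · rcases min_choice (f d.fst ^ 2) (f d.snd ^ 2) with h | h <;> rw [h] <;>
        exact sq_mem_insert_zero_sqLevels f _
    · exact mem_insert_self 0 _
  rw [sum_congr rfl fun t ht => by
      rw [G.two_mul_numEdgesBetween_posLevelSet (pos_of_mem_sqLevels ht) f],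
    sum_layerWidth_mul_sum_ite (fun _ => pos_of_mem_sqLevels) _ _ _ fun d _ => hmin d, sum_filter]
  exact sum_congr rfl fun d _ => one_mul _

lemma le_dualCheeger_mul_of_posLevelSet [DecidableEq V] (hdeg : ∀ v, 0 < G.degree v)
    {f : V → ℝ} {M t : ℝ} {v : V} (ht : 0 < t) (hv : f v ^ 2 = t) (hM : 0 < M)
    (h : M * (G.vol (posLevelSet f t) + G.vol (posLevelSet (-f) t))
      ≤ G.degInner f f * (2 * G.numEdgesBetween (posLevelSet f t) (posLevelSet (-f) t))) :
    M ≤ dualCheeger G * G.degInner f f := by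
  have hvol : 0 < G.vol (posLevelSet f t) + G.vol (posLevelSet (-f) t) := by
    rw [G.vol_posLevelSet_add_vol_posLevelSet_neg ht f]
    refine lt_of_lt_of_le ?_ (single_le_sum (fun w _ => ?_) (mem_univ v))
    · simp only [hv, le_refl, if_true]
      exact_mod_cast hdeg v
    · split_ifs <;> positivity
  have hcut : G.numEdgesBetween (posLevelSet f t) (posLevelSet (-f) t) ≠ 0 := by
    intro h0
    rw [h0, mul_zero, mul_zero] at h
    linarith [mul_pos hM hvol]
  have hpos : (posLevelSet f t).Nonempty := nonempty_of_sum_ne_zero hcut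
  have hneg : (posLevelSet (-f) t).Nonempty :=
    nonempty_of_sum_ne_zero (G.numEdgesBetween_comm _ _ ▸ hcut)
  have hdisj : Disjoint (posLevelSet f t) (posLevelSet (-f) t) := by
    rw [Finset.disjoint_left]
    intro w hw hw'
    simp only [posLevelSet, mem_filter, Pi.neg_apply, neg_pos] at hw hw'
    linarith [hw.2.1, hw'.2.1]
  have hratio : M ≤ G.degInner f f * G.cutRatio (posLevelSet f t) (posLevelSet (-f) t) := by
    rwa [cutRatio, ← mul_div_assoc, le_div_iff₀ hvol]
  rw [mul_comm]
  exact hratio.trans (mul_le_mul_of_nonneg_left (G.cutRatio_le_dualCheeger hpos hneg hdisj)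
    (G.degInner_self_nonneg f))

/-- Weighting each threshold `t` by `layerWidth`, the level-set volumes average to `(f, f)` and the
doubled cut sizes to the left-hand side, so some threshold does at least as well as the average. -/
lemma sum_min_sq_le_dualCheeger_mul [DecidableEq V] (hdeg : ∀ v, 0 < G.degree v) (f : V → ℝ) :
    ∑ d : G.Dart with f d.fst * f d.snd < 0, min (f d.fst ^ 2) (f d.snd ^ 2)
      ≤ dualCheeger G * G.degInner f f := by
  set M := ∑ d : G.Dart with f d.fst * f d.snd < 0, min (f d.fst ^ 2) (f d.snd ^ 2)
  set D := G.degInner f f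
  rcases le_or_gt M 0 with hM | hM
  · exact hM.trans (mul_nonneg G.dualCheeger_nonneg (G.degInner_self_nonneg f))
  set w := layerWidth (sqLevels f)
  set X : ℝ → ℝ := fun t => G.vol (posLevelSet f t) + G.vol (posLevelSet (-f) t)
  set Y : ℝ → ℝ := fun t => 2 * G.numEdgesBetween (posLevelSet f t) (posLevelSet (-f) t)
  have hX : ∑ t ∈ sqLevels f, w t * X t = D := G.sum_layerWidth_mul_vol_posLevelSet f
  have hY : ∑ t ∈ sqLevels f, w t * Y t = M := G.sum_layerWidth_mul_numEdgesBetween_posLevelSet f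
  have hne : (sqLevels f).Nonempty := by
    rw [nonempty_iff_ne_empty]
    intro hempty
    rw [hempty, sum_empty] at hY
    linarith
  obtain ⟨t, ht, hcmp⟩ : ∃ t ∈ sqLevels f, w t * (M * X t) ≤ w t * (D * Y t) := by
    refine exists_le_of_sum_le hne (le_of_eq ?_)
    calc ∑ t ∈ sqLevels f, w t * (M * X t) = M * D := by
          rw [← hX, mul_sum]
          exact sum_congr rfl fun _ _ => by ring
      _ = ∑ t ∈ sqLevels f, w t * (D * Y t) := by
          rw [← hY, mul_comm, mul_sum]
          exact sum_congr rfl fun _ _ => by ring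
  obtain ⟨v, -, hv⟩ := mem_image.mp (mem_filter.mp ht).1
  exact G.le_dualCheeger_mul_of_posLevelSet hdeg (pos_of_mem_sqLevels ht) hv hM
    (le_of_mul_le_mul_left hcmp (layerWidth_pos (fun _ => pos_of_mem_sqLevels) ht))

lemma two_mul_dualCheeger_le [DecidableEq V] (hdeg : ∀ v, 0 < G.degree v) {Λ : ℝ}
    (hray : ∀ g, G.degInner (nlapG G g) g ≤ Λ * G.degInner g g) (hΛ : 0 ≤ Λ) :
    2 * dualCheeger G ≤ Λ := by
  have := G.dualCheeger_le (c := Λ / 2) (by linarith) fun s t hs _ hst => by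
    linarith [G.two_mul_cutRatio_le hdeg hray hs hst]
  linarith

lemma le_one_add_sqrt_of_eigenfunction [DecidableEq V] (hdeg : ∀ v, 0 < G.degree v)
    {f : V → ℝ} {L : ℝ} (heig : nlapG G f = L • f) (hf : G.degInner f f = 1) :
    L ≤ 1 + √(1 - (1 - dualCheeger G) ^ 2) := by
  rcases le_or_gt L 1 with hL | hL
  · linarith [Real.sqrt_nonneg (1 - (1 - dualCheeger G) ^ 2)]
  have hQ : G.degInner (nlapG G f) f = L := by rw [heig, degInner_smul_left, hf, mul_one]
  have hnorm : ∑ d : G.Dart, (f d.fst ^ 2 + f d.snd ^ 2) = 2 := by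
    have hsq : ∑ v, (G.degree v : ℝ) * f v ^ 2 = 1 := by
      rw [← hf, degInner]
      exact sum_congr rfl fun _ _ => by ring
    rw [sum_add_distrib, G.sum_darts_fst (f · ^ 2), G.sum_darts_snd (f · ^ 2), hsq]
    norm_num
  have hplus : ∑ d : G.Dart, (f d.fst + f d.snd) ^ 2 = 2 * (2 - L) := by
    have hminus := hQ ▸ G.degInner_nlapG_self hdeg f
    have hpar : ∑ d : G.Dart, (f d.fst + f d.snd) ^ 2
        = 2 * ∑ d : G.Dart, (f d.fst ^ 2 + f d.snd ^ 2)
          - ∑ d : G.Dart, (f d.fst - f d.snd) ^ 2 := by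
      rw [mul_sum, ← sum_sub_distrib]
      exact sum_congr rfl fun _ _ => by ring
    rw [hpar, hnorm]
    linarith
  have hL2 : L ≤ 2 := by
    have := hplus ▸ sum_nonneg fun (d : G.Dart) _ => sq_nonneg (f d.fst + f d.snd)
    linarith
  have hmass := one_sub_sum_min_sq_le univ (fun d : G.Dart => f d.fst) (fun d => f d.snd) hnorm
    hplus (by linarith)
  have hsweep := hf ▸ G.sum_min_sq_le_dualCheeger_mul hdeg f
  have hgap : 1 - dualCheeger G ≤ √(L * (2 - L)) := by
    rw [show L * (2 - L) = (2 - L) * (2 - (2 - L)) by ring]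
    linarith
  have hsq : (1 - dualCheeger G) ^ 2 ≤ L * (2 - L) := by
    have := pow_le_pow_left₀ (sub_nonneg.mpr G.dualCheeger_le_one) hgap 2
    rwa [Real.sq_sqrt (by nlinarith)] at this
  linarith [Real.le_sqrt_of_sq_le (show (L - 1) ^ 2 ≤ 1 - (1 - dualCheeger G) ^ 2 by nlinarith)]

end SimpleGraph

/-- The dual Cheeger inequality: for a finite connected simple graph on `N ≥ 2` vertices, the
largest eigenvalue `λ_N` of the normalized Laplacian satisfies
`2h̄ ≤ λ_N ≤ 1 + √(1 − (1 − h̄)²)`. The eigenvalues are encoded by a monotone list `lam`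
together with an eigenbasis `u`, orthonormal with respect to the degree-weighted
inner product. -/
theorem stmt7 {V : Type*} [Fintype V] [DecidableEq V]
    (G : SimpleGraph V) [DecidableRel G.Adj]
    (hconn : G.Connected)
    (hN : 2 ≤ Fintype.card V)
    (lam : Fin (Fintype.card V) → ℝ) (hmono : Monotone lam)
    (u : Fin (Fintype.card V) → V → ℝ)
    (heig : ∀ i, nlapG G (u i) = lam i • u i)
    (horth : ∀ i j, (∑ v, (G.degree v : ℝ) * u i v * u j v) = if i = j then 1 else 0) :
    2 * dualCheeger G ≤ lam ⟨Fintype.card V - 1, by omega⟩ ∧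
      lam ⟨Fintype.card V - 1, by omega⟩ ≤
        1 + Real.sqrt (1 - (1 - dualCheeger G) ^ 2) := by
  have : Nontrivial V := Fintype.one_lt_card_iff_nontrivial.mp (by omega)
  have hdeg : ∀ v, 0 < G.degree v := fun v => hconn.preconnected.degree_pos_of_nontrivial v
  set top : Fin (Fintype.card V) := ⟨Fintype.card V - 1, by omega⟩
  have hf : G.degInner (u top) (u top) = 1 := (horth top top).trans (if_pos rfl)
  have hray := G.degInner_nlapG_le_of_eigenbasis hdeg (Fintype.card_fin _) u horth lam heig
    fun i => hmono (show i ≤ top from Fin.le_def.mpr (Nat.le_sub_one_of_lt i.isLt))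
  have htop : 0 ≤ lam top := by
    rw [← mul_one (lam top), ← hf, ← G.degInner_smul_left, ← heig, G.degInner_nlapG_self hdeg]
    positivity
  exact ⟨G.two_mul_dualCheeger_le hdeg hray htop,
    G.le_one_add_sqrt_of_eigenfunction hdeg (heig top) hf⟩
end

section
/- Let C′, C, C″ be finite-dimensional real inner product spaces and δ′ : C′ → C, δ : C → C″ linear maps with δ ∘ δ′ = 0. Then C decomposes as the orthogonal direct sum C = range(δ′) ⊕ range(δ*) ⊕ (ker δ ∩ ker (δ′)*): the three subspaces are pairwise orthogonal and their sum is all of C. In particular, range(δ′) ∩ range(δ*) = {0}. -/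
/-!
The composition `δ ∘ δ' = 0` says `range δ' ≤ ker δ`, and `ker δ = (range δ*)ᗮ`, so the
coboundaries `range δ'` and the coboundaries `range δ*` of the adjoint complex are orthogonal.
Likewise `ker δ ⊓ ker δ'* = (range δ*)ᗮ ⊓ (range δ')ᗮ` is the orthogonal complement of their
sum, and in finite dimension every subspace is complemented by its orthogonal complement.
-/

namespace LinearMap

variable {𝕜 E F G : Type*} [RCLike 𝕜]
  [NormedAddCommGroup E] [InnerProductSpace 𝕜 E]
  [NormedAddCommGroup F] [InnerProductSpace 𝕜 F] [FiniteDimensional 𝕜 F]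
  [NormedAddCommGroup G] [InnerProductSpace 𝕜 G] [FiniteDimensional 𝕜 G]

lemma orthogonal_range_adjoint (A : F →ₗ[𝕜] G) : A.adjoint.rangeᗮ = A.ker := by
  rw [orthogonal_range, adjoint_adjoint]

lemma range_le_orthogonal_range_adjoint_of_comp_eq_zero {d' : E →ₗ[𝕜] F} {d : F →ₗ[𝕜] G}
    (h : d ∘ₗ d' = 0) : d'.range ≤ d.adjoint.rangeᗮ := by
  rwa [orthogonal_range_adjoint, range_le_ker_iff]

lemma ker_inf_ker_adjoint_eq_orthogonal_sup [FiniteDimensional 𝕜 E]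
    (d' : E →ₗ[𝕜] F) (d : F →ₗ[𝕜] G) :
    d.ker ⊓ d'.adjoint.ker = (d'.range ⊔ d.adjoint.range)ᗮ := by
  rw [← orthogonal_range_adjoint, ← orthogonal_range, Submodule.inf_orthogonal, sup_comm]

end LinearMap

/-- Discrete Hodge decomposition (Eckmann): for a cochain complex
`C′ →(δ′) C →(δ) C″` of finite-dimensional real inner product spaces with `δ ∘ δ′ = 0`,
the middle space decomposes orthogonally as
`C = range δ′ ⊕ range δ* ⊕ (ker δ ⊓ ker (δ′)*)`; in particular
`range δ′ ⊓ range δ* = ⊥`. -/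
theorem stmt12 {C' C C'' : Type*}
    [NormedAddCommGroup C'] [InnerProductSpace ℝ C'] [FiniteDimensional ℝ C']
    [NormedAddCommGroup C] [InnerProductSpace ℝ C] [FiniteDimensional ℝ C]
    [NormedAddCommGroup C''] [InnerProductSpace ℝ C''] [FiniteDimensional ℝ C'']
    (δ' : C' →ₗ[ℝ] C) (δ : C →ₗ[ℝ] C'')
    (h : δ ∘ₗ δ' = 0) :
    (LinearMap.range δ' ≤ (LinearMap.range (LinearMap.adjoint δ))ᗮ) ∧
      (LinearMap.range δ' ≤
        (LinearMap.ker δ ⊓ LinearMap.ker (LinearMap.adjoint δ'))ᗮ) ∧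
      (LinearMap.range (LinearMap.adjoint δ) ≤
        (LinearMap.ker δ ⊓ LinearMap.ker (LinearMap.adjoint δ'))ᗮ) ∧
      (LinearMap.range δ' ⊔ LinearMap.range (LinearMap.adjoint δ) ⊔
        (LinearMap.ker δ ⊓ LinearMap.ker (LinearMap.adjoint δ')) = ⊤) ∧
      (LinearMap.range δ' ⊓ LinearMap.range (LinearMap.adjoint δ) = ⊥) := by
  have hortho := LinearMap.range_le_orthogonal_range_adjoint_of_comp_eq_zero h
  rw [LinearMap.ker_inf_ker_adjoint_eq_orthogonal_sup, Submodule.orthogonal_orthogonal]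
  exact ⟨hortho, le_sup_left, le_sup_right,
    Submodule.sup_orthogonal_of_hasOrthogonalProjection,
    (Submodule.isOrtho_iff_le.mpr hortho).disjoint.eq_bot⟩
end
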